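/- arXiv:2411.08208 — 13 statements merged into one kernel-verified Lean document; each statement's English description precedes it below -/
import Mathlib

section
/- Let λ ≥ 1 be a natural number that is not of the form 2^{n+1} − 1 for any natural number n. Then there exists t with 1 ≤ t ≤ λ such that C(λ + t, t) ≡ 1 (mod 2). -/
private instance : Fact (Nat.Prime 2) := ⟨Nat.prime_two⟩

lemma key : ∀ b a : ℕ, a &&& b = 0 → Nat.choose (a + b) b % 2 = 1 := by
  intro b
  induction b using Nat.strong_induction_on with
  | _ b ih =>
    intro a h
    rcases Nat.eq_zero_or_pos b with hb | hb
    · simp [hb]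
    have h0 : a % 2 = 0 ∨ b % 2 = 0 := by
      have := congrArg (fun x => Nat.testBit x 0) h
      simp only [Nat.testBit_and, Nat.testBit_zero] at this
      rcases Nat.mod_two_eq_zero_or_one a with ha | ha <;>
        rcases Nat.mod_two_eq_zero_or_one b with hb' | hb' <;> simp [ha, hb'] at this ⊢
    have hdiv : a / 2 &&& b / 2 = 0 := by
      apply Nat.eq_of_testBit_eq
      intro i
      rw [Nat.testBit_and, Nat.testBit_div_two, Nat.testBit_div_two,
        ← Nat.testBit_and, h, Nat.zero_testBit, Nat.zero_testBit]
    have hmod : (a + b) % 2 = a % 2 + b % 2 := by omega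
    have hdiv2 : (a + b) / 2 = a / 2 + b / 2 := by omega
    have lucas := (Choose.choose_modEq_choose_mod_mul_choose_div_nat (p := 2)
      (n := a + b) (k := b))
    have hrec : Nat.choose ((a + b) / 2) (b / 2) % 2 = 1 := by
      rw [hdiv2]
      exact ih (b / 2) (by omega) (a / 2) hdiv
    have h1 : Nat.choose ((a + b) % 2) (b % 2) = 1 := by
      rw [hmod]
      rcases Nat.mod_two_eq_zero_or_one b with hb' | hb'
      · simp [hb']
      · rcases h0 with h0 | h0 <;> simp [hb', h0] at *
    unfold Nat.ModEq at lucas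
    rw [lucas, Nat.mul_mod, h1, hrec]

theorem exists_choose_odd_of_not_all_ones (l : ℕ) (hl : 1 ≤ l)
    (h : ∀ n : ℕ, l ≠ 2 ^ (n + 1) - 1) :
    ∃ t, 1 ≤ t ∧ t ≤ l ∧ Nat.choose (l + t) t % 2 = 1 := by
  set m := Nat.log 2 l with hm
  have h2m : 2 ^ m ≤ l := Nat.pow_log_le_self 2 (by omega)
  have hlt : l < 2 ^ (m + 1) := Nat.lt_pow_succ_log_self (by norm_num) l
  have hk : ∃ k, k < m + 1 ∧ l.testBit k = false := by
    by_contra hc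
    push_neg at hc
    apply h m
    apply Nat.eq_of_testBit_eq
    intro i
    rw [Nat.testBit_two_pow_sub_one]
    by_cases hi : i < m + 1
    · simp [hi, hc i hi]
    · have hli : l < 2 ^ i := lt_of_lt_of_le hlt (Nat.pow_le_pow_right (by norm_num) (by omega))
      simp [hi, Nat.testBit_lt_two_pow hli]
  obtain ⟨k, hk1, hk2⟩ := hk
  have htm : l.testBit m = true := by
    rw [Nat.testBit_eq_decide_div_mod_eq]
    have hdm : l / 2 ^ m = 1 := by
      have h1 : 1 ≤ l / 2 ^ m := (Nat.one_le_div_iff (Nat.two_pow_pos m)).mpr h2m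
      have h2 : l / 2 ^ m < 2 := by
        rw [Nat.div_lt_iff_lt_mul (Nat.two_pow_pos m)]
        calc l < 2 ^ (m + 1) := hlt
          _ = 2 * 2 ^ m := by ring
      omega
    simp [hdm]
  have hkm : k < m := by
    rcases Nat.lt_or_ge k m with h' | h'
    · exact h'
    · exfalso
      have hkm' : k = m := by omega
      rw [hkm', htm] at hk2
      exact absurd hk2 (by simp)
  refine ⟨2 ^ k, Nat.one_le_two_pow,
    le_trans (Nat.pow_le_pow_right (by norm_num) hkm.le) h2m, ?_⟩
  apply key
  apply Nat.eq_of_testBit_eq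
  intro i
  simp only [Nat.testBit_and, Nat.zero_testBit]
  by_cases hi : i = k
  · subst hi; simp [hk2]
  · simp [Nat.testBit_two_pow_of_ne (fun he => hi he.symm)]
end

section
/- Let k and m be natural numbers with k ≡ 2^{m+1} − 1 (mod 2^{m+1}) (equivalently, the binary expansion of k contains all of the digits 2^0, 2^1, …, 2^m). Then C(k + t, t) ≡ 0 (mod 2) for every t with 1 ≤ t ≤ 2^{m+1} − 1. -/
private lemma aux_low_ones : ∀ m k, k % 2 ^ (m + 1) = 2 ^ (m + 1) - 1 →
    ∀ t, 1 ≤ t → t ≤ 2 ^ (m + 1) - 1 → Nat.choose (k + t) t % 2 = 0 := by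
  intro m
  induction m with
  | zero =>
    intro k hk t ht1 ht2
    have ht : t = 1 := le_antisymm ht2 ht1
    subst ht
    simp only [Nat.choose_one_right]
    omega
  | succ m ih =>
    intro k hk t ht1 ht2
    set P : ℕ := 2 ^ (m + 1) with hPdef
    have hP : 0 < P := Nat.pow_pos (by norm_num)
    have h2P : 2 ^ (m + 1 + 1) = 2 * P := by rw [hPdef, pow_succ]; ring
    rw [h2P] at hk ht2
    -- decompose k
    obtain ⟨Q, hQ⟩ : ∃ q, k = q * (2 * P) + (2 * P - 1) :=
      ⟨k / (2 * P), by conv_lhs => rw [← Nat.div_add_mod k (2 * P), hk, Nat.mul_comm]⟩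
    obtain ⟨R, hRdef⟩ : ∃ r, r = Q * P := ⟨Q * P, rfl⟩
    have hkR : k = 2 * R + 2 * P - 1 := by
      have h2 : Q * (2 * P) = 2 * R := by rw [hRdef]; ring
      omega
    have hkodd : k % 2 = 1 := by omega
    have lucas := (Choose.choose_modEq_choose_mod_mul_choose_div_nat
      (p := 2) (n := k + t) (k := t))
    have lucas' : (k + t).choose t % 2 =
        ((k + t) % 2).choose (t % 2) * ((k + t) / 2).choose (t / 2) % 2 := lucas
    rcases Nat.even_or_odd t with ⟨u, hu⟩ | ⟨u, hu⟩
    · -- t even: t = 2u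
      have hkt2 : (k + t) % 2 = 1 := by omega
      have htm : t % 2 = 0 := by omega
      have hdiv : (k + t) / 2 = (k / 2) + u := by omega
      have htd : t / 2 = u := by omega
      rw [lucas', hkt2, htm, hdiv, htd, Nat.choose_zero_right, one_mul]
      apply ih
      · -- (k/2) % P = P - 1
        have : k / 2 = R + P - 1 := by omega
        rw [this]
        have : R + P - 1 = P * Q + (P - 1) := by rw [mul_comm]; omega
        rw [this, Nat.mul_add_mod, Nat.mod_eq_of_lt (by omega)]
      · omega
      · omega
    · -- t odd
      have hkt2 : (k + t) % 2 = 0 := by omega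
      have htm : t % 2 = 1 := by omega
      rw [lucas', hkt2, htm]
      simp

theorem choose_add_eq_zero_mod_two_of_low_ones (k m : ℕ)
    (hk : k % 2 ^ (m + 1) = 2 ^ (m + 1) - 1) :
    ∀ t, 1 ≤ t → t ≤ 2 ^ (m + 1) - 1 → Nat.choose (k + t) t % 2 = 0 :=
  aux_low_ones m k hk
end

section
/- Let h, i, k be natural numbers with h ≤ i such that k is a 2-complement of i and k is also a 2-complement of i − h. Then C(i, h) ≡ 1 (mod 2). -/
lemma aux_lucas (s : ℕ) : ∀ a j : ℕ, j < 2 ^ s → Nat.choose (2 ^ s * a + j) (2 ^ s * a) % 2 = 1 := by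
  induction s with
  | zero =>
    intro a j hj
    interval_cases j
    simp
  | succ s ih =>
    intro a j hj
    have inst : Fact (Nat.Prime 2) := ⟨Nat.prime_two⟩
    set t := 2 ^ s * a with ht
    have hpow : 2 ^ (s+1) * a = 2 * t := by rw [ht]; ring
    have H := @Choose.choose_modEq_choose_mod_mul_choose_div_nat
      (2 ^ (s+1) * a + j) (2 ^ (s+1) * a) 2 inst
    rw [hpow] at H ⊢
    have h1 : (2 * t + j) % 2 = j % 2 := by omega
    have h2 : (2 * t + j) / 2 = t + j / 2 := by omega
    have h3 : (2 * t) % 2 = 0 := by omega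
    have h4 : (2 * t) / 2 = t := by omega
    rw [h1, h2, h3, h4, Nat.choose_zero_right, one_mul] at H
    have := ih a (j / 2) (by omega)
    rw [← ht] at this
    unfold Nat.ModEq at H
    omega

/-- `k` is a 2-complement of `i`: either `i = 0` and `k` is odd, or `i ≥ 1` and,
with `m = ⌊log₂ i⌋`, the binary expansion of `i + k` contains all digits `2^0, …, 2^m`. -/
def TwoComplement (k i : ℕ) : Prop :=
  (i = 0 ∧ Odd k) ∨
    (1 ≤ i ∧ (i + k) % 2 ^ (Nat.log 2 i + 1) = 2 ^ (Nat.log 2 i + 1) - 1)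

theorem choose_odd_of_twoComplement (h i k : ℕ) (hhi : h ≤ i)
    (h1 : TwoComplement k i) (h2 : TwoComplement k (i - h)) :
    Nat.choose i h % 2 = 1 := by
  rcases Nat.eq_zero_or_pos i with hi0 | hi1
  · subst hi0
    interval_cases h
    simp
  set j := i - h with hj
  rcases Nat.eq_zero_or_pos j with hj0 | hj1
  · have : h = i := by omega
    subst this
    simp
  rcases h1 with ⟨hi0', _⟩ | ⟨_, H1⟩
  · omega
  rcases h2 with ⟨hj0', _⟩ | ⟨_, H2⟩
  · omega
  set m := Nat.log 2 i with hm
  set m' := Nat.log 2 j with hm'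
  set M := 2 ^ (m + 1) with hM
  set N := 2 ^ (m' + 1) with hN
  have hmm : m' ≤ m := by
    show Nat.log 2 j ≤ Nat.log 2 i
    exact Nat.log_mono_right (by omega)
  have hNM : N ∣ M := pow_dvd_pow 2 (by omega)
  have hNpos : 0 < N := Nat.pow_pos (by norm_num)
  have hjN : j < N := Nat.lt_pow_succ_log_self (by norm_num) j
  have hiN : (i + k) % N = N - 1 := by
    obtain ⟨q, hq⟩ := hNM
    have hq1 : 1 ≤ q := by
      rcases Nat.eq_zero_or_pos q with h0 | h0
      · rw [h0, Nat.mul_zero] at hq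
        have : 0 < M := Nat.pow_pos (by norm_num)
        omega
      · exact h0
    obtain ⟨q', rfl⟩ : ∃ q', q = q' + 1 := ⟨q - 1, by omega⟩
    have e1 : N * (q' + 1) = (N - 1) + q' * N + 1 := by
      have : N * (q' + 1) = q' * N + N := by ring
      omega
    have : (i + k) % N = ((i + k) % M) % N := (Nat.mod_mod_of_dvd _ ⟨q' + 1, hq⟩).symm
    rw [this, H1, hq]
    have e2 : N * (q' + 1) - 1 = (N - 1) + q' * N := by omega
    rw [e2, Nat.add_mul_mod_self_right, Nat.mod_eq_of_lt (by omega)]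
  have hmodeq : j ≡ i [MOD N] := by
    have h5 : j + k ≡ i + k [MOD N] := by
      unfold Nat.ModEq
      rw [hiN, H2]
    exact h5.add_right_cancel' k
  have hdvd : N ∣ h := by
    have := (Nat.modEq_iff_dvd' (show j ≤ i by omega)).mp hmodeq
    have hij : i - j = h := by omega
    rwa [hij] at this
  obtain ⟨a, ha⟩ := hdvd
  have hi_eq : i = N * a + j := by omega
  rw [hi_eq, ha]
  exact aux_lucas (m' + 1) a j hjN
end

section
/- Let i ≥ 1 and k be natural numbers such that k is not a 2-complement of i. Then there exists s with 1 ≤ s ≤ i such that C(k + i + s, s) ≡ 1 (mod 2). -/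
private lemma aux_mod_double (n t : ℕ) (ht : 0 < t) :
    n % (2 * t) = 2 * (n / 2 % t) + n % 2 := by
  have h1 := Nat.div_add_mod n 2
  have h2 := Nat.div_add_mod (n / 2) t
  have hr : 2 * (n / 2 % t) + n % 2 < 2 * t := by
    have := Nat.mod_lt (n / 2) ht
    have := Nat.mod_lt n (show 0 < 2 by norm_num)
    omega
  have hq : (n / 2 / t) * (2 * t) = 2 * (t * (n / 2 / t)) := by ring
  have heq : n = (2 * (n / 2 % t) + n % 2) + (n / 2 / t) * (2 * t) := by omega
  conv_lhs => rw [heq]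
  rw [Nat.add_mul_mod_self_right, Nat.mod_eq_of_lt hr]

private lemma aux_exists_even_bit (m : ℕ) :
    ∀ n : ℕ, n % 2 ^ (m + 1) ≠ 2 ^ (m + 1) - 1 → ∃ j ≤ m, n / 2 ^ j % 2 = 0 := by
  induction m with
  | zero =>
    intro n hn
    refine ⟨0, le_refl _, ?_⟩
    simpa using Nat.mod_two_ne_one.mp (by simpa using hn)
  | succ m ih =>
    intro n hn
    rcases Nat.even_or_odd n with he | ho
    · exact ⟨0, Nat.zero_le _, by simpa using Nat.even_iff.mp he⟩
    · have h2 : n % 2 = 1 := Nat.odd_iff.mp ho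
      have hp : 2 ^ (m + 1 + 1) = 2 * 2 ^ (m + 1) := by ring
      have hkey : n % 2 ^ (m + 1 + 1) = 2 * (n / 2 % 2 ^ (m + 1)) + 1 := by
        have := aux_mod_double n (2 ^ (m + 1)) (Nat.pow_pos (by norm_num))
        rw [hp, this]
        omega
      have hne : n / 2 % 2 ^ (m + 1) ≠ 2 ^ (m + 1) - 1 := by
        intro hc
        apply hn
        rw [hkey, hc]
        have hpos : 0 < 2 ^ (m + 1) := Nat.pow_pos (by norm_num)
        omega
      obtain ⟨j, hj, hje⟩ := ih (n / 2) hne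
      refine ⟨j + 1, by omega, ?_⟩
      rw [Nat.div_div_eq_div_mul] at hje
      rw [pow_succ']
      exact hje

private lemma aux_choose_odd (j : ℕ) : ∀ N : ℕ, N / 2 ^ j % 2 = 1 →
    Nat.choose N (2 ^ j) % 2 = 1 := by
  haveI : Fact (Nat.Prime 2) := ⟨Nat.prime_two⟩
  induction j with
  | zero =>
    intro N hN
    simpa using hN
  | succ j ih =>
    intro N hN
    have hlucas := @Choose.choose_modEq_choose_mod_mul_choose_div_nat N (2 ^ (j + 1)) 2 _
    have hk2 : 2 ^ (j + 1) % 2 = 0 := by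
      simp [pow_succ, Nat.mul_mod_left]
    have hkd : 2 ^ (j + 1) / 2 = 2 ^ j := by
      rw [pow_succ]; exact Nat.mul_div_cancel _ (by norm_num)
    rw [hk2, hkd] at hlucas
    simp only [Nat.choose_zero_right, one_mul] at hlucas
    have hrec : Nat.choose (N / 2) (2 ^ j) % 2 = 1 := by
      apply ih
      rw [Nat.div_div_eq_div_mul, ← pow_succ']
      exact hN
    calc Nat.choose N (2 ^ (j + 1)) % 2 = Nat.choose (N / 2) (2 ^ j) % 2 := hlucas
      _ = 1 := hrec

theorem exists_choose_odd_of_not_twoComplement (i k : ℕ) (hi : 1 ≤ i)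
    (h : ¬ TwoComplement k i) :
    ∃ s, 1 ≤ s ∧ s ≤ i ∧ Nat.choose (k + i + s) s % 2 = 1 := by
  set m := Nat.log 2 i with hm
  have hne : (i + k) % 2 ^ (m + 1) ≠ 2 ^ (m + 1) - 1 := by
    intro hc
    exact h (Or.inr ⟨hi, hc⟩)
  obtain ⟨j, hjm, hje⟩ := aux_exists_even_bit m (i + k) hne
  refine ⟨2 ^ j, Nat.one_le_two_pow, ?_, ?_⟩
  · calc 2 ^ j ≤ 2 ^ m := Nat.pow_le_pow_right (by norm_num) hjm
      _ ≤ i := Nat.pow_log_le_self 2 (by omega)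
  · apply aux_choose_odd
    have hpos : 0 < 2 ^ j := Nat.pow_pos (by norm_num)
    have : (k + i + 2 ^ j) / 2 ^ j = (i + k) / 2 ^ j + 1 := by
      rw [show k + i + 2 ^ j = (i + k) + 2 ^ j by ring, Nat.add_div_right _ hpos]
    rw [this]
    omega
end

section
/- Let A and B be finite sets of natural numbers with Σ_{a∈A} 2^a ≤ Σ_{b∈B} 2^b, and let x = Σ_{b∈B} 2^b − Σ_{a∈A} 2^a. Then x > 0 if and only if x has a binary digit at some position belonging to A ∪ B. -/
private theorem add_eq_or_aux : ∀ a : ℕ, ∀ b : ℕ, a &&& b = 0 → a + b = a ||| b := by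
  intro a
  induction a using Nat.strong_induction_on with
  | _ a ih =>
    intro b h
    rcases Nat.eq_zero_or_pos a with rfl | ha
    · simp
    have h2 : a / 2 &&& b / 2 = 0 := by
      rw [← Nat.and_div_two, h]
    have ih' : a / 2 + b / 2 = a / 2 ||| b / 2 :=
      ih (a / 2) (Nat.div_lt_self ha one_lt_two) (b / 2) h2
    have hmod : ¬ (a % 2 = 1 ∧ b % 2 = 1) := by
      intro hc
      have := Nat.and_mod_two_eq_one.mpr hc
      rw [h] at this
      simp at this
    have hor : (a ||| b) % 2 = 1 ↔ a % 2 = 1 ∨ b % 2 = 1 := Nat.or_mod_two_eq_one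
    have hdiv : (a ||| b) / 2 = a / 2 ||| b / 2 := Nat.or_div_two
    have e1 : 2 * (a / 2) + a % 2 = a := Nat.div_add_mod a 2
    have e2 : 2 * (b / 2) + b % 2 = b := Nat.div_add_mod b 2
    have e3 : 2 * ((a ||| b) / 2) + (a ||| b) % 2 = a ||| b := Nat.div_add_mod (a ||| b) 2
    have m1 : a % 2 < 2 := Nat.mod_lt _ two_pos
    have m2 : b % 2 < 2 := Nat.mod_lt _ two_pos
    have m3 : (a ||| b) % 2 < 2 := Nat.mod_lt _ two_pos
    omega

private theorem testBit_sum_two_pow (A : Finset ℕ) (j : ℕ) :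
    (∑ a ∈ A, 2 ^ a).testBit j = decide (j ∈ A) := by
  induction A using Finset.cons_induction generalizing j with
  | empty => simp
  | cons a A ha ih =>
    have hand : 2 ^ a &&& (∑ x ∈ A, 2 ^ x) = 0 := by
      apply Nat.eq_of_testBit_eq
      intro i
      simp only [Nat.testBit_and, Nat.zero_testBit, Nat.testBit_two_pow, ih]
      rcases eq_or_ne a i with rfl | hne
      · simp [ih, ha]
      · simp [hne]
    rw [Finset.sum_cons, add_eq_or_aux _ _ hand]
    simp only [Nat.testBit_or, Nat.testBit_two_pow, ih, Finset.mem_cons]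
    rcases eq_or_ne a j with rfl | hne
    · simp
    · simp [hne, Ne.symm hne]

theorem sub_pos_iff_testBit_mem_union (A B : Finset ℕ)
    (hle : ∑ a ∈ A, 2 ^ a ≤ ∑ b ∈ B, 2 ^ b) :
    0 < (∑ b ∈ B, 2 ^ b) - (∑ a ∈ A, 2 ^ a) ↔
      ∃ j ∈ A ∪ B, ((∑ b ∈ B, 2 ^ b) - (∑ a ∈ A, 2 ^ a)).testBit j = true := by
  set SA := ∑ a ∈ A, 2 ^ a with hSA
  set SB := ∑ b ∈ B, 2 ^ b with hSB
  set x := SB - SA with hx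
  have hadd : SA + x = SB := by omega
  constructor
  · intro hpos
    by_contra hno
    push_neg at hno
    have hno' : ∀ j ∈ A ∪ B, x.testBit j = false := by
      intro j hj
      simpa using hno j hj
    have hand : SA &&& x = 0 := by
      apply Nat.eq_of_testBit_eq
      intro i
      simp only [Nat.testBit_and, Nat.zero_testBit]
      rw [hSA, testBit_sum_two_pow]
      by_cases hi : i ∈ A
      · rw [hno' i (Finset.mem_union_left _ hi)]
        simp
      · simp [hi]
    have hor : SB = SA ||| x := by
      rw [← hadd]
      exact add_eq_or_aux _ _ hand
    obtain ⟨k, hk, -⟩ := Nat.exists_most_significant_bit (n := x) (by omega)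
    have hSBk : SB.testBit k = true := by
      rw [hor, Nat.testBit_or, hk, Bool.or_true]
    rw [hSB, testBit_sum_two_pow] at hSBk
    have hkB : k ∈ B := by simpa using hSBk
    have := hno' k (Finset.mem_union_right _ hkB)
    rw [hk] at this
    simp at this
  · rintro ⟨j, -, hj⟩
    rcases Nat.eq_zero_or_pos x with h0 | h
    · rw [h0] at hj
      simp at hj
    · exact h
end

section
/- Let x be a natural number and A a finite set of natural numbers such that x has a binary digit at some position belonging to A. Then there exists a unique nonempty subset B ⊆ A such that the number x + Σ_{b∈B} 2^b has no binary digit at any position belonging to A. -/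
private lemma tb1 (x c n j : ℕ) (hj : j < n) :
    (x + c * 2 ^ n).testBit j = x.testBit j := by
  obtain ⟨m, rfl⟩ : ∃ m, n = j + 1 + m := ⟨n - j - 1, by omega⟩
  have h2 : x + c * 2 ^ (j + 1 + m) = x + c * 2 ^ m * 2 * 2 ^ j := by
    rw [pow_add, pow_add, pow_one]; ring
  rw [Nat.testBit_eq_decide_div_mod_eq, Nat.testBit_eq_decide_div_mod_eq, h2,
    Nat.add_mul_div_right _ _ (Nat.two_pow_pos j),
    Nat.add_mul_mod_self_right]

private lemma tb2 (x a : ℕ) : (x + 2 ^ a).testBit a = !x.testBit a := by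
  rw [Nat.testBit_eq_decide_div_mod_eq, Nat.testBit_eq_decide_div_mod_eq,
    Nat.add_div_right _ (Nat.two_pow_pos a)]
  rcases Nat.mod_two_eq_zero_or_one (x / 2 ^ a) with h | h <;> simp [h, Nat.succ_mod_two_eq_one_iff, Nat.succ_mod_two_eq_zero_iff]

private lemma sum_dvd {B : Finset ℕ} {n : ℕ} (h : ∀ b ∈ B, n ≤ b) :
    2 ^ n ∣ ∑ b ∈ B, 2 ^ b :=
  Finset.dvd_sum fun b hb => pow_dvd_pow 2 (h b hb)

private lemma key_s11 (A : Finset ℕ) : ∀ x : ℕ, ∃! B : Finset ℕ, B ⊆ A ∧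
    ∀ j ∈ A, (x + ∑ b ∈ B, 2 ^ b).testBit j = false := by
  induction A using Finset.strongInduction with
  | _ A ih =>
  intro x
  rcases A.eq_empty_or_nonempty with rfl | hA
  · refine ⟨∅, ⟨Finset.Subset.refl _, by simp⟩, ?_⟩
    intro C hC
    exact Finset.subset_empty.mp hC.1
  · set a := A.min' hA with ha
    have haA : a ∈ A := A.min'_mem hA
    have hsub : A.erase a ⊂ A := Finset.erase_ssubset haA
    have hgt : ∀ b ∈ A.erase a, a + 1 ≤ b := by
      intro b hb
      have hbA := Finset.mem_of_mem_erase hb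
      have := A.min'_le b hbA
      have hne := Finset.ne_of_mem_erase hb
      omega
    -- helper: for B ⊆ A.erase a, low bits unaffected
    have hlow : ∀ (y : ℕ) (B : Finset ℕ), B ⊆ A.erase a →
        (y + ∑ b ∈ B, 2 ^ b).testBit a = y.testBit a := by
      intro y B hB
      obtain ⟨c, hc⟩ := sum_dvd (fun b hb => hgt b (hB hb))
      rw [hc, mul_comm, tb1 y c (a+1) a (by omega)]
    by_cases hbit : x.testBit a = true
    · -- bit a of x is set; must include a in B
      obtain ⟨B', ⟨hB'sub, hB'clr⟩, hB'uniq⟩ := ih _ hsub (x + 2 ^ a)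
      have haB' : a ∉ B' := fun hmem => (Finset.ne_of_mem_erase (hB'sub hmem)) rfl
      refine ⟨insert a B', ⟨?_, ?_⟩, ?_⟩
      · exact Finset.insert_subset haA (hB'sub.trans (A.erase_subset a))
      · intro j hj
        rw [Finset.sum_insert haB', ← add_assoc]
        by_cases hja : j = a
        · rw [hja, hlow (x + 2 ^ a) B' hB'sub, tb2, hbit]; rfl
        · exact hB'clr j (Finset.mem_erase.mpr ⟨hja, hj⟩)
      · intro C ⟨hCsub, hCclr⟩
        have haC : a ∈ C := by
          by_contra haC
          have hCe : C ⊆ A.erase a := fun b hb =>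
            Finset.mem_erase.mpr ⟨fun hba => haC (hba ▸ hb), hCsub hb⟩
          have h0 := hCclr a haA
          rw [hlow x C hCe] at h0
          rw [hbit] at h0
          exact absurd h0 (by simp)
        have hCe : C.erase a ⊆ A.erase a := Finset.erase_subset_erase a hCsub
        have hsumC : ∑ b ∈ C, 2 ^ b = 2 ^ a + ∑ b ∈ C.erase a, 2 ^ b := by
          rw [← Finset.sum_insert (Finset.notMem_erase a C),
            Finset.insert_erase haC]
        have : C.erase a = B' := by
          apply hB'uniq
          refine ⟨hCe, ?_⟩
          intro j hj
          have := hCclr j (Finset.mem_of_mem_erase hj)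
          rw [hsumC, ← add_assoc] at this
          exact this
        rw [← this, Finset.insert_erase haC]
    · -- bit a of x is clear; a not in B
      obtain ⟨B', ⟨hB'sub, hB'clr⟩, hB'uniq⟩ := ih _ hsub x
      refine ⟨B', ⟨hB'sub.trans (A.erase_subset a), ?_⟩, ?_⟩
      · intro j hj
        by_cases hja : j = a
        · rw [hja, hlow x B' hB'sub]
          simpa using hbit
        · exact hB'clr j (Finset.mem_erase.mpr ⟨hja, hj⟩)
      · intro C ⟨hCsub, hCclr⟩
        have haC : a ∉ C := by
          intro haC
          have hCe : C.erase a ⊆ A.erase a := Finset.erase_subset_erase a hCsub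
          have hsumC : ∑ b ∈ C, 2 ^ b = 2 ^ a + ∑ b ∈ C.erase a, 2 ^ b := by
            rw [← Finset.sum_insert (Finset.notMem_erase a C),
              Finset.insert_erase haC]
          have h0 := hCclr a haA
          rw [hsumC, ← add_assoc, hlow (x + 2 ^ a) _ hCe, tb2] at h0
          simp [hbit] at *
        apply hB'uniq
        refine ⟨fun b hb => Finset.mem_erase.mpr
          ⟨fun hba => haC (hba ▸ hb), hCsub hb⟩, fun j hj => hCclr j (Finset.mem_of_mem_erase hj)⟩

theorem existsUnique_subset_clearing_bits (x : ℕ) (A : Finset ℕ)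
    (h : ∃ j ∈ A, x.testBit j = true) :
    ∃! B : Finset ℕ, B ⊆ A ∧ B.Nonempty ∧
      ∀ j ∈ A, (x + ∑ b ∈ B, 2 ^ b).testBit j = false := by
  obtain ⟨B, ⟨hBsub, hBclr⟩, hBuniq⟩ := key_s11 A x
  have hne : B.Nonempty := by
    rcases B.eq_empty_or_nonempty with rfl | hne
    · obtain ⟨j, hj, hjbit⟩ := h
      have := hBclr j hj
      simp at this
      rw [hjbit] at this
      exact absurd this (by simp)
    · exact hne
  refine ⟨B, ⟨hBsub, hne, hBclr⟩, ?_⟩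
  intro C ⟨hCsub, _, hCclr⟩
  exact hBuniq C ⟨hCsub, hCclr⟩
end

section
/- Let Λ be a finite set of natural numbers with at least two elements and let A ⊆ Λ be a nonempty subset with Σ_{a∈A} 2^a < Σ_{λ∈Λ} 2^λ. Then there exists a unique subset B ⊆ Λ with Σ_{a∈A} 2^a < Σ_{b∈B} 2^b such that the difference Σ_{b∈B} 2^b − Σ_{a∈A} 2^a has no binary digit at any position belonging to Λ \ {min Λ}. -/
private lemma sum_range_two_pow' (n : ℕ) : ∑ i ∈ Finset.range n, 2 ^ i = 2 ^ n - 1 := by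
  induction n with
  | zero => simp
  | succ n ih =>
    rw [Finset.sum_range_succ, ih]
    have h1 : 1 ≤ 2 ^ n := Nat.one_le_two_pow
    have h2 : 2 ^ (n + 1) = 2 * 2 ^ n := by ring
    omega

private lemma sum_pow_lt' {X : Finset ℕ} {n : ℕ} (h : ∀ x ∈ X, x < n) :
    ∑ x ∈ X, 2 ^ x < 2 ^ n := by
  have hsub : X ⊆ Finset.range n := fun x hx => Finset.mem_range.mpr (h x hx)
  calc ∑ x ∈ X, 2 ^ x ≤ ∑ x ∈ Finset.range n, 2 ^ x :=
        Finset.sum_le_sum_of_subset hsub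
    _ = 2 ^ n - 1 := sum_range_two_pow' n
    _ < 2 ^ n := by have : 1 ≤ 2 ^ n := Nat.one_le_two_pow; omega

private lemma testBit_sum' (X : Finset ℕ) (j : ℕ) :
    (∑ x ∈ X, 2 ^ x).testBit j = decide (j ∈ X) := by
  induction X using Finset.induction_on_max generalizing j with
  | empty => simp
  | insert a s ha ih =>
    have hnotmem : a ∉ s := fun h => absurd (ha a h) (lt_irrefl a)
    rw [Finset.sum_insert hnotmem]
    have hs : ∑ x ∈ s, 2 ^ x < 2 ^ a := sum_pow_lt' (fun x hx => ha x hx)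
    rcases lt_trichotomy j a with h | h | h
    · rw [Nat.testBit_two_pow_add_gt h, ih]
      have : j ∈ insert a s ↔ j ∈ s := by
        simp only [Finset.mem_insert]
        constructor
        · rintro (rfl | hj)
          · omega
          · exact hj
        · exact Or.inr
      simp [this]
    · subst h
      rw [Nat.testBit_two_pow_add_eq, Nat.testBit_lt_two_pow hs]
      simp
    · have hlt2 : 2 ^ a + ∑ x ∈ s, 2 ^ x < 2 ^ j := by
        have : 2 ^ (a + 1) ≤ 2 ^ j := Nat.pow_le_pow_right (by norm_num) h
        have h2 : 2 ^ (a + 1) = 2 * 2 ^ a := by ring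
        omega
      rw [Nat.testBit_lt_two_pow hlt2]
      have : j ∉ insert a s := by
        simp only [Finset.mem_insert]
        rintro (rfl | hj)
        · omega
        · exact absurd (ha j hj) (by omega)
      simp [this]

private lemma exists_lowest_bit' {d : ℕ} (hd : d ≠ 0) :
    ∃ j, d.testBit j = true ∧ ∀ i < j, d.testBit i = false := by
  have hex : ∃ i, d.testBit i = true := by
    obtain ⟨i, hi, _⟩ := Nat.exists_most_significant_bit hd
    exact ⟨i, hi⟩
  refine ⟨Nat.find hex, Nat.find_spec hex, fun i hi => ?_⟩
  by_contra h
  exact Nat.find_min hex hi (by simpa using h)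

private lemma testBit_add_lowest' {d j : ℕ} (hj : d.testBit j = true)
    (hlow : ∀ i < j, d.testBit i = false) (a : ℕ) :
    (a + d).testBit j = !a.testBit j := by
  have hmod : d % 2 ^ j = 0 := by
    have h : ∀ i, (d % 2 ^ j).testBit i = false := by
      intro i
      rw [Nat.testBit_mod_two_pow]
      rcases lt_or_ge i j with h | h
      · simp [hlow i h]
      · simp [Nat.not_lt_of_ge h]
    exact Nat.eq_of_testBit_eq (fun i => by rw [h i, Nat.zero_testBit])
  obtain ⟨e, he⟩ := Nat.dvd_of_mod_eq_zero hmod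
  have hodd : e % 2 = 1 := by
    have h := hj
    rw [Nat.testBit_eq_decide_div_mod_eq, he] at h
    have hdiv : 2 ^ j * e / 2 ^ j = e := Nat.mul_div_cancel_left e (Nat.two_pow_pos j)
    rw [hdiv] at h
    simpa using h
  rw [he, Nat.testBit_eq_decide_div_mod_eq, Nat.testBit_eq_decide_div_mod_eq,
    Nat.add_mul_div_left a e (Nat.two_pow_pos j)]
  rcases Nat.mod_two_eq_zero_or_one (a / 2 ^ j) with h | h <;>
    simp [Nat.add_mod, h, hodd]

private lemma clean_bit_min' (Λ : Finset ℕ) (hΛ : Λ.Nonempty) (A B : Finset ℕ)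
    (hAΛ : A ⊆ Λ) (hBΛ : B ⊆ Λ) (hlt : ∑ a ∈ A, 2 ^ a < ∑ b ∈ B, 2 ^ b)
    (hc : ∀ j ∈ Λ.erase (Λ.min' hΛ),
      ((∑ b ∈ B, 2 ^ b) - (∑ a ∈ A, 2 ^ a)).testBit j = false) :
    ((∑ b ∈ B, 2 ^ b) - (∑ a ∈ A, 2 ^ a)).testBit (Λ.min' hΛ) = true := by
  have haA : ∀ i, (∑ a ∈ A, 2 ^ a).testBit i = decide (i ∈ A) := testBit_sum' A
  have hbB : ∀ i, (∑ b ∈ B, 2 ^ b).testBit i = decide (i ∈ B) := testBit_sum' B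
  set a := ∑ a ∈ A, 2 ^ a with hadef
  set b := ∑ b ∈ B, 2 ^ b with hbdef
  have hba : b = a + (b - a) := by omega
  have hdne : b - a ≠ 0 := by omega
  obtain ⟨j, hj, hjlow⟩ := exists_lowest_bit' hdne
  have hflip : b.testBit j = !a.testBit j := by
    conv_lhs => rw [hba]
    exact testBit_add_lowest' hj hjlow a
  have hjΛ : j ∈ Λ := by
    by_cases h : j ∈ A
    · exact hAΛ h
    · have ha' : a.testBit j = false := by rw [haA]; simp [h]
      have hb : b.testBit j = true := by rw [hflip, ha']; rfl
      rw [hbB j] at hb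
      exact hBΛ (by simpa using hb)
  by_cases hjm : j = Λ.min' hΛ
  · rw [← hjm]; exact hj
  · exact absurd hj (by rw [hc j (Finset.mem_erase.mpr ⟨hjm, hjΛ⟩)]; simp)

private lemma uniq_aux' (Λ : Finset ℕ) (hΛ : Λ.Nonempty) (A B1 B2 : Finset ℕ)
    (hAΛ : A ⊆ Λ) (h1Λ : B1 ⊆ Λ) (h2Λ : B2 ⊆ Λ)
    (hlt1 : ∑ a ∈ A, 2 ^ a < ∑ b ∈ B1, 2 ^ b)
    (hlt2 : ∑ a ∈ A, 2 ^ a < ∑ b ∈ B2, 2 ^ b)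
    (hc1 : ∀ j ∈ Λ.erase (Λ.min' hΛ),
      ((∑ b ∈ B1, 2 ^ b) - (∑ a ∈ A, 2 ^ a)).testBit j = false)
    (hc2 : ∀ j ∈ Λ.erase (Λ.min' hΛ),
      ((∑ b ∈ B2, 2 ^ b) - (∑ a ∈ A, 2 ^ a)).testBit j = false)
    (hne : ∑ b ∈ B1, 2 ^ b < ∑ b ∈ B2, 2 ^ b) : False := by
  have h1m := clean_bit_min' Λ hΛ A B1 hAΛ h1Λ hlt1 hc1
  have h2m := clean_bit_min' Λ hΛ A B2 hAΛ h2Λ hlt2 hc2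
  have hb1B : ∀ i, (∑ b ∈ B1, 2 ^ b).testBit i = decide (i ∈ B1) := testBit_sum' B1
  have hb2B : ∀ i, (∑ b ∈ B2, 2 ^ b).testBit i = decide (i ∈ B2) := testBit_sum' B2
  set a := ∑ a ∈ A, 2 ^ a with hadef
  set b1 := ∑ b ∈ B1, 2 ^ b with hb1def
  set b2 := ∑ b ∈ B2, 2 ^ b with hb2def
  have hene : b2 - b1 ≠ 0 := by omega
  obtain ⟨j, hj, hjlow⟩ := exists_lowest_bit' hene
  have hflipb : b2.testBit j = !b1.testBit j := by
    conv_lhs => rw [show b2 = b1 + (b2 - b1) by omega]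
    exact testBit_add_lowest' hj hjlow b1
  have hflipd : (b2 - a).testBit j = !(b1 - a).testBit j := by
    conv_lhs => rw [show b2 - a = (b1 - a) + (b2 - b1) by omega]
    exact testBit_add_lowest' hj hjlow (b1 - a)
  have hjΛ : j ∈ Λ := by
    by_cases h : j ∈ B1
    · exact h1Λ h
    · have hb1' : b1.testBit j = false := by rw [hb1B]; simp [h]
      have hb : b2.testBit j = true := by rw [hflipb, hb1']; rfl
      rw [hb2B j] at hb
      exact h2Λ (by simpa using hb)
  by_cases hjm : j = Λ.min' hΛ
  · rw [hjm, h1m, h2m] at hflipd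
    simp at hflipd
  · have hmem : j ∈ Λ.erase (Λ.min' hΛ) := Finset.mem_erase.mpr ⟨hjm, hjΛ⟩
    rw [hc1 j hmem, hc2 j hmem] at hflipd
    simp at hflipd

theorem existsUnique_subset_dominating_with_clean_difference
    (Λ : Finset ℕ) (hcard : 2 ≤ Λ.card) (A : Finset ℕ) (hAΛ : A ⊆ Λ) (hA : A.Nonempty)
    (hlt : ∑ a ∈ A, 2 ^ a < ∑ l ∈ Λ, 2 ^ l) :
    ∃! B : Finset ℕ, B ⊆ Λ ∧ (∑ a ∈ A, 2 ^ a < ∑ b ∈ B, 2 ^ b) ∧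
      ∀ j ∈ Λ.erase (Λ.min' (Finset.card_pos.mp (by omega))),
        ((∑ b ∈ B, 2 ^ b) - (∑ a ∈ A, 2 ^ a)).testBit j = false := by
  classical
  have hΛ : Λ.Nonempty := Finset.card_pos.mp (by omega)
  have hAne : A ≠ Λ := by rintro rfl; omega
  have hsd : (Λ \ A).Nonempty := by
    rw [Finset.sdiff_nonempty]
    intro h
    exact hAne (Finset.Subset.antisymm hAΛ h)
  set l := (Λ \ A).min' hsd with hldef
  have hlmem := (Λ \ A).min'_mem hsd
  rw [Finset.mem_sdiff] at hlmem
  obtain ⟨hlΛ, hlA⟩ := hlmem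
  have hbelow : ∀ x ∈ Λ, x < l → x ∈ A := by
    intro x hx hxl
    by_contra hxA
    have := Finset.min'_le (Λ \ A) x (Finset.mem_sdiff.mpr ⟨hx, hxA⟩)
    omega
  set B : Finset ℕ := insert l (A.filter (fun x => l < x)) with hBdef
  have hBΛ : B ⊆ Λ := by
    intro x hx
    rw [hBdef, Finset.mem_insert] at hx
    rcases hx with rfl | hx
    · exact hlΛ
    · exact hAΛ (Finset.mem_of_mem_filter x hx)
  set s := ∑ x ∈ Λ.filter (fun x => x < l), 2 ^ x with hsdef
  have hAsum : ∑ x ∈ A, 2 ^ x = s + ∑ x ∈ A.filter (fun x => l < x), 2 ^ x := by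
    have hAfil : A.filter (fun x => x < l) = Λ.filter (fun x => x < l) := by
      ext x
      simp only [Finset.mem_filter]
      exact ⟨fun ⟨hx, h⟩ => ⟨hAΛ hx, h⟩, fun ⟨hx, h⟩ => ⟨hbelow x hx h, h⟩⟩
    have hAfil2 : A.filter (fun x => ¬ x < l) = A.filter (fun x => l < x) := by
      ext x
      simp only [Finset.mem_filter, not_lt]
      constructor
      · rintro ⟨hx, h⟩
        have hne : x ≠ l := by rintro rfl; exact hlA hx
        exact ⟨hx, by omega⟩
      · rintro ⟨hx, h⟩
        exact ⟨hx, by omega⟩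
    rw [hsdef, ← hAfil, ← hAfil2, Finset.sum_filter_add_sum_filter_not]
  have hBsum : ∑ x ∈ B, 2 ^ x = 2 ^ l + ∑ x ∈ A.filter (fun x => l < x), 2 ^ x := by
    rw [hBdef, Finset.sum_insert (by simp)]
  have hslt : s < 2 ^ l := by
    rw [hsdef]
    exact sum_pow_lt' (fun x hx => (Finset.mem_filter.mp hx).2)
  have hABlt : ∑ a ∈ A, 2 ^ a < ∑ b ∈ B, 2 ^ b := by omega
  have hBdiff : (∑ b ∈ B, 2 ^ b) - (∑ a ∈ A, 2 ^ a) = 2 ^ l - s := by omega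
  have hclean : ∀ j ∈ Λ.erase (Λ.min' hΛ),
      ((∑ b ∈ B, 2 ^ b) - (∑ a ∈ A, 2 ^ a)).testBit j = false := by
    intro j hj
    obtain ⟨hjm, hjΛ⟩ := Finset.mem_erase.mp hj
    rw [hBdiff]
    have hmΛ := Λ.min'_mem hΛ
    have hmle : Λ.min' hΛ ≤ j := Λ.min'_le j hjΛ
    rcases le_or_gt l j with hlj | hjl
    · -- d < 2^j
      apply Nat.testBit_lt_two_pow
      rcases eq_or_lt_of_le hlj with rfl | hlj'
      · -- j = l, so min < l and s > 0
        have hmlt : Λ.min' hΛ < l := lt_of_le_of_ne hmle (fun e => hjm e.symm)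
        have hspos : 0 < s := by
          have hmem : Λ.min' hΛ ∈ Λ.filter (fun x => x < l) :=
            Finset.mem_filter.mpr ⟨hmΛ, hmlt⟩
          have hle : 2 ^ (Λ.min' hΛ) ≤ s := by
            rw [hsdef]
            exact Finset.single_le_sum (f := fun x => 2 ^ x)
              (fun i _ => Nat.zero_le _) hmem
          have h1 : 1 ≤ 2 ^ (Λ.min' hΛ) := Nat.one_le_two_pow
          omega
        omega
      · have : 2 ^ l < 2 ^ j := Nat.pow_lt_pow_right (by norm_num) hlj'
        omega
    · -- j < l : mod argument
      have hmj : Λ.min' hΛ < j := lt_of_le_of_ne hmle (fun e => hjm e.symm)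
      set T := Λ.filter (fun x => x < l) with hTdef
      set slo := ∑ x ∈ T.filter (fun x => x ≤ j), 2 ^ x with hslodef
      set shi := ∑ x ∈ T.filter (fun x => ¬ x ≤ j), 2 ^ x with hshidef
      have hsplit : slo + shi = s := by
        rw [hslodef, hshidef, hsdef, hTdef, Finset.sum_filter_add_sum_filter_not]
      have hdvdhi : 2 ^ (j + 1) ∣ shi := by
        apply Finset.dvd_sum
        intro x hx
        have : ¬ x ≤ j := (Finset.mem_filter.mp hx).2
        exact pow_dvd_pow 2 (by omega)
      have hdvdl : 2 ^ (j + 1) ∣ 2 ^ l := pow_dvd_pow 2 (by omega)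
      have hpair : 2 ^ (Λ.min' hΛ) + 2 ^ j ≤ slo := by
        have hsub : ({Λ.min' hΛ, j} : Finset ℕ) ⊆ T.filter (fun x => x ≤ j) := by
          intro x hx
          simp only [Finset.mem_insert, Finset.mem_singleton] at hx
          rcases hx with rfl | rfl
          · exact Finset.mem_filter.mpr ⟨Finset.mem_filter.mpr ⟨hmΛ, by omega⟩, by omega⟩
          · exact Finset.mem_filter.mpr ⟨Finset.mem_filter.mpr ⟨hjΛ, hjl⟩, le_refl _⟩
        calc 2 ^ (Λ.min' hΛ) + 2 ^ j = ∑ x ∈ ({Λ.min' hΛ, j} : Finset ℕ), 2 ^ x := by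
              rw [Finset.sum_pair (by omega)]
          _ ≤ slo := Finset.sum_le_sum_of_subset hsub
      have hlolt : slo < 2 ^ (j + 1) := by
        rw [hslodef]
        exact sum_pow_lt' (fun x hx => by
          have := (Finset.mem_filter.mp hx).2; omega)
      have hdvd : 2 ^ (j + 1) ∣ ((2 ^ l - s) + slo) := by
        have heq : (2 ^ l - s) + slo = 2 ^ l - shi := by omega
        rw [heq]
        exact Nat.dvd_sub hdvdl hdvdhi
      obtain ⟨q, hq⟩ := hdvd
      have h2j : 1 ≤ 2 ^ (Λ.min' hΛ) := Nat.one_le_two_pow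
      have hq0 : q ≠ 0 := by
        rintro rfl
        rw [mul_zero] at hq
        omega
      obtain ⟨q', rfl⟩ : ∃ q', q = q' + 1 := ⟨q - 1, by omega⟩
      rw [mul_add, mul_one] at hq
      have hr : 2 ^ l - s = 2 ^ (j + 1) * q' + (2 ^ (j + 1) - slo) := by omega
      have hrlt : 2 ^ (j + 1) - slo < 2 ^ j := by
        have h2 : 2 ^ (j + 1) = 2 * 2 ^ j := by ring
        omega
      have hmodeq : (2 ^ l - s) % 2 ^ (j + 1) = 2 ^ (j + 1) - slo := by
        rw [hr, Nat.mul_add_mod]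
        exact Nat.mod_eq_of_lt (by omega)
      have hmt := Nat.testBit_mod_two_pow (2 ^ l - s) (j + 1) j
      simp only [Nat.lt_succ_self, decide_true, Bool.true_and] at hmt
      rw [← hmt, hmodeq]
      exact Nat.testBit_lt_two_pow hrlt
  refine ⟨B, ⟨hBΛ, hABlt, hclean⟩, ?_⟩
  rintro B' ⟨hB'Λ, hB'lt, hB'clean⟩
  rcases lt_trichotomy (∑ b ∈ B', 2 ^ b) (∑ b ∈ B, 2 ^ b) with h | h | h
  · exact absurd (uniq_aux' Λ hΛ A B' B hAΛ hB'Λ hBΛ hB'lt hABlt hB'clean hclean h) id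
  · apply Finset.ext
    intro i
    have h1 := testBit_sum' B' i
    have h2 := testBit_sum' B i
    rw [h, h2] at h1
    constructor <;> intro hi
    · exact of_decide_eq_true (h1 ▸ decide_eq_true hi)
    · exact of_decide_eq_true (h1.symm ▸ decide_eq_true hi)
  · exact absurd (uniq_aux' Λ hΛ A B B' hAΛ hBΛ hB'Λ hABlt hB'lt hclean hB'clean h) id
end

section
/- Let K be a field of characteristic 2, k a natural number, c : ℕ → K a sequence, and i ≥ 1 a natural number such that k is a 2-complement of i. Then the following are equivalent: (a) c satisfies the system E_k up to level i, i.e. for every j with 1 ≤ j ≤ i and every s with 1 ≤ s ≤ j, Σ_{t=0}^{s} C(k + j + (s − t), s − t) · C(j, t) · c_{j−t} = 0 in K; (b) c_j = 0 for every j with 0 ≤ j ≤ i − 1. -/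
set_option linter.unusedSectionVars false
set_option maxHeartbeats 1000000

/-- The sequence `c` satisfies the system `E_k` up to level `l`. -/
def SatisfiesE {K : Type*} [Field K] (k l : ℕ) (c : ℕ → K) : Prop :=
  ∀ i, 1 ≤ i → i ≤ l → ∀ s, 1 ≤ s → s ≤ i →
    ∑ j ∈ Finset.range (s + 1),
      (((k + i + (s - j)).choose (s - j) : ℕ) : K) * ((i.choose j : ℕ) : K) * c (i - j) = 0

/-! ### Parity of binomial coefficients (Lucas mod 2) -/

lemma aux_choose_odd_iff : ∀ k n : ℕ,
    n.choose k % 2 = 1 ↔ ∀ b, k.testBit b = true → n.testBit b = true := by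
  intro k
  induction k using Nat.strong_induction_on with
  | _ k ih =>
    intro n
    rcases Nat.eq_zero_or_pos k with hk | hk
    · subst hk
      simp [Nat.zero_testBit]
    · have hstep : n.choose k % 2 = ((n % 2).choose (k % 2) * ((n / 2).choose (k / 2))) % 2 :=
        Choose.choose_modEq_choose_mod_mul_choose_div_nat (p := 2)
      have ihh := ih (k / 2) (Nat.div_lt_self hk one_lt_two) (n / 2)
      have hbits : (∀ b, k.testBit b = true → n.testBit b = true) ↔
          ((k.testBit 0 = true → n.testBit 0 = true) ∧
            ∀ b, (k / 2).testBit b = true → (n / 2).testBit b = true) := by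
        constructor
        · intro h
          exact ⟨h 0, fun b hb => by
            rw [Nat.testBit_div_two]; exact h (b + 1) (by rwa [Nat.testBit_div_two] at hb)⟩
        · rintro ⟨h0, hs⟩ b hb
          cases b with
          | zero => exact h0 hb
          | succ b =>
            have := hs b (by rwa [Nat.testBit_div_two])
            rwa [Nat.testBit_div_two] at this
      rw [hstep, hbits, ← ihh]
      rcases Nat.mod_two_eq_zero_or_one n with h1 | h1 <;>
        rcases Nat.mod_two_eq_zero_or_one k with h2 | h2 <;>
        simp [h1, h2, Nat.testBit_zero, Nat.mul_mod, Nat.mod_mod_of_dvd]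

lemma aux_testBit_eq_mod (x a e : ℕ) (h : a < e) : x.testBit a = (x % 2 ^ e).testBit a := by
  rw [Nat.testBit_mod_two_pow]; simp [h]

/-- `n % 2^(ν₂ n + 1) = 2^(ν₂ n)` for `n ≠ 0`. -/
lemma aux_mod_pow_factorization (n : ℕ) (hn : n ≠ 0) :
    n % 2 ^ (n.factorization 2 + 1) = 2 ^ (n.factorization 2) := by
  set a := n.factorization 2 with ha
  obtain ⟨o, ho⟩ := Nat.ordProj_dvd n 2
  have h2 : ¬ 2 ^ (a + 1) ∣ n := Nat.pow_succ_factorization_not_dvd hn Nat.prime_two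
  have hodd : o % 2 = 1 := by
    rcases Nat.mod_two_eq_zero_or_one o with h | h
    · exfalso
      apply h2
      obtain ⟨o', ho'⟩ : 2 ∣ o := by omega
      exact ⟨o', by rw [ho, ho', pow_succ]; ring⟩
    · exact h
  rw [ho, pow_succ, Nat.mul_mod_mul_left, hodd, mul_one]

lemma aux_pred_mod (M Q : ℕ) (hQ : 0 < Q) (hd : Q ∣ M) (hM : 0 < M) :
    (M - 1) % Q = Q - 1 := by
  obtain ⟨C, rfl⟩ := hd
  obtain ⟨C', rfl⟩ : ∃ C', C = C' + 1 := ⟨C - 1, by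
    rcases Nat.eq_zero_or_pos C with h | h
    · subst h; simp at hM
    · omega⟩
  have h1 : Q * (C' + 1) = Q * C' + Q := by ring
  have h2 : Q * (C' + 1) - 1 = Q * C' + (Q - 1) := by
    rw [h1]
    generalize Q * C' = X
    omega
  rw [h2, Nat.mul_add_mod, Nat.mod_eq_of_lt (by omega)]

/-! ### The convolution identities in characteristic 2 -/

section Aux

variable {K : Type*} [Field K] [CharP K 2]

lemma aux_two_eq_zero : (2 : K) = 0 := by exact_mod_cast CharP.cast_eq_zero K 2

lemma aux_cast_eq_zero_of_mod {m : ℕ} (h : m % 2 = 0) : (m : K) = 0 := by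
  rw [CharP.cast_eq_zero_iff K 2]; omega

lemma aux_cast_eq_one_of_mod {m : ℕ} (h : m % 2 = 1) : (m : K) = 1 := by
  conv_lhs => rw [← Nat.div_add_mod m 2, h]
  push_cast
  rw [aux_two_eq_zero]
  ring

/-- Partial convolution sums `S M N r = ∑_u C(M, r-u) C(N+u, u)` valued in `K`. -/
noncomputable def auxS (K : Type*) [Field K] (M N r : ℕ) : K :=
  ∑ u ∈ Finset.range (r + 1), ((M.choose (r - u) : ℕ) : K) * (((N + u).choose u : ℕ) : K)

lemma auxS_zero (M N : ℕ) : auxS K M N 0 = 1 := by simp [auxS]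

lemma auxA (M N r : ℕ) : auxS K (M + 1) N (r + 1) = auxS K M N (r + 1) + auxS K M N r := by
  unfold auxS
  rw [Finset.sum_range_succ (n := r + 1), Finset.sum_range_succ (n := r + 1)]
  have h : ∀ u ∈ Finset.range (r + 1),
      (((M + 1).choose (r + 1 - u) : ℕ) : K) * (((N + u).choose u : ℕ) : K) =
        ((M.choose (r + 1 - u) : ℕ) : K) * (((N + u).choose u : ℕ) : K) +
          ((M.choose (r - u) : ℕ) : K) * (((N + u).choose u : ℕ) : K) := by
    intro u hu
    rw [Finset.mem_range] at hu
    have he : r + 1 - u = (r - u) + 1 := by omega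
    rw [he, Nat.choose_succ_succ]
    push_cast
    ring
  rw [Finset.sum_congr rfl h, Finset.sum_add_distrib]
  simp
  ring

lemma auxB (M N r : ℕ) : auxS K M (N + 1) (r + 1) = auxS K M N (r + 1) + auxS K M (N + 1) r := by
  unfold auxS
  rw [Finset.sum_range_succ' (n := r + 1), Finset.sum_range_succ' (n := r + 1)]
  have h : ∀ v ∈ Finset.range (r + 1),
      ((M.choose (r + 1 - (v + 1)) : ℕ) : K) * (((N + 1 + (v + 1)).choose (v + 1) : ℕ) : K) =
        ((M.choose (r + 1 - (v + 1)) : ℕ) : K) * (((N + (v + 1)).choose (v + 1) : ℕ) : K) +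
          ((M.choose (r - v) : ℕ) : K) * (((N + 1 + v).choose v : ℕ) : K) := by
    intro v _
    have he : N + 1 + (v + 1) = (N + v + 1) + 1 := by ring
    have he2 : N + (v + 1) = N + v + 1 := by ring
    have he3 : N + 1 + v = N + v + 1 := by ring
    have he4 : r + 1 - (v + 1) = r - v := by omega
    rw [he, he2, he3, he4, Nat.choose_succ_succ (N + v + 1) v]
    push_cast
    ring
  rw [Finset.sum_congr rfl h, Finset.sum_add_distrib]
  simp
  ring

lemma auxG (N r : ℕ) : auxS K N N r = 1 := by
  induction N generalizing r with
  | zero =>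
    unfold auxS
    rw [Finset.sum_eq_single r]
    · simp
    · intro u hu hne
      rw [Finset.mem_range] at hu
      rw [Nat.choose_eq_zero_of_lt (by omega)]
      simp
    · intro hr; exact absurd (Finset.self_mem_range_succ r) hr
  | succ N ihN =>
    cases r with
    | zero => exact auxS_zero _ _
    | succ r =>
      rw [auxA, auxB, ihN]
      have hx : auxS K N (N + 1) r + auxS K N (N + 1) r = 0 := by
        rw [← two_mul, aux_two_eq_zero, zero_mul]
      calc 1 + auxS K N (N + 1) r + auxS K N (N + 1) r
          = 1 + (auxS K N (N + 1) r + auxS K N (N + 1) r) := by ring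
        _ = 1 := by rw [hx, add_zero]

lemma auxT (N r : ℕ) (hr : 1 ≤ r) : auxS K (N + 1) N r = 0 := by
  obtain ⟨r', rfl⟩ : ∃ r', r = r' + 1 := ⟨r - 1, by omega⟩
  rw [auxA, auxG, auxG, ← two_mul, aux_two_eq_zero, zero_mul]

/-- The key linear combination identity obtained by inverting the triangular system. -/
lemma keyComb (k l t : ℕ) (c : ℕ → K) :
    ∑ s ∈ Finset.range (t + 1), (((k + l + 1).choose (t - s) : ℕ) : K) *
      (∑ j ∈ Finset.range (s + 1),
        (((k + l + (s - j)).choose (s - j) : ℕ) : K) * ((l.choose j : ℕ) : K) * c (l - j))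
    = ((l.choose t : ℕ) : K) * c (l - t) := by
  have hswap :
      ∑ s ∈ Finset.range (t + 1), ∑ j ∈ Finset.range (s + 1),
        (((k + l + 1).choose (t - s) : ℕ) : K) *
          ((((k + l + (s - j)).choose (s - j) : ℕ) : K) * ((l.choose j : ℕ) : K) * c (l - j))
      = ∑ j ∈ Finset.range (t + 1), ∑ s ∈ Finset.Ico j (t + 1),
        (((k + l + 1).choose (t - s) : ℕ) : K) *
          ((((k + l + (s - j)).choose (s - j) : ℕ) : K) * ((l.choose j : ℕ) : K) * c (l - j)) := by
    simp only [Finset.range_eq_Ico]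
    exact (Finset.sum_Ico_Ico_comm 0 (t + 1) fun j s =>
      (((k + l + 1).choose (t - s) : ℕ) : K) *
        ((((k + l + (s - j)).choose (s - j) : ℕ) : K) * ((l.choose j : ℕ) : K) * c (l - j))).symm
  calc
    ∑ s ∈ Finset.range (t + 1), (((k + l + 1).choose (t - s) : ℕ) : K) *
        (∑ j ∈ Finset.range (s + 1),
          (((k + l + (s - j)).choose (s - j) : ℕ) : K) * ((l.choose j : ℕ) : K) * c (l - j))
      = ∑ s ∈ Finset.range (t + 1), ∑ j ∈ Finset.range (s + 1),
          (((k + l + 1).choose (t - s) : ℕ) : K) *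
            ((((k + l + (s - j)).choose (s - j) : ℕ) : K) * ((l.choose j : ℕ) : K) * c (l - j)) := by
        apply Finset.sum_congr rfl; intro s _; rw [Finset.mul_sum]
    _ = ∑ j ∈ Finset.range (t + 1), ∑ s ∈ Finset.Ico j (t + 1),
          (((k + l + 1).choose (t - s) : ℕ) : K) *
            ((((k + l + (s - j)).choose (s - j) : ℕ) : K) * ((l.choose j : ℕ) : K) * c (l - j)) :=
        hswap
    _ = ∑ j ∈ Finset.range (t + 1),
          ((l.choose j : ℕ) : K) * c (l - j) * auxS K (k + l + 1) (k + l) (t - j) := by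
        apply Finset.sum_congr rfl
        intro j hj
        rw [Finset.mem_range] at hj
        rw [Finset.sum_Ico_eq_sum_range]
        have hrange : t + 1 - j = (t - j) + 1 := by omega
        rw [hrange]
        unfold auxS
        rw [Finset.mul_sum]
        apply Finset.sum_congr rfl
        intro u hu
        rw [Finset.mem_range] at hu
        have h1 : j + u - j = u := by omega
        have h2 : t - (j + u) = t - j - u := by omega
        rw [h1, h2]
        ring
    _ = ((l.choose t : ℕ) : K) * c (l - t) := by
        rw [Finset.sum_eq_single t]
        · rw [Nat.sub_self, auxS, Finset.sum_range_one]
          simp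
        · intro j hj hne
          rw [Finset.mem_range] at hj
          have h1 : 1 ≤ t - j := by omega
          have hN : k + l + 1 = (k + l) + 1 := rfl
          rw [hN, auxT (k + l) (t - j) h1, mul_zero]
        · intro h; exact absurd (Finset.self_mem_range_succ t) h

end Aux

theorem satisfiesE_iff_vanish_of_twoComplement
    {K : Type*} [Field K] [CharP K 2] (k : ℕ) (c : ℕ → K) (i : ℕ) (hi : 1 ≤ i)
    (h : TwoComplement k i) :
    SatisfiesE k i c ↔ ∀ j < i, c j = 0 := by
  set m := Nat.log 2 i with hm
  have hM : (i + k) % 2 ^ (m + 1) = 2 ^ (m + 1) - 1 := by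
    rcases h with ⟨h0, _⟩ | ⟨_, h⟩
    · omega
    · exact h
  have hMpos : (1 : ℕ) ≤ 2 ^ (m + 1) := Nat.one_le_two_pow
  have hiM : i < 2 ^ (m + 1) := Nat.lt_pow_succ_log_self one_lt_two i
  -- `k + i + 1 ≡ 0 mod 2^(m+1)`
  have hcM : (k + i + 1) % 2 ^ (m + 1) = 0 := by
    have hd := Nat.div_add_mod (i + k) (2 ^ (m + 1))
    rw [hM] at hd
    have : k + i + 1 = 2 ^ (m + 1) * ((i + k) / 2 ^ (m + 1)) + 2 ^ (m + 1) := by omega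
    rw [this, Nat.mul_add_mod, Nat.mod_self]
  -- evenness of `C(k+i+1, t)` for `1 ≤ t ≤ i`
  have heven : ∀ t', 1 ≤ t' → t' ≤ i → (k + i + 1).choose t' % 2 = 0 := by
    intro t' h1 h2
    rcases Nat.mod_two_eq_zero_or_one ((k + i + 1).choose t') with hz | ho
    · exact hz
    · exfalso
      have hall := (aux_choose_odd_iff t' (k + i + 1)).mp ho
      obtain ⟨b, hb1, _⟩ := Nat.exists_most_significant_bit (show t' ≠ 0 by omega)
      have hblt : b < m + 1 := by
        by_contra hbge
        have ht2 : t' < 2 ^ b :=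
          lt_of_le_of_lt h2 (lt_of_lt_of_le hiM (Nat.pow_le_pow_right (by norm_num) (by omega)))
        rw [Nat.testBit_lt_two_pow ht2] at hb1
        exact Bool.false_ne_true hb1
      have := hall b hb1
      rw [aux_testBit_eq_mod _ _ (m + 1) hblt, hcM, Nat.zero_testBit] at this
      exact Bool.false_ne_true this
  constructor
  · -- forward direction
    intro hsat
    intro j hj
    induction j using Nat.strong_induction_on with
    | _ j ih =>
      set v := (k + j + 1).factorization 2 with hv
      have hmodw : (k + j + 1) % 2 ^ (v + 1) = 2 ^ v :=
        aux_mod_pow_factorization (k + j + 1) (by omega)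
      by_cases hgood : 2 ^ v ≤ j
      · -- use equation at level j with s = 2^v
        have hj1 : 1 ≤ j := le_trans Nat.one_le_two_pow hgood
        have hE := hsat j hj1 (le_of_lt hj) (2 ^ v) Nat.one_le_two_pow hgood
        rw [Finset.sum_range_succ'] at hE
        have hz : ∀ x ∈ Finset.range (2 ^ v),
            (((k + j + (2 ^ v - (x + 1))).choose (2 ^ v - (x + 1)) : ℕ) : K) *
              ((j.choose (x + 1) : ℕ) : K) * c (j - (x + 1)) = 0 := by
          intro x _
          rw [ih (j - (x + 1)) (by omega) (by omega), mul_zero]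
        rw [Finset.sum_eq_zero hz, zero_add] at hE
        simp only [Nat.sub_zero, Nat.choose_zero_right, Nat.cast_one, mul_one] at hE
        have hodd : (k + j + 2 ^ v).choose (2 ^ v) % 2 = 1 := by
          rw [aux_choose_odd_iff]
          intro b hb
          rw [Nat.testBit_two_pow] at hb
          have hb' : v = b := by simpa using hb
          subst hb'
          -- (k + j + 2^v) % 2^(v+1) = 2^(v+1) - 1
          have hq := Nat.div_add_mod (k + j + 1) (2 ^ (v + 1))
          rw [hmodw] at hq
          have hpow : 2 ^ (v + 1) = 2 ^ v * 2 := by rw [pow_succ]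
          have hkey : k + j + 2 ^ v =
              2 ^ (v + 1) * ((k + j + 1) / 2 ^ (v + 1)) + (2 ^ (v + 1) - 1) := by
            have h1 : (1:ℕ) ≤ 2 ^ v := Nat.one_le_two_pow
            omega
          have hmod2 : (k + j + 2 ^ v) % 2 ^ (v + 1) = 2 ^ (v + 1) - 1 := by
            rw [hkey, Nat.mul_add_mod, Nat.mod_eq_of_lt (by omega)]
          rw [aux_testBit_eq_mod _ _ (v + 1) (by omega), hmod2, Nat.testBit_two_pow_sub_one]
          simp
        rw [aux_cast_eq_one_of_mod hodd, one_mul] at hE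
        exact hE
      · -- bad case: j < 2^v; use the combination at level i with t = i - j
        push_neg at hgood
        have hdvd : 2 ^ v ∣ k + j + 1 := Nat.ordProj_dvd _ 2
        -- congruence chain: for P ∣ 2^(m+1) with P ∣ k+j+1, i ≡ j [MOD P]
        have hchain : ∀ P : ℕ, P ∣ 2 ^ (m + 1) → P ∣ (k + j + 1) → i % P = j % P := by
          intro P h1 h2
          have e1 : i + k ≡ 2 ^ (m + 1) - 1 [MOD 2 ^ (m + 1)] := by
            unfold Nat.ModEq
            rw [hM, Nat.mod_eq_of_lt (by omega)]
          have e1' : i + k ≡ 2 ^ (m + 1) - 1 [MOD P] := Nat.ModEq.of_dvd h1 e1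
          have e2 : k + j + 1 ≡ 0 [MOD P] := Nat.modEq_zero_iff_dvd.mpr h2
          have e3 : i + (k + j + 1) ≡ i + 0 [MOD P] := Nat.ModEq.add_left i e2
          have e4 : i + (k + j + 1) ≡ (2 ^ (m + 1) - 1) + (j + 1) [MOD P] := by
            have : i + (k + j + 1) = (i + k) + (j + 1) := by ring
            rw [this]
            exact e1'.add_right _
          have e5 : (2 ^ (m + 1) - 1) + (j + 1) = 2 ^ (m + 1) + j := by omega
          have e6 : 2 ^ (m + 1) + j ≡ 0 + j [MOD P] :=
            Nat.ModEq.add_right j (Nat.modEq_zero_iff_dvd.mpr h1)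
          have : i ≡ j [MOD P] := by
            calc i = i + 0 := by ring
              _ ≡ i + (k + j + 1) [MOD P] := e3.symm
              _ ≡ (2 ^ (m + 1) - 1) + (j + 1) [MOD P] := e4
              _ = 2 ^ (m + 1) + j := e5
              _ ≡ 0 + j [MOD P] := e6
              _ = j := by ring
          exact this
        have hvm : v ≤ m := by
          by_contra hvgt
          have hPM : 2 ^ (m + 1) ∣ 2 ^ v := pow_dvd_pow 2 (by omega)
          have := hchain (2 ^ (m + 1)) dvd_rfl (hPM.trans hdvd)
          rw [Nat.mod_eq_of_lt hiM, Nat.mod_eq_of_lt (by omega)] at this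
          omega
        have hij : i % 2 ^ v = j := by
          have := hchain (2 ^ v) (pow_dvd_pow 2 (by omega)) hdvd
          rwa [Nat.mod_eq_of_lt hgood] at this
        obtain ⟨q, hiq⟩ : ∃ q, i = 2 ^ v * q + j := by
          refine ⟨i / 2 ^ v, ?_⟩
          conv_lhs => rw [← Nat.div_add_mod i (2 ^ v)]
          rw [hij]
        set t := i - j with hT
        have ht1 : 1 ≤ t := by omega
        have ht2 : t ≤ i := by omega
        have htq : t = 2 ^ v * q + 0 := by omega
        -- C(i, t) is odd
        have hoddit : i.choose t % 2 = 1 := by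
          rw [aux_choose_odd_iff]
          intro b hb
          rw [htq, Nat.testBit_two_pow_mul_add q (Nat.one_le_two_pow) b] at hb
          rw [hiq, Nat.testBit_two_pow_mul_add q hgood b]
          by_cases hbv : b < v
          · rw [if_pos hbv] at hb
            rw [Nat.zero_testBit] at hb
            exact absurd hb Bool.false_ne_true
          · rw [if_neg hbv] at hb
            rw [if_neg hbv]
            exact hb
        -- apply the key combination at level i
        have hcomb := keyComb (K := K) k i t c
        have hLHS : ∑ s ∈ Finset.range (t + 1), (((k + i + 1).choose (t - s) : ℕ) : K) *
            (∑ j' ∈ Finset.range (s + 1),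
              (((k + i + (s - j')).choose (s - j') : ℕ) : K) * ((i.choose j' : ℕ) : K) *
                c (i - j')) = 0 := by
          rw [Finset.sum_range_succ']
          have hz : ∀ x ∈ Finset.range t,
              (((k + i + 1).choose (t - (x + 1)) : ℕ) : K) *
                (∑ j' ∈ Finset.range (x + 1 + 1),
                  (((k + i + (x + 1 - j')).choose (x + 1 - j') : ℕ) : K) *
                    ((i.choose j' : ℕ) : K) * c (i - j')) = 0 := by
            intro x hx
            rw [Finset.mem_range] at hx
            rw [hsat i hi le_rfl (x + 1) (by omega) (by omega), mul_zero]
          rw [Finset.sum_eq_zero hz, zero_add]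
          have hinner : ∑ j' ∈ Finset.range (0 + 1),
              (((k + i + (0 - j')).choose (0 - j') : ℕ) : K) * ((i.choose j' : ℕ) : K) *
                c (i - j') = c i := by
            simp
          rw [hinner, Nat.sub_zero, aux_cast_eq_zero_of_mod (heven t ht1 ht2), zero_mul]
        rw [hLHS] at hcomb
        have hji : i - t = j := by omega
        rw [hji, aux_cast_eq_one_of_mod hoddit, one_mul] at hcomb
        exact hcomb.symm
  · -- backward direction
    intro hvan
    intro jj h1 h2 s hs1 hs2
    apply Finset.sum_eq_zero
    intro j' hj'
    rcases Nat.eq_zero_or_pos j' with hz | hpos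
    · subst hz
      simp only [Nat.sub_zero, Nat.choose_zero_right, Nat.cast_one, mul_one]
      rcases lt_or_eq_of_le h2 with hlt | heq
      · rw [hvan jj hlt, mul_zero]
      · rw [heq] at hs2 ⊢
        -- coefficient `C(k + i + s, s)` is even
        set a := s.factorization 2 with ha
        have hsa : s % 2 ^ (a + 1) = 2 ^ a := aux_mod_pow_factorization s (by omega)
        have h2as : 2 ^ a ≤ s := Nat.le_of_dvd (by omega) (Nat.ordProj_dvd s 2)
        have ham : a < m + 1 := by
          have : (2:ℕ) ^ a < 2 ^ (m + 1) := lt_of_le_of_lt (le_trans h2as hs2) hiM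
          exact (Nat.pow_lt_pow_iff_right (by norm_num)).mp this
        have hQdvd : (2:ℕ) ^ (a + 1) ∣ 2 ^ (m + 1) := pow_dvd_pow 2 (by omega)
        have hQpos : (0:ℕ) < 2 ^ (a + 1) := Nat.pow_pos (by norm_num)
        -- (i + k) % 2^(a+1) = 2^(a+1) - 1
        have hik : (i + k) % 2 ^ (a + 1) = 2 ^ (a + 1) - 1 := by
          rw [← Nat.mod_mod_of_dvd (i + k) hQdvd, hM]
          exact aux_pred_mod _ _ hQpos hQdvd (by omega)
        -- (k + i + s) % 2^(a+1) = 2^a - 1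
        have hks : (k + i + s) % 2 ^ (a + 1) = 2 ^ a - 1 := by
          have := Nat.add_mod (i + k) s (2 ^ (a + 1))
          rw [hik, hsa] at this
          have hpow : (2:ℕ) ^ (a + 1) = 2 ^ a * 2 := by rw [pow_succ]
          have h1a : (1:ℕ) ≤ 2 ^ a := Nat.one_le_two_pow
          have he : (2 ^ (a + 1) - 1 + 2 ^ a) = 2 ^ (a + 1) + (2 ^ a - 1) := by omega
          rw [show k + i + s = i + k + s by ring, this, he, Nat.add_mod_left,
            Nat.mod_eq_of_lt (by omega)]
        have hevens : (k + i + s).choose s % 2 = 0 := by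
          rcases Nat.mod_two_eq_zero_or_one ((k + i + s).choose s) with hz2 | ho2
          · exact hz2
          · exfalso
            have hall := (aux_choose_odd_iff s (k + i + s)).mp ho2
            -- bit a of s is 1, but bit a of (k+i+s) is 0
            have hsbit : s.testBit a = true := by
              rw [aux_testBit_eq_mod _ _ (a + 1) (by omega), hsa]
              exact Nat.testBit_two_pow_self
            have := hall a hsbit
            rw [aux_testBit_eq_mod _ _ (a + 1) (by omega), hks,
              Nat.testBit_two_pow_sub_one] at this
            simp at this
        rw [aux_cast_eq_zero_of_mod hevens, zero_mul]
    · have hjlt : jj - j' < i := by omega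
      rw [hvan (jj - j') hjlt, mul_zero]
end

section
/- Let K be a field of characteristic 2, let k, l, i₀ be natural numbers with i₀ ≤ l such that k is a 2-complement of i₀ and k is not a 2-complement of any j with i₀ < j ≤ l, and let c : ℕ → K satisfy the system E_k up to level l. Then c_j = 0 for every j ≤ l such that j does not contain the base-2 representation of i₀. -/
section Aux

/-- bitwise subset characterization of `&&&`. -/
lemma land_eq_left_iff (r n : ℕ) :
    r &&& n = r ↔ ∀ i, r.testBit i = true → n.testBit i = true := by
  constructor
  · intro h i hi
    have h2 := congrArg (fun x => x.testBit i) h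
    simp only [Nat.testBit_and, hi, Bool.true_and] at h2
    exact h2
  · intro h
    apply Nat.eq_of_testBit_eq
    intro i
    rw [Nat.testBit_and]
    cases hr : r.testBit i
    · simp
    · simp [h i hr]

/-- Lucas-type parity of binomial coefficients. -/
lemma choose_mod_two_eq_one_iff :
    ∀ n r : ℕ, n.choose r % 2 = 1 ↔ ∀ i, r.testBit i = true → n.testBit i = true := by
  intro n
  induction n using Nat.strong_induction_on with
  | _ n ih =>
  intro r
  rcases Nat.eq_zero_or_pos n with hn | hn
  · subst hn
    rcases Nat.eq_zero_or_pos r with hr | hr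
    · subst hr; simp
    · rw [Nat.choose_eq_zero_of_lt hr]
      constructor
      · intro h; omega
      · intro h
        exfalso
        have hrz : r = 0 := Nat.zero_of_testBit_eq_false (fun i => by
          by_contra hne
          have hb : r.testBit i = true := by
            cases hb : r.testBit i
            · exact absurd hb hne
            · rfl
          have := h i hb
          simp [Nat.zero_testBit] at this)
        omega
  · have lucas : n.choose r % 2 = ((n % 2).choose (r % 2) * ((n / 2).choose (r / 2))) % 2 :=
      Choose.choose_modEq_choose_mod_mul_choose_div_nat (p := 2)
    have h2 := ih (n / 2) (Nat.div_lt_self hn (by norm_num)) (r / 2)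
    have hbit : (∀ i, r.testBit i = true → n.testBit i = true) ↔
        ((r.testBit 0 = true → n.testBit 0 = true) ∧
          ∀ i, (r / 2).testBit i = true → (n / 2).testBit i = true) := by
      constructor
      · intro h
        refine ⟨h 0, fun i hi => ?_⟩
        have := h (i + 1) (by rw [Nat.testBit_succ]; exact hi)
        rwa [Nat.testBit_succ] at this
      · rintro ⟨h0, hs⟩ i hi
        cases i with
        | zero => exact h0 hi
        | succ i =>
          rw [Nat.testBit_succ] at hi ⊢
          exact hs i hi
    have hfront : (n % 2).choose (r % 2) % 2 = 1 ↔ (r.testBit 0 = true → n.testBit 0 = true) := by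
      rcases Nat.mod_two_eq_zero_or_one n with h | h <;>
        rcases Nat.mod_two_eq_zero_or_one r with h' | h' <;>
          simp [h, h', Nat.testBit_zero]
    rw [lucas, Nat.mul_mod, hbit, ← h2, ← hfront]
    rcases Nat.mod_two_eq_zero_or_one ((n % 2).choose (r % 2)) with h | h <;>
      rcases Nat.mod_two_eq_zero_or_one ((n / 2).choose (r / 2)) with h' | h' <;>
        simp [h, h']

variable {K : Type*} [Field K] [CharP K 2]

lemma natCast_eq_mod_two (n : ℕ) : (n : K) = ((n % 2 : ℕ) : K) := by
  conv_lhs => rw [← Nat.div_add_mod n 2]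
  push_cast
  rw [CharTwo.two_eq_zero]
  ring

lemma cast_choose_eq_ite (n r : ℕ) :
    ((n.choose r : ℕ) : K) = if r &&& n = r then 1 else 0 := by
  rw [natCast_eq_mod_two]
  rcases Nat.mod_two_eq_zero_or_one (n.choose r) with h | h
  · rw [h]
    have hne : ¬ (r &&& n = r) := by
      rw [land_eq_left_iff]
      intro hsub
      have := (choose_mod_two_eq_one_iff n r).mpr hsub
      omega
    simp [hne]
  · rw [h]
    have heq : r &&& n = r :=
      (land_eq_left_iff r n).mpr ((choose_mod_two_eq_one_iff n r).mp h)
    simp [heq]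

lemma coeff_one_sub_X_pow (d v : ℕ) :
    (PowerSeries.coeff (R := K) v) ((1 - PowerSeries.X) ^ d) = ((d.choose v : ℕ) : K) := by
  have h1 : (1 - PowerSeries.X : PowerSeries K)
      = ((Polynomial.X + 1 : Polynomial K) : PowerSeries K) := by
    ext n
    simp only [map_sub, PowerSeries.coeff_one, PowerSeries.coeff_X, Polynomial.coeff_coe,
      Polynomial.coeff_add, Polynomial.coeff_one, Polynomial.coeff_X]
    rcases n with _ | _ | n <;> simp [CharTwo.neg_eq]
  rw [h1, ← Polynomial.coe_pow, Polynomial.coeff_coe, Polynomial.coeff_X_add_one_pow]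

lemma key_sum (N w : ℕ) (hw : w ≠ 0) :
    ∑ a ∈ Finset.range (w + 1),
      (((N + a).choose a : ℕ) : K) * (((N + 1).choose (w - a) : ℕ) : K) = 0 := by
  have H := PowerSeries.mk_add_choose_mul_one_sub_pow_eq_one (S := K) (d := N)
  have H2 := congrArg (PowerSeries.coeff (R := K) w) H
  rw [PowerSeries.coeff_mul, Finset.Nat.sum_antidiagonal_eq_sum_range_succ_mk,
    PowerSeries.coeff_one, if_neg hw] at H2
  rw [← H2]
  apply Finset.sum_congr rfl
  intro a _
  rw [PowerSeries.coeff_mk, coeff_one_sub_X_pow]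
  congr 2
  exact (Nat.choose_symm_add).symm

lemma key_sum' (N t : ℕ) (ht : 1 ≤ t) :
    ∑ j ∈ Finset.range t,
      (((N + (t - j)).choose (t - j) : ℕ) : K) * (((N + 1).choose j : ℕ) : K)
      = (((N + 1).choose t : ℕ) : K) := by
  have H := key_sum (K := K) N t (by omega)
  rw [← Finset.sum_range_reflect] at H
  rw [Finset.sum_range_succ] at H
  have hlast : (((N + (t + 1 - 1 - t)).choose (t + 1 - 1 - t) : ℕ) : K) *
      (((N + 1).choose (t - (t + 1 - 1 - t)) : ℕ) : K) = (((N + 1).choose t : ℕ) : K) := by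
    have : t + 1 - 1 - t = 0 := by omega
    rw [this]
    simp
  rw [hlast] at H
  have hsum : ∑ j ∈ Finset.range t,
      (((N + (t + 1 - 1 - j)).choose (t + 1 - 1 - j) : ℕ) : K) *
        (((N + 1).choose (t - (t + 1 - 1 - j)) : ℕ) : K)
      = ∑ j ∈ Finset.range t,
      (((N + (t - j)).choose (t - j) : ℕ) : K) * (((N + 1).choose j : ℕ) : K) := by
    apply Finset.sum_congr rfl
    intro j hj
    rw [Finset.mem_range] at hj
    have h1 : t + 1 - 1 - j = t - j := by omega
    have h2 : t - (t - j) = j := by omega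
    rw [h1, h2]
  rw [hsum] at H
  have := eq_neg_of_add_eq_zero_left H
  rwa [CharTwo.neg_eq] at this

lemma star {k l : ℕ} {c : ℕ → K} (hc : SatisfiesE k l c) :
    ∀ t i, 1 ≤ i → i ≤ l → t ≤ i →
      ((i.choose t : ℕ) : K) * c (i - t) = (((k + i + 1).choose t : ℕ) : K) * c i := by
  intro t
  induction t using Nat.strong_induction_on with
  | _ t ih =>
  intro i hi1 hil hti
  rcases Nat.eq_zero_or_pos t with ht | ht
  · subst ht; simp
  · have E := hc i hi1 hil t ht hti
    rw [Finset.sum_range_succ] at E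
    have hlast : (((k + i + (t - t)).choose (t - t) : ℕ) : K) * ((i.choose t : ℕ) : K) * c (i - t)
        = ((i.choose t : ℕ) : K) * c (i - t) := by
      rw [Nat.sub_self]
      simp
    rw [hlast] at E
    have hterms : ∀ j ∈ Finset.range t,
        (((k + i + (t - j)).choose (t - j) : ℕ) : K) * ((i.choose j : ℕ) : K) * c (i - j)
        = (((k + i + (t - j)).choose (t - j) : ℕ) : K) * (((k + i + 1).choose j : ℕ) : K) * c i := by
      intro j hj
      rw [Finset.mem_range] at hj
      rw [mul_assoc, ih j hj i hi1 hil (le_trans (le_of_lt hj) hti), mul_assoc]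
    rw [Finset.sum_congr rfl hterms] at E
    rw [← Finset.sum_mul] at E
    rw [key_sum' (K := K) (k + i) t ht] at E
    have := eq_neg_of_add_eq_zero_right E
    rwa [CharTwo.neg_eq] at this

lemma testBit_log (n : ℕ) (hn : n ≠ 0) : n.testBit (Nat.log 2 n) = true := by
  rw [Nat.testBit_eq_decide_div_mod_eq]
  have h1 : 2 ^ Nat.log 2 n ≤ n := Nat.pow_log_le_self 2 hn
  have h2 : n < 2 ^ (Nat.log 2 n + 1) := Nat.lt_pow_succ_log_self (by norm_num) n
  have h2' : n < 2 ^ Nat.log 2 n * 2 := by rw [pow_succ] at h2; exact h2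
  have h3 : n / 2 ^ Nat.log 2 n = 1 := Nat.div_eq_of_lt_le (by omega) (by omega)
  simp [h3]

lemma testBit_false_of_mod_pow_eq_zero {a s b : ℕ} (h : a % 2 ^ s = 0) (hb : b < s) :
    a.testBit b = false := by
  obtain ⟨q, hq⟩ := Nat.dvd_of_mod_eq_zero h
  rw [hq, Nat.testBit_two_pow_mul]
  have : ¬ (b ≥ s) := by omega
  simp [this]

lemma testBit_sub_subset : ∀ j r : ℕ, (∀ i, r.testBit i = true → j.testBit i = true) →
    ∀ i, (j - r).testBit i = true → j.testBit i = true := by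
  intro j
  induction j using Nat.strong_induction_on with
  | _ j ih =>
  intro r hr i hi
  rcases Nat.eq_zero_or_pos j with hj | hj
  · subst hj
    simp [Nat.zero_testBit] at hi
  rcases Nat.eq_zero_or_pos r with hr0 | hr0
  · subst hr0
    simpa using hi
  have hrj : r ≤ j := by
    have hland : r &&& j = r := (land_eq_left_iff r j).mpr hr
    calc r = r &&& j := hland.symm
    _ ≤ j := Nat.and_le_right
  have hb0 : r % 2 = 1 → j % 2 = 1 := by
    intro h
    have h2 := hr 0
    rw [Nat.testBit_zero, Nat.testBit_zero] at h2
    have := h2 (by simp [h])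
    simpa using this
  have hhalf : ∀ i, (r / 2).testBit i = true → (j / 2).testBit i = true := by
    intro i hi
    have := hr (i + 1)
    rw [Nat.testBit_succ, Nat.testBit_succ] at this
    exact this hi
  cases i with
  | zero =>
    rw [Nat.testBit_zero] at hi ⊢
    simp only [decide_eq_true_eq] at hi ⊢
    omega
  | succ i =>
    rw [Nat.testBit_succ] at hi ⊢
    have harith : (j - r) / 2 = j / 2 - r / 2 := by omega
    rw [harith] at hi
    exact ih (j / 2) (Nat.div_lt_self hj (by norm_num)) (r / 2) hhalf i hi

end Aux

theorem vanish_of_not_contains_of_satisfiesE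
    {K : Type*} [Field K] [CharP K 2] (k l i₀ : ℕ) (hi₀l : i₀ ≤ l)
    (h₀ : TwoComplement k i₀) (hmax : ∀ j, i₀ < j → j ≤ l → ¬ TwoComplement k j)
    (c : ℕ → K) (hc : SatisfiesE k l c) :
    ∀ j ≤ l, ¬ (i₀ &&& j = i₀) → c j = 0 := by
  intro j
  induction j using Nat.strong_induction_on with
  | _ j ihj =>
  intro hjl hnc
  have hi0ne : i₀ ≠ 0 := by
    rintro rfl
    exact hnc (Nat.zero_and j)
  have h₀' : (i₀ + k) % 2 ^ (Nat.log 2 i₀ + 1) = 2 ^ (Nat.log 2 i₀ + 1) - 1 := by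
    rcases h₀ with ⟨h, _⟩ | ⟨_, h⟩
    · omega
    · exact h
  have hM₀pos : 0 < 2 ^ (Nat.log 2 i₀ + 1) := Nat.pow_pos (by norm_num)
  have hk1 : (k + i₀ + 1) % 2 ^ (Nat.log 2 i₀ + 1) = 0 := by
    have hd := Nat.div_add_mod (i₀ + k) (2 ^ (Nat.log 2 i₀ + 1))
    rw [h₀'] at hd
    have heq : k + i₀ + 1 = 2 ^ (Nat.log 2 i₀ + 1) * ((i₀ + k) / 2 ^ (Nat.log 2 i₀ + 1) + 1) := by
      rw [Nat.mul_add, Nat.mul_one]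
      omega
    rw [heq, Nat.mul_mod_right]
  have hbit0 : ∀ b, b ≤ Nat.log 2 i₀ → (k + i₀ + 1).testBit b = false :=
    fun b hb => testBit_false_of_mod_pow_eq_zero hk1 (by omega)
  have hcoefftop : ∀ t, t ≠ 0 → t ≤ i₀ → (((k + i₀ + 1).choose t : ℕ) : K) = 0 := by
    intro t ht hti
    rw [cast_choose_eq_ite, if_neg]
    intro hland
    have hsub := (land_eq_left_iff _ _).mp hland
    have hb := testBit_log t ht
    have hble : Nat.log 2 t ≤ Nat.log 2 i₀ := Nat.log_mono_right hti
    have := hsub _ hb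
    rw [hbit0 _ hble] at this
    exact absurd this (by simp)
  rcases Nat.eq_zero_or_pos j with hj0 | hj1
  · subst hj0
    have hs := star hc i₀ i₀ (Nat.one_le_iff_ne_zero.mpr hi0ne) hi₀l le_rfl
    rw [Nat.sub_self, Nat.choose_self, hcoefftop i₀ hi0ne le_rfl] at hs
    simpa using hs
  · by_cases hA : ∀ b, b ≤ Nat.log 2 j → (k + j + 1).testBit b = true → j.testBit b = true
    · have hrbits : ∀ b, ((k + j + 1) % 2 ^ (Nat.log 2 j + 1)).testBit b = true →
          ((k + j + 1).testBit b = true ∧ b ≤ Nat.log 2 j) := by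
        intro b hb
        rw [Nat.testBit_mod_two_pow] at hb
        simp only [Bool.and_eq_true, decide_eq_true_eq] at hb
        exact ⟨hb.2, by omega⟩
      have hrj : ∀ b, ((k + j + 1) % 2 ^ (Nat.log 2 j + 1)).testBit b = true → j.testBit b = true :=
        fun b hb => hA b (hrbits b hb).2 (hrbits b hb).1
      have hrland : (k + j + 1) % 2 ^ (Nat.log 2 j + 1) &&& j = (k + j + 1) % 2 ^ (Nat.log 2 j + 1) :=
        (land_eq_left_iff _ _).mpr hrj
      have hrlej : (k + j + 1) % 2 ^ (Nat.log 2 j + 1) ≤ j := hrland ▸ Nat.and_le_right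
      by_cases hr0 : (k + j + 1) % 2 ^ (Nat.log 2 j + 1) = 0
      · -- TwoComplement k j holds; then j < i₀ and use t = i₀ - j
        have hjk : (j + k) % 2 ^ (Nat.log 2 j + 1) = 2 ^ (Nat.log 2 j + 1) - 1 := by
          obtain ⟨q, hq⟩ := Nat.dvd_of_mod_eq_zero hr0
          have hMpos : 0 < 2 ^ (Nat.log 2 j + 1) := Nat.pow_pos (by norm_num)
          rcases q with _ | q'
          · omega
          · have hjkq : j + k = 2 ^ (Nat.log 2 j + 1) * q' + (2 ^ (Nat.log 2 j + 1) - 1) := by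
              rw [Nat.mul_succ] at hq
              omega
            rw [hjkq, Nat.mul_add_mod, Nat.mod_eq_of_lt (by omega)]
        have htc : TwoComplement k j := Or.inr ⟨hj1, hjk⟩
        rcases Nat.lt_trichotomy j i₀ with hlt | heq | hgt
        · have hmle : Nat.log 2 j + 1 ≤ Nat.log 2 i₀ + 1 := by
            have := Nat.log_mono_right (le_of_lt hlt) (b := 2)
            omega
          have hMdvd : 2 ^ (Nat.log 2 j + 1) ∣ 2 ^ (Nat.log 2 i₀ + 1) := pow_dvd_pow 2 hmle
          have hMpos : 0 < 2 ^ (Nat.log 2 j + 1) := Nat.pow_pos (by norm_num)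
          have hik : (i₀ + k) % 2 ^ (Nat.log 2 j + 1) = 2 ^ (Nat.log 2 j + 1) - 1 := by
            have h1 : (i₀ + k) % 2 ^ (Nat.log 2 j + 1)
                = ((i₀ + k) % 2 ^ (Nat.log 2 i₀ + 1)) % 2 ^ (Nat.log 2 j + 1) :=
              (Nat.mod_mod_of_dvd _ hMdvd).symm
            rw [h₀'] at h1
            obtain ⟨d, hd⟩ := hMdvd
            have hdpos : 0 < d := by
              rcases Nat.eq_zero_or_pos d with h | h
              · rw [h, Nat.mul_zero] at hd; omega
              · exact h
            have h2 : 2 ^ (Nat.log 2 i₀ + 1) - 1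
                = 2 ^ (Nat.log 2 j + 1) * (d - 1) + (2 ^ (Nat.log 2 j + 1) - 1) := by
              rcases Nat.exists_eq_add_of_le hdpos with ⟨d', rfl⟩
              rw [hd]
              simp only [Nat.add_sub_cancel_left]
              rw [Nat.mul_add, Nat.mul_one]
              omega
            rw [h1, h2, Nat.mul_add_mod, Nat.mod_eq_of_lt (by omega)]
          have hcong : i₀ % 2 ^ (Nat.log 2 j + 1) = j % 2 ^ (Nat.log 2 j + 1) := by
            have hmm : (i₀ + k) % 2 ^ (Nat.log 2 j + 1) = (j + k) % 2 ^ (Nat.log 2 j + 1) := by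
              rw [hik, hjk]
            exact Nat.ModEq.add_right_cancel' k hmm
          have hjM : j < 2 ^ (Nat.log 2 j + 1) := Nat.lt_pow_succ_log_self (by norm_num) j
          have hi0M : i₀ % 2 ^ (Nat.log 2 j + 1) = j := by
            rw [hcong, Nat.mod_eq_of_lt hjM]
          have hi0eq : i₀ = 2 ^ (Nat.log 2 j + 1) * (i₀ / 2 ^ (Nat.log 2 j + 1)) + j := by
            conv_lhs => rw [← Nat.div_add_mod i₀ (2 ^ (Nat.log 2 j + 1))]
            rw [hi0M]
          have htMq : i₀ - j = 2 ^ (Nat.log 2 j + 1) * (i₀ / 2 ^ (Nat.log 2 j + 1)) := by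
            conv_lhs => rw [hi0eq]
            omega
          have htpos : i₀ - j ≠ 0 := by omega
          have htsub : ∀ b, (i₀ - j).testBit b = true → i₀.testBit b = true := by
            intro b hb
            rw [htMq, Nat.testBit_two_pow_mul] at hb
            simp only [Bool.and_eq_true, decide_eq_true_eq, ge_iff_le] at hb
            obtain ⟨hbge, hqb⟩ := hb
            have hbeq : i₀.testBit b = (i₀ / 2 ^ (Nat.log 2 j + 1)).testBit (b - (Nat.log 2 j + 1)) := by
              rw [Nat.testBit_eq_decide_div_mod_eq, Nat.testBit_eq_decide_div_mod_eq]
              have hb' : 2 ^ b = 2 ^ (Nat.log 2 j + 1) * 2 ^ (b - (Nat.log 2 j + 1)) := by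
                rw [← pow_add]
                congr 1
                omega
              rw [hb']
              conv_lhs => rw [hi0eq]
              rw [← Nat.div_div_eq_div_mul, Nat.mul_add_div hMpos, Nat.div_eq_of_lt hjM, Nat.add_zero]
            rw [hbeq]
            exact hqb
          have hcast1 : ((i₀.choose (i₀ - j) : ℕ) : K) = 1 := by
            rw [cast_choose_eq_ite, if_pos ((land_eq_left_iff _ _).mpr htsub)]
          have hs := star hc (i₀ - j) i₀ (Nat.one_le_iff_ne_zero.mpr hi0ne) hi₀l (Nat.sub_le _ _)
          rw [hcast1, one_mul, hcoefftop (i₀ - j) htpos (Nat.sub_le _ _), zero_mul] at hs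
          rwa [show i₀ - (i₀ - j) = j by omega] at hs
        · exfalso
          apply hnc
          rw [heq]
          exact Nat.and_self i₀
        · exact absurd htc (hmax j hgt hjl)
      · -- r ≠ 0 : descend
        have hrsubk : ∀ b, ((k + j + 1) % 2 ^ (Nat.log 2 j + 1)).testBit b = true →
            (k + j + 1).testBit b = true := fun b hb => (hrbits b hb).1
        have hs := star hc ((k + j + 1) % 2 ^ (Nat.log 2 j + 1)) j hj1 hjl hrlej
        rw [cast_choose_eq_ite, if_pos hrland, one_mul, cast_choose_eq_ite,
          if_pos ((land_eq_left_iff _ _).mpr hrsubk), one_mul] at hs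
        have hlt : j - (k + j + 1) % 2 ^ (Nat.log 2 j + 1) < j := by omega
        have hsubl : j - (k + j + 1) % 2 ^ (Nat.log 2 j + 1) ≤ l := by omega
        have hnc' : ¬ (i₀ &&& (j - (k + j + 1) % 2 ^ (Nat.log 2 j + 1)) = i₀) := by
          intro hcontra
          apply hnc
          apply (land_eq_left_iff _ _).mpr
          intro b hb
          have h1 := (land_eq_left_iff _ _).mp hcontra b hb
          exact testBit_sub_subset j _ hrj b h1
        rw [← hs]
        exact ihj _ hlt hsubl hnc'
    · push_neg at hA
      obtain ⟨b, hbm, hbit, hjb⟩ := hA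
      have hjb' : j.testBit b = false := by
        cases h : j.testBit b
        · rfl
        · exact absurd h hjb
      have htj : 2 ^ b ≤ j :=
        le_trans (Nat.pow_le_pow_right (by norm_num) hbm) (Nat.pow_log_le_self 2 (by omega))
      have hs := star hc (2 ^ b) j hj1 hjl htj
      have hc1 : ((j.choose (2 ^ b) : ℕ) : K) = 0 := by
        rw [cast_choose_eq_ite, if_neg]
        intro hland
        have := (land_eq_left_iff _ _).mp hland b (by simp [Nat.testBit_two_pow])
        rw [hjb'] at this
        simp at this
      have hc2 : (((k + j + 1).choose (2 ^ b) : ℕ) : K) = 1 := by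
        rw [cast_choose_eq_ite, if_pos]
        apply (land_eq_left_iff _ _).mpr
        intro i hi
        rw [Nat.testBit_two_pow] at hi
        have hbi : b = i := by simpa using hi
        rw [← hbi]
        exact hbit
      rw [hc1, zero_mul, hc2, one_mul] at hs
      exact hs.symm
end

section
/- Let K be a field of characteristic 2, let k, l, i₀ be natural numbers with i₀ ≤ l such that k is a 2-complement of i₀ and k is not a 2-complement of any j with i₀ < j ≤ l, and let c : ℕ → K. Then c satisfies the system E_k up to level l if and only if for every j ≤ l one has: c_j = c_{i₀} whenever j contains the base-2 representation of i₀, and c_j = 0 otherwise. -/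
namespace SolDesc
set_option linter.unusedSectionVars false

/-- bitwise subset iff pointwise testBit implication -/
lemma sub_iff {a b : ℕ} : a &&& b = a ↔ ∀ n, a.testBit n = true → b.testBit n = true := by
  constructor
  · intro h n hn
    have := congrArg (fun x => Nat.testBit x n) h
    simp only [Nat.testBit_land, hn, Bool.true_and] at this
    exact this
  · intro h
    apply Nat.eq_of_testBit_eq
    intro n
    rw [Nat.testBit_land]
    cases hn : a.testBit n
    · simp
    · simp [h n hn]

lemma add_eq_xor_of_disj : ∀ a b : ℕ, a &&& b = 0 → a + b = a ^^^ b := by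
  intro a
  induction a using Nat.binaryRec with
  | zero => simp
  | bit bo n ih =>
    intro b h
    rw [← b.bit_bodd_div2] at h ⊢
    rw [Nat.land_bit, Nat.xor_bit] at *
    have hbit : ∀ x y, Nat.bit x y = 0 → x = false ∧ y = 0 := by
      intro x y hxy
      constructor
      · have := congrArg (fun z => Nat.testBit z 0) hxy
        simpa [Nat.testBit_bit_zero] using this
      · apply Nat.eq_of_testBit_eq
        intro i
        have := congrArg (fun z => Nat.testBit z (i+1)) hxy
        simpa [Nat.testBit_bit_succ] using this
    obtain ⟨hb1, hb2⟩ := hbit _ _ h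
    have h2 := ih b.div2 hb2
    rw [Nat.bit_val, Nat.bit_val, Nat.bit_val, ← h2]
    clear h2 ih h hb2
    cases bo <;> cases hbb : b.bodd <;> simp_all <;> ring

/-- if `b ⊆ a` bitwise then `a - b = a ^^^ b` -/
lemma sub_eq_xor {a b : ℕ} (h : b &&& a = b) : a - b = a ^^^ b := by
  have hd : (a ^^^ b) &&& b = 0 := by
    apply Nat.eq_of_testBit_eq
    intro n
    simp only [Nat.testBit_land, Nat.testBit_xor, Nat.zero_testBit]
    cases hb : b.testBit n
    · simp
    · simp [sub_iff.1 h n hb]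
  have := add_eq_xor_of_disj _ _ hd
  rw [Nat.xor_assoc, Nat.xor_self, Nat.xor_zero] at this
  omega

lemma le_of_sub {a b : ℕ} (h : b &&& a = b) : b ≤ a := by
  have hd : (a ^^^ b) &&& b = 0 := by
    apply Nat.eq_of_testBit_eq
    intro n
    simp only [Nat.testBit_land, Nat.testBit_xor, Nat.zero_testBit]
    cases hb : b.testBit n
    · simp
    · simp [sub_iff.1 h n hb]
  have := add_eq_xor_of_disj _ _ hd
  rw [Nat.xor_assoc, Nat.xor_self, Nat.xor_zero] at this
  omega

lemma two_pow_dvd_iff {t x : ℕ} : 2 ^ t ∣ x ↔ ∀ q < t, x.testBit q = false := by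
  constructor
  · intro h q hq
    obtain ⟨y, rfl⟩ := h
    rw [Nat.testBit_eq_decide_div_mod_eq]
    obtain ⟨u, hu⟩ : ∃ u, t - q = u + 1 := ⟨t - q - 1, by omega⟩
    have h1 : 2 ^ t * y / 2 ^ q = 2 ^ (t - q) * y := by
      rw [show (2:ℕ) ^ t = 2 ^ q * 2 ^ (t - q) by rw [← pow_add]; congr 1; omega,
        mul_assoc, Nat.mul_div_cancel_left _ (Nat.two_pow_pos q)]
    rw [h1, hu, pow_succ, mul_comm (2^u) 2, mul_assoc, Nat.mul_mod_right]
    simp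
  · intro h
    apply Nat.dvd_of_mod_eq_zero
    apply Nat.eq_of_testBit_eq
    intro n
    rw [Nat.testBit_mod_two_pow, Nat.zero_testBit]
    by_cases hn : n < t
    · simp [hn, h n hn]
    · simp [hn]


lemma testBit_le_log {x n : ℕ} (h : x.testBit n = true) : n ≤ Nat.log 2 x := by
  by_contra hc
  push_neg at hc
  have hx : x < 2 ^ n := lt_of_lt_of_le (Nat.lt_pow_succ_log_self (by norm_num) x)
    (Nat.pow_le_pow_right (by norm_num) hc)
  rw [Nat.testBit_eq_false_of_lt hx] at h
  exact Bool.false_ne_true h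

lemma testBit_log_self {x : ℕ} (h : x ≠ 0) : x.testBit (Nat.log 2 x) = true := by
  rw [Nat.testBit_eq_decide_div_mod_eq]
  have h1 : 2 ^ Nat.log 2 x ≤ x := Nat.pow_log_le_self 2 h
  have h2 : x < 2 ^ (Nat.log 2 x + 1) := Nat.lt_pow_succ_log_self (by norm_num) x
  have : x / 2 ^ Nat.log 2 x = 1 := by
    apply Nat.div_eq_of_lt_le <;> rw [pow_succ] at h2 <;> omega
  simp [this]

lemma two_pow_sub_iff {q x : ℕ} : 2 ^ q &&& x = 2 ^ q ↔ x.testBit q = true := by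
  constructor
  · intro h
    exact sub_iff.1 h q (by simp [Nat.testBit_two_pow])
  · intro h
    rw [sub_iff]
    intro n hn
    rw [Nat.testBit_two_pow] at hn
    simp only [decide_eq_true_eq] at hn
    rwa [← hn]

/-- Lucas' theorem mod 2, bitwise form -/
lemma choose_mod_two (n : ℕ) : ∀ r, n.choose r % 2 = if r &&& n = r then 1 else 0 := by
  induction n using Nat.strong_induction_on with
  | _ n ih =>
    intro r
    rcases Nat.eq_zero_or_pos n with rfl | hn
    · rcases Nat.eq_zero_or_pos r with rfl | hr
      · simp
      · rw [Nat.choose_eq_zero_of_lt hr]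
        simp [Nat.and_zero, (show ¬((0:ℕ) = r) by omega)]
    · have key : n.choose r ≡ (n % 2).choose (r % 2) * (n / 2).choose (r / 2) [MOD 2] :=
        Choose.choose_modEq_choose_mod_mul_choose_div_nat (p := 2)
      have hlt : n / 2 < n := Nat.div_lt_self hn (by norm_num)
      have ihh := ih (n / 2) hlt (r / 2)
      have hsplit : (r &&& n = r) ↔ ((r % 2 ≤ n % 2) ∧ (r / 2 &&& n / 2 = r / 2)) := by
        rw [sub_iff, sub_iff]
        constructor
        · intro h
          constructor
          · have := h 0
            simp only [Nat.testBit_zero, decide_eq_true_eq] at this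
            omega
          · intro m hm
            have := h (m + 1)
            simp only [Nat.testBit_succ] at this
            exact this hm
        · rintro ⟨h0, h⟩ m hm
          cases m with
          | zero =>
            simp only [Nat.testBit_zero, decide_eq_true_eq] at hm ⊢
            omega
          | succ m =>
            simp only [Nat.testBit_succ] at hm ⊢
            exact h m hm
      have hsmall : (n % 2).choose (r % 2) = if r % 2 ≤ n % 2 then 1 else 0 := by
        have h1 : n % 2 < 2 := Nat.mod_lt _ (by norm_num)
        have h2 : r % 2 < 2 := Nat.mod_lt _ (by norm_num)
        interval_cases h : n % 2 <;> interval_cases h2 : r % 2 <;> simp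
      rw [Nat.ModEq] at key
      rw [key, Nat.mul_mod, ihh, hsmall]
      by_cases hA : r % 2 ≤ n % 2 <;> by_cases hB : r / 2 &&& n / 2 = r / 2 <;>
        simp [hA, hB, hsplit]


variable {K : Type*} [Field K] [CharP K 2]

lemma cast_choose (n r : ℕ) : ((n.choose r : ℕ) : K) = if r &&& n = r then 1 else 0 := by
  have hmod : ((n.choose r : ℕ) : K) = ((n.choose r % 2 : ℕ) : K) := by
    conv_lhs => rw [← Nat.mod_add_div (n.choose r) 2]
    push_cast
    rw [(CharTwo.two_eq_zero : (2:K) = 0)]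
    ring
  rw [hmod, choose_mod_two]
  split <;> simp

/-- `Sm M s = ∑_{j ≤ s} C(M,j)·C(M+(s-j), s-j)` in `K`. -/
noncomputable def Sm (M s : ℕ) : K :=
  ∑ j ∈ Finset.range (s + 1), ((M.choose j : ℕ) : K) * (((M + (s - j)).choose (s - j) : ℕ) : K)

/-- `Tm M s = ∑_{j ≤ s} C(M+1,j)·C(M+(s-j), s-j)` in `K`. -/
noncomputable def Tm (M s : ℕ) : K :=
  ∑ j ∈ Finset.range (s + 1), (((M+1).choose j : ℕ) : K) * (((M + (s - j)).choose (s - j) : ℕ) : K)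

lemma identC (s : ℕ) : (Sm 0 s : K) = 1 := by
  rw [Sm, Finset.sum_eq_single 0]
  · simp
  · intro j hj hj0
    rw [Nat.choose_eq_zero_of_lt (by omega)]
    simp
  · intro h
    simp at h

lemma identA (M s : ℕ) : (Tm M (s+1) : K) = Sm M (s+1) + Sm M s := by
  rw [Tm, Finset.sum_range_succ' _ (s+1)]
  have hterm : ∀ j ∈ Finset.range (s+1),
      (((M+1).choose (j+1) : ℕ) : K) * (((M + (s + 1 - (j+1))).choose (s + 1 - (j+1)) : ℕ) : K)
      = ((M.choose j : ℕ) : K) * (((M + (s - j)).choose (s - j) : ℕ) : K)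
        + ((M.choose (j+1) : ℕ) : K) * (((M + (s - j)).choose (s - j) : ℕ) : K) := by
    intro j hj
    have h1 : s + 1 - (j + 1) = s - j := by omega
    rw [h1, Nat.choose_succ_succ]
    push_cast
    ring
  rw [Finset.sum_congr rfl hterm, Finset.sum_add_distrib]
  have h2 : ∑ j ∈ Finset.range (s+1),
      ((M.choose (j+1) : ℕ) : K) * (((M + (s - j)).choose (s - j) : ℕ) : K)
      + (((M+1).choose 0 : ℕ) : K) * (((M + (s + 1 - 0)).choose (s + 1 - 0) : ℕ) : K)
      = Sm M (s+1) := by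
    rw [Sm, Finset.sum_range_succ' _ (s+1)]
    congr 1
    · apply Finset.sum_congr rfl
      intro j hj
      have h1 : s + 1 - (j + 1) = s - j := by omega
      rw [h1]
    · simp
  have h3 : (∑ x ∈ Finset.range (s+1),
      ((M.choose x : ℕ) : K) * (((M + (s - x)).choose (s - x) : ℕ) : K)) = Sm M s := rfl
  rw [h3, ← h2]
  ring
lemma identB (M s : ℕ) : (Sm (M+1) (s+1) : K) = Sm (M+1) s + Tm M (s+1) := by
  have hT : (Tm M (s+1) : K) = (∑ j ∈ Finset.range (s+1),
      (((M+1).choose j : ℕ) : K) * (((M + (s+1-j)).choose (s+1-j) : ℕ) : K))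
      + (((M+1).choose (s+1) : ℕ) : K) := by
    rw [Tm, Finset.sum_range_succ]
    simp
  have hS : (Sm (M+1) (s+1) : K) = (∑ j ∈ Finset.range (s+1),
      (((M+1).choose j : ℕ) : K) * (((M+1 + (s+1-j)).choose (s+1-j) : ℕ) : K))
      + (((M+1).choose (s+1) : ℕ) : K) := by
    rw [Sm, Finset.sum_range_succ]
    simp
  have hterm : ∀ j ∈ Finset.range (s+1),
      (((M+1).choose j : ℕ) : K) * (((M+1 + (s+1-j)).choose (s+1-j) : ℕ) : K)
      = (((M+1).choose j : ℕ) : K) * (((M+1 + (s-j)).choose (s-j) : ℕ) : K)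
        + (((M+1).choose j : ℕ) : K) * (((M + (s+1-j)).choose (s+1-j) : ℕ) : K) := by
    intro j hj
    have hj' : j ≤ s := by
      have := Finset.mem_range.mp hj
      omega
    obtain ⟨t, ht⟩ : ∃ t, s - j = t := ⟨s - j, rfl⟩
    have h1 : s + 1 - j = t + 1 := by omega
    rw [ht, h1, show M + 1 + (t+1) = (M + 1 + t) + 1 from rfl,
      Nat.choose_succ_succ (M + 1 + t) t, show M + (t+1) = M + 1 + t by omega]
    push_cast
    ring
  rw [hS, Finset.sum_congr rfl hterm, Finset.sum_add_distrib, hT]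
  have h3 : (∑ x ∈ Finset.range (s+1),
      (((M+1).choose x : ℕ) : K) * (((M+1 + (s - x)).choose (s - x) : ℕ) : K)) = Sm (M+1) s := rfl
  rw [h3]
  ring

lemma identT (M s : ℕ) : (Tm M (s+1) : K) = 0 := by
  have hg : ∀ N : ℕ, (Sm N (s+1) + Sm N s : K) = 0 := by
    intro N
    induction N with
    | zero => rw [identC, identC, CharTwo.add_self_eq_zero]
    | succ N ih =>
      rw [identB, identA, ih, add_zero, CharTwo.add_self_eq_zero]
  rw [identA, hg]
lemma conv (k i s : ℕ) (hs : 1 ≤ s) (c : ℕ → K) :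
    ∑ j ∈ Finset.range (s+1), (((k+i+(s-j)).choose (s-j) : ℕ):K) * ((i.choose j : ℕ):K) * c (i-j)
    = ∑ j ∈ Finset.range (s+1), (((k+i+(s-j)).choose (s-j) : ℕ):K) *
        (((i.choose j : ℕ):K) * c (i-j) + (((k+i+1).choose j : ℕ):K) * c i) := by
  simp only [mul_add, Finset.sum_add_distrib, ← mul_assoc]
  have hz : (∑ j ∈ Finset.range (s+1),
      (((k+i+(s-j)).choose (s-j) : ℕ):K) * (((k+i+1).choose j : ℕ):K)) * c i = 0 := by
    obtain ⟨s', rfl⟩ : ∃ s', s = s' + 1 := ⟨s - 1, by omega⟩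
    have he : (∑ j ∈ Finset.range (s'+1+1),
        (((k+i+(s'+1-j)).choose (s'+1-j) : ℕ):K) * (((k+i+1).choose j : ℕ):K)) = Tm (k+i) (s'+1) := by
      rw [Tm]
      apply Finset.sum_congr rfl
      intro j hj
      rw [mul_comm]
    rw [he, identT, zero_mul]
  rw [Finset.sum_mul] at hz
  rw [hz, add_zero]

lemma satE_iff_eqSys (k l : ℕ) (c : ℕ → K) :
    SatisfiesE k l c ↔
      ∀ i d : ℕ, 1 ≤ d → d ≤ i → i ≤ l →
        ((i.choose d : ℕ) : K) * c (i - d) = (((k+i+1).choose d : ℕ) : K) * c i := by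
  constructor
  · intro h i d hd1 hdi hil
    have hR : ∀ d', d' ≤ d →
        ((i.choose d' : ℕ) : K) * c (i - d') + (((k+i+1).choose d' : ℕ) : K) * c i = 0 := by
      intro d'
      induction d' using Nat.strong_induction_on with
      | _ d' ih =>
        intro hd'd
        rcases Nat.eq_zero_or_pos d' with rfl | hd'pos
        · simp [CharTwo.add_self_eq_zero]
        · have hE := h i (by omega) hil d' hd'pos (by omega)
          rw [conv k i d' hd'pos c] at hE
          rw [Finset.sum_range_succ] at hE
          have hzero : ∀ j ∈ Finset.range d',
              (((k+i+(d'-j)).choose (d'-j) : ℕ):K) *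
                (((i.choose j : ℕ):K) * c (i-j) + (((k+i+1).choose j : ℕ):K) * c i) = 0 := by
            intro j hj
            have hjlt := Finset.mem_range.mp hj
            rw [ih j hjlt (by omega), mul_zero]
          rw [Finset.sum_eq_zero hzero, zero_add, Nat.sub_self] at hE
          simpa using hE
    have := hR d le_rfl
    rw [CharTwo.add_eq_iff_eq_add, zero_add] at this
    exact this
  · intro h i hi1 hil s hs1 hsi
    rw [conv k i s hs1 c]
    apply Finset.sum_eq_zero
    intro j hj
    have hjs : j ≤ s := by
      have := Finset.mem_range.mp hj
      omega
    have hR : ((i.choose j : ℕ) : K) * c (i - j) + (((k+i+1).choose j : ℕ) : K) * c i = 0 := by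
      rcases Nat.eq_zero_or_pos j with rfl | hjpos
      · simp [CharTwo.add_self_eq_zero]
      · rw [h i j hjpos (by omega) hil, CharTwo.add_self_eq_zero]
    rw [hR, mul_zero]


lemma ite_one_zero_mul {K : Type*} [MulZeroOneClass K] (P Q : Prop) [Decidable P] [Decidable Q]
    (a b : K) :
    ((if P then (1:K) else 0) * a = (if Q then (1:K) else 0) * b) ↔
      ((if P then a else 0) = (if Q then b else 0)) := by
  split_ifs <;> simp
lemma sub_trans {a b c : ℕ} (h1 : a &&& b = a) (h2 : b &&& c = b) : a &&& c = a := by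
  rw [sub_iff] at *
  exact fun n hn => h2 n (h1 n hn)

lemma xor_sub_self {a b : ℕ} (h : b &&& a = b) : (a ^^^ b) &&& a = a ^^^ b := by
  rw [sub_iff] at *
  intro n hn
  rw [Nat.testBit_xor] at hn
  cases hb : b.testBit n
  · simpa [hb] using hn
  · exact h n hb

lemma mod_sub_self {x t : ℕ} : (x % 2 ^ t) &&& x = x % 2 ^ t := by
  rw [sub_iff]
  intro n hn
  rw [Nat.testBit_mod_two_pow] at hn
  exact (Bool.and_eq_true_iff.mp hn).2

lemma TC_iff (k j : ℕ) : TwoComplement k j ↔ 2 ^ (Nat.log 2 j + 1) ∣ (k + j + 1) := by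
  have key : ∀ x M : ℕ, 2 ≤ M → (x % M = M - 1 ↔ M ∣ (x + 1)) := by
    intro x M hM
    have h1 : x % M < M := Nat.mod_lt _ (by omega)
    constructor
    · intro h
      apply Nat.dvd_of_mod_eq_zero
      rw [Nat.add_mod, h, Nat.mod_eq_of_lt (show 1 < M by omega)]
      have h2 : M - 1 + 1 = M := by omega
      rw [h2, Nat.mod_self]
    · intro h
      obtain ⟨t, ht⟩ := h
      have h3 : (x + 1) % M = 0 := by rw [ht, Nat.mul_mod_right]
      rw [Nat.add_mod, Nat.mod_eq_of_lt (show 1 < M by omega)] at h3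
      rcases Nat.lt_or_ge (x % M + 1) M with hlt | hge
      · rw [Nat.mod_eq_of_lt hlt] at h3
        omega
      · omega
  rcases Nat.eq_zero_or_pos j with rfl | hj
  · have htc : TwoComplement k 0 ↔ Odd k := by simp [TwoComplement]
    rw [Nat.log_zero_right, pow_one, htc, Nat.odd_iff]
    omega
  · have hM : 2 ≤ 2 ^ (Nat.log 2 j + 1) := by
      calc (2:ℕ) = 2 ^ 1 := (pow_one 2).symm
      _ ≤ 2 ^ (Nat.log 2 j + 1) := Nat.pow_le_pow_right (by norm_num) (by omega)
    simp only [TwoComplement]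
    constructor
    · rintro (⟨h0, -⟩ | ⟨-, h⟩)
      · omega
      · have h2 := (key (j+k) _ hM).mp h
        rwa [show j+k+1 = k+j+1 by omega] at h2
    · intro h
      right
      exact ⟨hj, (key (j+k) _ hM).mpr (by rwa [show j+k+1 = k+j+1 by omega])⟩

section Main
variable (k l i₀ : ℕ) (hi₀l : i₀ ≤ l)
  (h₀ : 2 ^ (Nat.log 2 i₀ + 1) ∣ (k + i₀ + 1))
  (hmax : ∀ j, i₀ < j → j ≤ l → ¬ 2 ^ (Nat.log 2 j + 1) ∣ (k + j + 1))

include h₀ hmax in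
lemma lemD : ∀ i, i ≤ l → i₀ &&& i = i₀ → ∀ q, (k + i₀ + 1).testBit q = true →
    Nat.log 2 i < q := by
  intro i hil hsub q hq
  by_contra hc
  push_neg at hc
  set L := Nat.log 2 i with hL
  have hex : ∃ p, (k + i₀ + 1).testBit p = true := ⟨q, hq⟩
  set p := Nat.find hex with hpdef
  have hps : (k + i₀ + 1).testBit p = true := Nat.find_spec hex
  have hmin : ∀ r, r < p → ¬ (k + i₀ + 1).testBit r = true := fun r hr => Nat.find_min hex hr
  have hpq : p ≤ q := Nat.find_min' hex hq
  have hm1p : Nat.log 2 i₀ + 1 ≤ p := by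
    by_contra hcp
    exact absurd hps (by simp [two_pow_dvd_iff.mp h₀ p (by omega)])
  have hi₀p : i₀ < 2 ^ p :=
    lt_of_lt_of_le (Nat.lt_pow_succ_log_self (by norm_num) i₀)
      (Nat.pow_le_pow_right (by norm_num) hm1p)
  have hpL : p ≤ L := le_trans hpq hc
  have hi0 : i ≠ 0 := by
    rintro rfl
    rw [Nat.log_zero_right] at hL
    omega
  have hbitL : i.testBit L = true := testBit_log_self hi0
  have h2L : 2 ^ L &&& i = 2 ^ L := two_pow_sub_iff.mpr hbitL
  have hi₀L : i₀.testBit L = false :=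
    Nat.testBit_eq_false_of_lt
      (lt_of_lt_of_le hi₀p (Nat.pow_le_pow_right (by norm_num) hpL))
  have hsub2 : i₀ &&& (i ^^^ 2 ^ L) = i₀ := by
    rw [sub_iff]
    intro n hn
    have hnL : n ≠ L := by
      rintro rfl
      rw [hn] at hi₀L
      exact Bool.noConfusion hi₀L
    rw [Nat.testBit_xor, sub_iff.1 hsub n hn, Nat.testBit_two_pow_of_ne (Ne.symm hnL)]
    rfl
  have hle : 2 ^ L + i₀ ≤ i := by
    have hxor := sub_eq_xor h2L
    have h1 : i₀ ≤ i - 2 ^ L := le_of_sub (by rw [hxor]; exact hsub2)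
    have h2 : 2 ^ L ≤ i := le_of_sub h2L
    omega
  have hjl : 2 ^ p + i₀ ≤ l := by
    have : (2:ℕ) ^ p ≤ 2 ^ L := Nat.pow_le_pow_right (by norm_num) hpL
    omega
  have hji₀ : i₀ < 2 ^ p + i₀ := by
    have : (0:ℕ) < 2 ^ p := Nat.two_pow_pos p
    omega
  have hlogj : Nat.log 2 (2 ^ p + i₀) = p := by
    apply Nat.log_eq_of_pow_le_of_lt_pow (by omega)
    rw [pow_succ]
    omega
  have hmod : (k + i₀ + 1) % 2 ^ (p+1) = 2 ^ p := by
    apply Nat.eq_of_testBit_eq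
    intro n
    rw [Nat.testBit_mod_two_pow]
    by_cases hn : n = p
    · subst hn
      simp [hps, Nat.testBit_two_pow]
    · rw [Nat.testBit_two_pow_of_ne (Ne.symm hn)]
      by_cases hn2 : n < p + 1
      · have hf : (k + i₀ + 1).testBit n = false :=
          Bool.not_eq_true _ ▸ (hmin n (by omega))
        simp [hn2, hf]
      · simp [hn2]
  have hdvd : 2 ^ (p+1) ∣ (k + (2 ^ p + i₀) + 1) := by
    have hdm := Nat.div_add_mod (k + i₀ + 1) (2 ^ (p+1))
    rw [hmod] at hdm
    refine ⟨(k + i₀ + 1) / 2 ^ (p+1) + 1, ?_⟩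
    rw [mul_add, mul_one]
    have hpp : (2:ℕ) ^ p + 2 ^ p = 2 ^ (p+1) := by rw [pow_succ]; ring
    omega
  exact hmax _ hji₀ hjl (by rw [hlogj]; exact hdvd)

include h₀ hmax in
lemma modL : ∀ i, i ≤ l → i₀ &&& i = i₀ → (k + i + 1) % 2 ^ (Nat.log 2 i + 1) = i - i₀ := by
  intro i hil hsub
  have hi₀i : i₀ ≤ i := le_of_sub hsub
  have hdvd : 2 ^ (Nat.log 2 i + 1) ∣ (k + i₀ + 1) := by
    rw [two_pow_dvd_iff]
    intro q hq
    cases h : (k + i₀ + 1).testBit q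
    · rfl
    · have := lemD k l i₀ h₀ hmax i hil hsub q h
      omega
  obtain ⟨w, hw⟩ := hdvd
  have heq : k + i + 1 = 2 ^ (Nat.log 2 i + 1) * w + (i - i₀) := by omega
  rw [heq, Nat.mul_add_mod]
  apply Nat.mod_eq_of_lt
  have := Nat.lt_pow_succ_log_self (show 1 < 2 by norm_num) i
  omega

include h₀ hmax in
lemma keyIff : ∀ i d, i ≤ l → i₀ &&& i = i₀ → 1 ≤ d → d ≤ i →
    (d &&& (k + i + 1) = d ↔ (d &&& i = d ∧ i₀ &&& (i - d) = i₀)) := by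
  intro i d hil hsub hd1 hdi
  have hmod := modL k l i₀ h₀ hmax i hil hsub
  have hrq : i - i₀ = i ^^^ i₀ := sub_eq_xor hsub
  have hstep1 : (d &&& (k + i + 1) = d) ↔
      (d &&& ((k + i + 1) % 2 ^ (Nat.log 2 i + 1)) = d) := by
    rw [sub_iff, sub_iff]
    constructor
    · intro h n hn
      rw [Nat.testBit_mod_two_pow]
      have hnd : n ≤ Nat.log 2 d := testBit_le_log hn
      have hdlog : Nat.log 2 d ≤ Nat.log 2 i := Nat.log_mono_right hdi
      simp [show n < Nat.log 2 i + 1 by omega, h n hn]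
    · intro h n hn
      have h2 := h n hn
      rw [Nat.testBit_mod_two_pow] at h2
      exact (Bool.and_eq_true_iff.mp h2).2
  rw [hstep1, hmod, hrq]
  constructor
  · intro h
    have hdsubi : d &&& i = d := by
      rw [sub_iff] at h ⊢
      intro n hn
      have hx := h n hn
      rw [Nat.testBit_xor] at hx
      cases hi' : i.testBit n
      · have hi₀n : i₀.testBit n = false := by
          cases h2 : i₀.testBit n
          · rfl
          · rw [sub_iff.1 hsub n h2] at hi'
            exact Bool.noConfusion hi'
        rw [hi', hi₀n] at hx
        exact Bool.noConfusion hx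
      · rfl
    refine ⟨hdsubi, ?_⟩
    rw [sub_eq_xor hdsubi, sub_iff]
    intro n hn
    rw [Nat.testBit_xor]
    have hin : i.testBit n = true := sub_iff.1 hsub n hn
    have hdn : d.testBit n = false := by
      cases hh : d.testBit n
      · rfl
      · have hx := sub_iff.1 h n hh
        rw [Nat.testBit_xor, hin, hn] at hx
        exact Bool.noConfusion hx
    rw [hin, hdn]
    rfl
  · rintro ⟨h1, h2⟩
    rw [sub_eq_xor h1] at h2
    rw [sub_iff]
    intro n hn
    rw [Nat.testBit_xor]
    have hin : i.testBit n = true := sub_iff.1 h1 n hn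
    have hi₀n : i₀.testBit n = false := by
      cases hh : i₀.testBit n
      · rfl
      · have hx := sub_iff.1 h2 n hh
        rw [Nat.testBit_xor, hin, hn] at hx
        exact Bool.noConfusion hx
    rw [hin, hi₀n]
    rfl

include h₀ in
lemma level_i0 : ∀ d, 1 ≤ d → d ≤ i₀ → ¬ (d &&& (k + i₀ + 1) = d) := by
  intro d hd1 hdi h
  have hlog : Nat.log 2 d ≤ Nat.log 2 i₀ := Nat.log_mono_right hdi
  have hbit : d.testBit (Nat.log 2 d) = true := testBit_log_self (by omega)
  have h2 := sub_iff.1 h _ hbit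
  rw [two_pow_dvd_iff.mp h₀ _ (by omega)] at h2
  exact Bool.noConfusion h2

include h₀ hmax in
lemma notTC_of_incomp : ∀ j, j ≤ l → ¬ (j &&& i₀ = j) → ¬ (i₀ &&& j = i₀) →
    ¬ 2 ^ (Nat.log 2 j + 1) ∣ (k + j + 1) := by
  intro j hjl hns1 hns2 hdvd
  rcases Nat.lt_trichotomy i₀ j with hlt | heq | hgt
  · exact hmax j hlt hjl hdvd
  · subst heq
    exact hns2 (Nat.and_self i₀)
  · have hlog : Nat.log 2 j + 1 ≤ Nat.log 2 i₀ + 1 := by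
      have := Nat.log_mono_right (b := 2) (le_of_lt hgt)
      omega
    have hdvd0 : 2 ^ (Nat.log 2 j + 1) ∣ (k + i₀ + 1) :=
      dvd_trans (pow_dvd_pow 2 hlog) h₀
    have hdiff : 2 ^ (Nat.log 2 j + 1) ∣ (i₀ - j) := by
      have hd := Nat.dvd_sub hdvd0 hdvd
      rwa [show k + i₀ + 1 - (k + j + 1) = i₀ - j by omega] at hd
    have hjlt : j < 2 ^ (Nat.log 2 j + 1) := Nat.lt_pow_succ_log_self (by norm_num) j
    have hmodj : i₀ % 2 ^ (Nat.log 2 j + 1) = j := by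
      obtain ⟨w, hw⟩ := hdiff
      have hi : i₀ = 2 ^ (Nat.log 2 j + 1) * w + j := by omega
      rw [hi, Nat.mul_add_mod, Nat.mod_eq_of_lt hjlt]
    apply hns1
    rw [← hmodj]
    exact mod_sub_self

end Main



end SolDesc
theorem satisfiesE_iff_solution_description
    {K : Type*} [Field K] [CharP K 2] (k l i₀ : ℕ) (hi₀l : i₀ ≤ l)
    (h₀ : TwoComplement k i₀) (hmax : ∀ j, i₀ < j → j ≤ l → ¬ TwoComplement k j)
    (c : ℕ → K) :
    SatisfiesE k l c ↔
      ∀ j ≤ l, (i₀ &&& j = i₀ → c j = c i₀) ∧ (¬ (i₀ &&& j = i₀) → c j = 0) := by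
  classical
  have h₀' : 2 ^ (Nat.log 2 i₀ + 1) ∣ (k + i₀ + 1) := (SolDesc.TC_iff k i₀).mp h₀
  have hmax' : ∀ j, i₀ < j → j ≤ l → ¬ 2 ^ (Nat.log 2 j + 1) ∣ (k + j + 1) :=
    fun j h1 h2 hd => hmax j h1 h2 ((SolDesc.TC_iff k j).mpr hd)
  rw [SolDesc.satE_iff_eqSys]
  have hIte : (∀ i d : ℕ, 1 ≤ d → d ≤ i → i ≤ l →
      ((i.choose d : ℕ) : K) * c (i - d) = (((k+i+1).choose d : ℕ) : K) * c i) ↔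
      (∀ i d : ℕ, 1 ≤ d → d ≤ i → i ≤ l →
      (if d &&& i = d then c (i - d) else 0) = (if d &&& (k+i+1) = d then c i else 0)) := by
    constructor <;> intro h i d h1 h2 h3 <;> have hh := h i d h1 h2 h3
    · rw [SolDesc.cast_choose, SolDesc.cast_choose, SolDesc.ite_one_zero_mul] at hh
      exact hh
    · rw [SolDesc.cast_choose, SolDesc.cast_choose, SolDesc.ite_one_zero_mul]
      exact hh
  rw [hIte]
  constructor
  · intro hq
    -- claim 1 : strict bitwise subsets of i₀ vanish
    have claim1 : ∀ n, n &&& i₀ = n → n ≠ i₀ → c n = 0 := by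
      intro n hsubn hne
      have hn_le : n ≤ i₀ := SolDesc.le_of_sub hsubn
      have hd1 : 1 ≤ i₀ - n := by omega
      have hdi : i₀ - n ≤ i₀ := by omega
      have hqq := hq i₀ (i₀ - n) hd1 hdi hi₀l
      have hdsub : (i₀ - n) &&& i₀ = i₀ - n := by
        rw [SolDesc.sub_eq_xor hsubn]
        exact SolDesc.xor_sub_self hsubn
      rw [if_pos hdsub, if_neg (SolDesc.level_i0 k i₀ h₀' (i₀ - n) hd1 hdi),
        show i₀ - (i₀ - n) = n by omega] at hqq
      exact hqq
    -- claim 3 : everything not above i₀ vanishes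
    have claim3 : ∀ j, j ≤ l → ¬ (i₀ &&& j = i₀) → c j = 0 := by
      intro j
      induction j using Nat.strong_induction_on with
      | _ j ih =>
        intro hjl hns
        by_cases hsubj : j &&& i₀ = j
        · exact claim1 j hsubj (fun he => hns (he ▸ Nat.and_self i₀))
        · have hnd := SolDesc.notTC_of_incomp k l i₀ h₀' hmax' j hjl hsubj hns
          rw [SolDesc.two_pow_dvd_iff] at hnd
          push_neg at hnd
          obtain ⟨q, hqlt, hqbit⟩ := hnd
          have hqtrue : (k + j + 1).testBit q = true := by
            cases h : (k + j + 1).testBit q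
            · exact absurd h hqbit
            · rfl
          have hj0 : j ≠ 0 := by
            rintro rfl
            exact hsubj (by simp)
          have hqle : 2 ^ q ≤ j :=
            le_trans (Nat.pow_le_pow_right (by norm_num) (by omega : q ≤ Nat.log 2 j))
              (Nat.pow_log_le_self 2 hj0)
          have hdk : 2 ^ q &&& (k + j + 1) = 2 ^ q := SolDesc.two_pow_sub_iff.mpr hqtrue
          have hqq := hq j (2 ^ q) (Nat.two_pow_pos q) hqle hjl
          rw [if_pos hdk] at hqq
          by_cases hbit : j.testBit q = true
          · have hdj : 2 ^ q &&& j = 2 ^ q := SolDesc.two_pow_sub_iff.mpr hbit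
            rw [if_pos hdj] at hqq
            have hpos : 0 < 2 ^ q := Nat.two_pow_pos q
            have hlt : j - 2 ^ q < j := by omega
            have hsubxq : ¬ (i₀ &&& (j - 2 ^ q) = i₀) := by
              intro hcon
              apply hns
              have hsubstep : (j - 2 ^ q) &&& j = j - 2 ^ q := by
                rw [SolDesc.sub_eq_xor hdj]
                exact SolDesc.xor_sub_self hdj
              exact SolDesc.sub_trans hcon hsubstep
            rw [ih (j - 2 ^ q) hlt (by omega) hsubxq] at hqq
            exact hqq.symm
          · have hdj : ¬ (2 ^ q &&& j = 2 ^ q) :=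
              fun hcon => hbit (SolDesc.two_pow_sub_iff.mp hcon)
            rw [if_neg hdj] at hqq
            exact hqq.symm
    intro j hjl
    constructor
    · intro hsup
      rcases eq_or_ne j i₀ with rfl | hne
      · rfl
      · have hij : i₀ ≤ j := SolDesc.le_of_sub hsup
        have hd1 : 1 ≤ j - i₀ := by
          rcases Nat.lt_or_ge i₀ j with h | h
          · omega
          · omega
        have hdj : (j - i₀) &&& j = j - i₀ := by
          rw [SolDesc.sub_eq_xor hsup]
          exact SolDesc.xor_sub_self hsup
        have hdk : (j - i₀) &&& (k + j + 1) = j - i₀ :=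
          (SolDesc.keyIff k l i₀ h₀' hmax' j (j - i₀) hjl hsup hd1 (by omega)).mpr
            ⟨hdj, by rw [show j - (j - i₀) = i₀ by omega]; exact Nat.and_self i₀⟩
        have hqq := hq j (j - i₀) hd1 (by omega) hjl
        rw [if_pos hdj, if_pos hdk, show j - (j - i₀) = i₀ by omega] at hqq
        exact hqq.symm
    · exact claim3 j hjl
  · intro hdesc i d hd1 hdi hil
    have hi_d_le : i - d ≤ l := by omega
    by_cases hii : i₀ &&& i = i₀
    · have hkey := SolDesc.keyIff k l i₀ h₀' hmax' i d hil hii hd1 hdi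
      have hci : c i = c i₀ := (hdesc i hil).1 hii
      by_cases hdk : d &&& (k + i + 1) = d
      · obtain ⟨hdi', hi₀id⟩ := hkey.mp hdk
        rw [if_pos hdk, if_pos hdi', hci, (hdesc (i - d) hi_d_le).1 hi₀id]
      · rw [if_neg hdk]
        by_cases hdi' : d &&& i = d
        · rw [if_pos hdi']
          exact (hdesc (i - d) hi_d_le).2 (fun hcon => hdk (hkey.mpr ⟨hdi', hcon⟩))
        · rw [if_neg hdi']
    · have hci : c i = 0 := (hdesc i hil).2 hii
      have hrhs0 : (if d &&& (k + i + 1) = d then c i else 0) = 0 := by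
        split_ifs <;> simp [hci]
      rw [hrhs0]
      by_cases hdi' : d &&& i = d
      · rw [if_pos hdi']
        apply (hdesc (i - d) hi_d_le).2
        intro hcon
        apply hii
        have hsubstep : (i - d) &&& i = i - d := by
          rw [SolDesc.sub_eq_xor hdi']
          exact SolDesc.xor_sub_self hdi'
        exact SolDesc.sub_trans hcon hsubstep
      · rw [if_neg hdi']
end

section
/- Let K be a field of characteristic 2 and k, l natural numbers. Then the set of vectors (c₀, …, c_l) ∈ K^{l+1} that satisfy the system E_k up to level l (i.e. for every 1 ≤ i ≤ l and every 1 ≤ s ≤ i, Σ_{j=0}^{s} C(k + i + (s − j), s − j) · C(i, j) · c_{i−j} = 0 in K) is a K-linear subspace of K^{l+1} of dimension at most 1; equivalently, any two such solution vectors are K-linearly dependent. -/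
open Finset

namespace SolDepAux

set_option linter.unusedSectionVars false

/-- bitwise subset relation -/
def SubB (x y : ℕ) : Prop := ∀ t, x.testBit t = true → y.testBit t = true

lemma subB_refl (x : ℕ) : SubB x x := fun _ h => h

lemma subB_trans {x y z : ℕ} (h1 : SubB x y) (h2 : SubB y z) : SubB x z :=
  fun t ht => h2 t (h1 t ht)

lemma subB_zero (y : ℕ) : SubB 0 y := by intro t ht; simp at ht

lemma subB_le {x y : ℕ} (h : SubB x y) : x ≤ y := Nat.le_of_testBit h

lemma subB_two_pow_iff {b y : ℕ} : SubB (2^b) y ↔ y.testBit b = true := by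
  constructor
  · intro h; exact h b Nat.testBit_two_pow_self
  · intro h t ht
    rcases eq_or_ne b t with rfl | hne
    · exact h
    · rw [Nat.testBit_two_pow_of_ne hne] at ht; exact absurd ht (by simp)

lemma mod_two_pow_eq_zero_of_bits {x b : ℕ} (h : ∀ t, t < b → x.testBit t = false) :
    x % 2^b = 0 := by
  by_contra hne
  obtain ⟨t, ht⟩ := Nat.exists_testBit_of_ne_zero hne
  rw [Nat.testBit_mod_two_pow] at ht
  simp only [Bool.and_eq_true, decide_eq_true_eq] at ht
  exact absurd ht.2 (by rw [h t ht.1]; simp)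

lemma mod_pow_succ (k b : ℕ) : k % 2^(b+1) = k % 2^b + 2^b * (k / 2^b % 2) := by
  rw [pow_succ, Nat.mod_mul]

lemma subB_succ_iff {r n : ℕ} :
    SubB r n ↔ ((r % 2 = 1 → n % 2 = 1) ∧ SubB (r/2) (n/2)) := by
  constructor
  · intro h
    refine ⟨fun hr => ?_, fun t ht => ?_⟩
    · have := h 0 (by simpa using hr)
      simpa using this
    · rw [Nat.testBit_div_two] at ht ⊢
      exact h (t+1) ht
  · rintro ⟨h0, h1⟩ t ht
    cases t with
    | zero => simp only [Nat.testBit_zero, decide_eq_true_eq] at ht ⊢; exact h0 ht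
    | succ t =>
      rw [Nat.testBit_succ] at ht ⊢
      exact h1 t ht

/-- parity criterion (Lucas): `choose n r` is odd iff the bits of `r` are a subset
of the bits of `n`. -/
lemma choose_mod_two (n : ℕ) : ∀ r : ℕ, n.choose r % 2 = 1 ↔ SubB r n := by
  induction n using Nat.strong_induction_on with
  | _ n ih =>
    intro r
    rcases Nat.eq_zero_or_pos n with rfl | hn
    · rcases Nat.eq_zero_or_pos r with rfl | hr
      · simpa using subB_zero 0
      · have h1 : Nat.choose 0 r = 0 := Nat.choose_eq_zero_of_lt hr
        rw [h1]
        simp only [Nat.zero_mod]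
        constructor
        · omega
        · intro h
          obtain ⟨t, ht⟩ := Nat.exists_testBit_of_ne_zero (by omega : r ≠ 0)
          have := h t ht
          simp at this
    · -- n ≥ 1
      have hmod : n.choose r % 2 = (Nat.choose (n % 2) (r % 2) * Nat.choose (n / 2) (r / 2)) % 2 :=
        Choose.choose_modEq_choose_mod_mul_choose_div_nat (p := 2)
      have hih : Nat.choose (n/2) (r/2) % 2 = 1 ↔ SubB (r/2) (n/2) :=
        ih (n/2) (Nat.div_lt_self hn one_lt_two) (r/2)
      have hsmall : Nat.choose (n % 2) (r % 2) % 2 = 1 ↔ (r % 2 = 1 → n % 2 = 1) := by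
        have h2 : n % 2 = 0 ∨ n % 2 = 1 := by omega
        have h3 : r % 2 = 0 ∨ r % 2 = 1 := by omega
        rcases h2 with h2 | h2 <;> rcases h3 with h3 | h3 <;> rw [h2, h3] <;> simp
      rw [subB_succ_iff, hmod, Nat.mul_mod, ← hsmall, ← hih]
      have b1 : Nat.choose (n % 2) (r % 2) % 2 = 0 ∨ Nat.choose (n % 2) (r % 2) % 2 = 1 := by omega
      have b2 : Nat.choose (n / 2) (r / 2) % 2 = 0 ∨ Nat.choose (n / 2) (r / 2) % 2 = 1 := by omega
      rcases b1 with hb1 | hb1 <;> rcases b2 with hb2 | hb2 <;> rw [hb1, hb2] <;> simp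


variable {K : Type*} [Field K] [CharP K 2]

lemma cast_eq_mod_two (C : ℕ) : ((C : ℕ) : K) = ((C % 2 : ℕ) : K) := by
  conv_lhs => rw [← Nat.div_add_mod C 2]
  push_cast
  rw [CharTwo.two_eq_zero]
  ring

lemma chooseK_one {n r : ℕ} (h : SubB r n) : ((n.choose r : ℕ) : K) = 1 := by
  rw [cast_eq_mod_two, (choose_mod_two n r).mpr h]
  norm_num

lemma chooseK_zero {n r : ℕ} (h : ¬ SubB r n) : ((n.choose r : ℕ) : K) = 0 := by
  rw [cast_eq_mod_two]
  have := (choose_mod_two n r)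
  have h2 : n.choose r % 2 = 0 := by
    rcases (by omega : n.choose r % 2 = 0 ∨ n.choose r % 2 = 1) with h' | h'
    · exact h'
    · exact absurd (this.mp h') h
  rw [h2]; norm_num

/-- hockey stick -/
lemma hockey (n t : ℕ) : ∑ w ∈ range (t+1), (n+w).choose w = (n+1+t).choose t := by
  induction t with
  | zero => simp
  | succ t ihc =>
    rw [Finset.sum_range_succ, ihc]
    have : (n+1+(t+1)).choose (t+1) = (n+1+t).choose t + (n+1+t).choose (t+1) := by
      have := Nat.choose_succ_succ (n+1+t) t
      rw [show n+1+(t+1) = (n+1+t)+1 by ring]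
      exact this
    rw [this]
    congr 2
    ring

/-- triangle sum exchange -/
lemma tri {M : Type*} [AddCommMonoid M] (N : ℕ) (f : ℕ → ℕ → M) :
    ∑ v ∈ range (N+1), ∑ j ∈ range (v+1), f j (v - j)
      = ∑ j ∈ range (N+1), ∑ t ∈ range (N+1-j), f j t := by
  induction N with
  | zero => simp
  | succ N ihc =>
    rw [Finset.sum_range_succ, ihc, Finset.sum_range_succ (fun j => ∑ t ∈ range (N+2-j), f j t)]
    have hlast : ∑ t ∈ range (N+2-(N+1)), f (N+1) t = f (N+1) 0 := by
      have : N+2-(N+1) = 1 := by omega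
      rw [this]
      simp
    rw [hlast]
    have hsplit : ∀ j ∈ range (N+1), ∑ t ∈ range (N+2-j), f j t
        = (∑ t ∈ range (N+1-j), f j t) + f j (N+1-j) := by
      intro j hj
      rw [mem_range] at hj
      have : N+2-j = (N+1-j)+1 := by omega
      rw [this, Finset.sum_range_succ]
    rw [Finset.sum_congr rfl hsplit, Finset.sum_add_distrib]
    have hnew : ∑ j ∈ range (N+1+1), f j (N+1-j)
        = (∑ j ∈ range (N+1), f j (N+1-j)) + f (N+1) 0 := by
      rw [Finset.sum_range_succ]
      norm_num
    rw [hnew]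
    ring_nf
    abel

/-- the key convolution identity in characteristic 2 -/
lemma GK_eq (n : ℕ) : ∀ r : ℕ,
    (∑ u ∈ range (r+1), ((n+1).choose u : K) * ((n+(r-u)).choose (r-u) : K))
      = if r = 0 then 1 else 0 := by
  induction n with
  | zero =>
    intro r
    rcases Nat.eq_zero_or_pos r with rfl | hr
    · simp
    · rw [if_neg (by omega)]
      obtain ⟨r', rfl⟩ : ∃ r', r = r' + 1 := ⟨r - 1, by omega⟩
      rw [Finset.sum_range_succ' _ (r'+1)]
      rw [Finset.sum_range_succ' _ r']
      have hzero : ∀ u ∈ range r', ((Nat.choose (0+1) (u+1+1) : ℕ) : K) *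
          ((Nat.choose (0+(r'+1-(u+1+1))) (r'+1-(u+1+1)) : ℕ) : K) = 0 := by
        intro u hu
        have : Nat.choose 1 (u+2) = 0 := Nat.choose_eq_zero_of_lt (by omega)
        simp only [zero_add] at this ⊢
        rw [this]
        simp
      rw [Finset.sum_congr rfl hzero]
      simp only [Finset.sum_const_zero, zero_add]
      norm_num
      exact CharTwo.two_eq_zero
  | succ n ihc =>
    intro r
    rcases Nat.eq_zero_or_pos r with rfl | hr
    · simp
    · rw [if_neg (by omega)]
      -- abbreviations
      set A : ℕ → K := fun u => ((n+1).choose u : K) with hA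
      set Φ : ℕ → K := fun w => ((n+w).choose w : K) with hΦ
      have hockeyK : ∀ t : ℕ, ((n+1+t).choose t : K) = ∑ w ∈ range (t+1), Φ w := by
        intro t
        rw [← hockey n t]
        push_cast
        rfl
      -- step 1+2: turn into triangle
      have step1 : (∑ u ∈ range (r+1), ((n+1+1).choose u : K) * ((n+1+(r-u)).choose (r-u) : K))
          = ∑ u ∈ range (r+1), ∑ w ∈ range (r+1-u), ((n+1+1).choose u : K) * Φ w := by
        refine Finset.sum_congr rfl (fun u hu => ?_)
        rw [mem_range] at hu
        rw [hockeyK (r-u), Finset.mul_sum]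
        have : r - u + 1 = r + 1 - u := by omega
        rw [this]
      rw [step1, ← tri r (fun u w => ((n+1+1).choose u : K) * Φ w)]
      -- step 3/4: evaluate each diagonal via Pascal
      have Hval : ∀ v ∈ range (r+1),
          (∑ u ∈ range (v+1), ((n+1+1).choose u : K) * Φ (v - u))
            = (∑ u ∈ range (v+1), A u * Φ (v-u))
              + (if v = 0 then 0 else ∑ u ∈ range ((v-1)+1), A u * Φ ((v-1)-u)) := by
        intro v _
        rw [Finset.sum_range_succ' (fun u => ((n+1+1).choose u : K) * Φ (v - u)) v]
        have pascal : ∀ u : ℕ, ((n+1+1).choose (u+1) : K) = A u + A (u+1) := by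
          intro u
          have := Nat.choose_succ_succ (n+1) u
          rw [this]
          push_cast
          rfl
        have expand : ∀ u ∈ range v, ((n+1+1).choose (u+1) : K) * Φ (v - (u+1))
            = A u * Φ (v-(u+1)) + A (u+1) * Φ (v-(u+1)) := by
          intro u _
          rw [pascal u, add_mul]
        rw [Finset.sum_congr rfl expand, Finset.sum_add_distrib]
        have reassemble : (∑ u ∈ range v, A (u+1) * Φ (v-(u+1))) + ((n+1+1).choose 0 : K) * Φ (v - 0)
            = ∑ u ∈ range (v+1), A u * Φ (v-u) := by
          rw [Finset.sum_range_succ' (fun u => A u * Φ (v - u)) v]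
          norm_num [hA]
        have firstpart : (∑ u ∈ range v, A u * Φ (v-(u+1)))
            = if v = 0 then 0 else ∑ u ∈ range ((v-1)+1), A u * Φ ((v-1)-u) := by
          rcases Nat.eq_zero_or_pos v with rfl | hv
          · simp
          · rw [if_neg (by omega)]
            have hrange : v = (v-1)+1 := by omega
            refine Finset.sum_congr (by rw [← hrange]) (fun u hu => ?_)
            rw [mem_range] at hu
            have : v - (u+1) = (v-1) - u := by omega
            rw [this]
        rw [add_assoc, reassemble, firstpart, add_comm]
      rw [Finset.sum_congr rfl Hval, Finset.sum_add_distrib]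
      -- step 5: use induction hypothesis
      have ih1 : ∀ v ∈ range (r+1), (∑ u ∈ range (v+1), A u * Φ (v-u)) = if v = 0 then (1:K) else 0 := by
        intro v _
        exact ihc v
      have ih2 : ∀ v ∈ range (r+1),
          (if v = 0 then (0:K) else ∑ u ∈ range ((v-1)+1), A u * Φ ((v-1)-u))
            = if v = 1 then (1:K) else 0 := by
        intro v _
        rcases Nat.eq_zero_or_pos v with rfl | hv
        · simp
        · rw [if_neg (by omega), ihc (v-1)]
          by_cases hv1 : v = 1
          · rw [hv1]; simp
          · rw [if_neg (by omega), if_neg hv1]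
      rw [Finset.sum_congr rfl ih1, Finset.sum_congr rfl ih2]
      rw [Finset.sum_ite_eq' (range (r+1)) 0 (fun _ => (1:K)),
          Finset.sum_ite_eq' (range (r+1)) 1 (fun _ => (1:K))]
      rw [if_pos (by rw [mem_range]; omega), if_pos (by rw [mem_range]; omega)]
      exact CharTwo.add_self_eq_zero 1


lemma GKrev (n : ℕ) (r : ℕ) :
    (∑ t ∈ range (r+1), ((n+1).choose (r-t) : K) * ((n+t).choose t : K))
      = if r = 0 then 1 else 0 := by
  rw [← GK_eq n r, ← Finset.sum_range_reflect]
  refine Finset.sum_congr rfl (fun t ht => ?_)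
  rw [mem_range] at ht
  have h1 : r + 1 - 1 - t = r - t := by omega
  have h2 : r - (r - t) = t := by omega
  rw [h1, h2]

/-- main relation: each solution satisfies two-term relations -/
lemma relR {k l : ℕ} {c : ℕ → K} (hc : SatisfiesE k l c) {s i : ℕ}
    (hs : 1 ≤ s) (hsi : s ≤ i) (hil : i ≤ l) :
    ((i.choose s : ℕ) : K) * c (i - s) = (((k+i+1).choose s : ℕ) : K) * c i := by
  set T : K := ∑ v ∈ range (s+1), (((k+i+1).choose (s-v) : ℕ) : K) *
      (∑ j ∈ range (v+1), (((k + i + (v - j)).choose (v - j) : ℕ) : K)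
        * ((i.choose j : ℕ) : K) * c (i - j)) with hT
  have eval1 : T = (((k+i+1).choose s : ℕ) : K) * c i := by
    rw [hT]
    rw [Finset.sum_eq_single_of_mem 0 (by rw [mem_range]; omega)]
    · simp
    · intro v hv hv0
      rw [mem_range] at hv
      rw [hc i (by omega) hil v (by omega) (by omega), mul_zero]
  have eval2 : T = ((i.choose s : ℕ) : K) * c (i - s) := by
    rw [hT]
    set f : ℕ → ℕ → K := fun j t => (((k+i+1).choose (s-(j+t)) : ℕ) : K) *
            ((((k + i + t).choose t : ℕ) : K) * ((i.choose j : ℕ) : K) * c (i - j)) with hf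
    have expand : ∀ v ∈ range (s+1), (((k+i+1).choose (s-v) : ℕ) : K) *
        (∑ j ∈ range (v+1), (((k + i + (v - j)).choose (v - j) : ℕ) : K)
          * ((i.choose j : ℕ) : K) * c (i - j))
        = ∑ j ∈ range (v+1), f j (v - j) := by
      intro v hv
      rw [Finset.mul_sum]
      refine Finset.sum_congr rfl (fun j hj => ?_)
      rw [mem_range] at hj
      have h1 : j + (v - j) = v := by omega
      rw [hf]
      simp only [h1]
    rw [Finset.sum_congr rfl expand, tri s f]
    have inner : ∀ j ∈ range (s+1),
        (∑ t ∈ range (s+1-j), (((k+i+1).choose (s-(j+t)) : ℕ) : K) *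
            ((((k + i + t).choose t : ℕ) : K) * ((i.choose j : ℕ) : K) * c (i - j)))
        = (if s - j = 0 then 1 else 0) * (((i.choose j : ℕ) : K) * c (i - j)) := by
      intro j hj
      rw [mem_range] at hj
      have hr : s + 1 - j = (s - j) + 1 := by omega
      rw [hr]
      rw [← GKrev (K := K) (k+i) (s-j), Finset.sum_mul]
      refine Finset.sum_congr rfl (fun t ht => ?_)
      rw [mem_range] at ht
      have h1 : s - (j + t) = (s - j) - t := by omega
      have h2 : k + i + 1 = (k + i) + 1 := by ring
      rw [h1]
      ring
    rw [Finset.sum_congr rfl inner]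
    rw [Finset.sum_eq_single_of_mem s (by rw [mem_range]; omega)]
    · rw [Nat.sub_self, if_pos rfl, one_mul]
    · intro j hj hjs
      rw [mem_range] at hj
      rw [if_neg (by omega), zero_mul]
  rw [← eval1, eval2]


/-- clearing a set bit -/
lemma clearBit {e b : ℕ} (hb : e.testBit b = true) :
    ∀ t, (e - 2^b).testBit t = (e.testBit t && decide (t ≠ b)) := by
  intro t
  have hdm : e / 2 ^ b % 2 = 1 := by
    have := Nat.testBit_eq_decide_div_mod_eq (x := e) (i := b)
    rw [hb] at this
    exact of_decide_eq_true this.symm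
  set z := e / 2^(b+1) with hz
  set w := e % 2^b with hw
  have hwlt : w < 2^b := Nat.mod_lt _ (by positivity)
  have hpow : 2^(b+1) = 2^b * 2 := by rw [pow_succ]
  have hzdef : e / 2^b = 2 * z + 1 := by
    have h1 := Nat.div_add_mod (e / 2^b) 2
    have h2 : e / 2^b / 2 = z := by rw [hz, pow_succ, Nat.div_div_eq_div_mul]
    omega
  have hE : e = 2^(b+1) * z + (2^b + w) := by
    have h1 : e = 2^b * (e / 2^b) + w := (Nat.div_add_mod e (2^b)).symm
    rw [hzdef] at h1
    have hexp : 2^b * (2*z+1) = 2^(b+1)*z + 2^b := by rw [hpow]; ring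
    omega
  have hE' : e - 2^b = 2^(b+1) * z + w := by omega
  have hbw : 2^b + w < 2^(b+1) := by omega
  have hww : w < 2^(b+1) := by omega
  rw [hE', Nat.testBit_two_pow_mul_add z hww t]
  have hEtest : e.testBit t = if t < b+1 then (2^b+w).testBit t else z.testBit (t - (b+1)) := by
    conv_lhs => rw [hE]
    exact Nat.testBit_two_pow_mul_add z hbw t
  rw [hEtest]
  have hsum : (2^b + w) = 2^b * 1 + w := by ring
  rcases lt_trichotomy t b with h | h | h
  · rw [if_pos (by omega), if_pos (by omega), hsum,
      Nat.testBit_two_pow_mul_add 1 hwlt t, if_pos h]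
    simp [Nat.ne_of_lt h]
  · subst h
    rw [if_pos (by omega), if_pos (by omega)]
    rw [Nat.testBit_lt_two_pow hwlt]
    simp
  · rw [if_neg (by omega), if_neg (by omega)]
    simp [Nat.ne_of_gt h]

/-- bits of a difference of nested bit-sets -/
lemma subB_sub_testBit {u x : ℕ} (h : SubB u x) :
    ∀ t, (x - u).testBit t = (x.testBit t && !u.testBit t) := by
  induction u using Nat.strong_induction_on generalizing x with
  | _ u ih =>
    rcases Nat.eq_zero_or_pos u with rfl | hu
    · intro t; simp
    · obtain ⟨b, hb⟩ := Nat.exists_testBit_of_ne_zero (by omega : u ≠ 0)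
      have hxb : x.testBit b = true := h b hb
      have h2bu : 2^b ≤ u := Nat.ge_two_pow_of_testBit hb
      have h2bx : 2^b ≤ x := Nat.ge_two_pow_of_testBit hxb
      have hux : u ≤ x := subB_le h
      have hu'lt : u - 2^b < u := by
        have : 0 < 2^b := by positivity
        omega
      have hu'bits := clearBit hb
      have hxbits := clearBit hxb
      have hsub' : SubB (u - 2^b) (x - 2^b) := by
        intro t ht
        rw [hu'bits t] at ht
        rw [hxbits t]
        simp only [Bool.and_eq_true, decide_eq_true_eq] at ht ⊢
        exact ⟨h t ht.1, ht.2⟩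
      have hxu : x - u = (x - 2^b) - (u - 2^b) := by omega
      intro t
      rw [hxu, ih (u - 2^b) hu'lt hsub' t, hxbits t, hu'bits t]
      rcases eq_or_ne t b with rfl | hne
      · simp [hb]
      · simp [hne]


def lev (k b : ℕ) : ℕ := 2 ^ b - 1 - k % 2 ^ b

def aIdx (k l : ℕ) : ℕ := Nat.findGreatest (fun b => lev k b ≤ l) (k + l + 1)

lemma mod_pow_succ' (k b : ℕ) : k % 2^(b+1) = k % 2^b + 2^b * (k / 2^b % 2) := by
  rw [pow_succ, Nat.mod_mul]

lemma lev_mono (k : ℕ) : Monotone (lev k) := by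
  apply monotone_nat_of_le_succ
  intro b
  unfold lev
  have h1 := mod_pow_succ' k b
  have h2 : 2^(b+1) = 2^b * 2 := by rw [pow_succ]
  have h3 : k % 2^b < 2^b := Nat.mod_lt _ (by positivity)
  have h4 : k / 2^b % 2 ≤ 1 := by omega
  have h5 : 2^b * (k / 2^b % 2) ≤ 2^b * 1 := Nat.mul_le_mul_left _ h4
  omega

lemma lev_aIdx_le (k l : ℕ) : lev k (aIdx k l) ≤ l := by
  have := Nat.findGreatest_spec (P := fun b => lev k b ≤ l) (m := 0) (n := k + l + 1)
    (by omega) (by simp [lev])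
  exact this

lemma lt_lev_of_aIdx_lt (k l : ℕ) {b : ℕ} (h : aIdx k l < b) : l < lev k b := by
  by_cases hb : b ≤ k + l + 1
  · have := Nat.findGreatest_is_greatest (P := fun b => lev k b ≤ l) h hb
    omega
  · have h2 : b < 2^b := Nat.lt_two_pow_self
    have h3 : k % 2^b ≤ k := Nat.mod_le _ _
    unfold lev
    omega

lemma testBit_aIdx_false (k l : ℕ) : k.testBit (aIdx k l) = false := by
  set a := aIdx k l with ha
  by_contra hbit
  have hbit' : k.testBit a = true := by
    rcases Bool.eq_false_or_eq_true (k.testBit a) with h | h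
    · exact h
    · exact absurd h hbit
  have hdm : k / 2^a % 2 = 1 := by
    have := Nat.testBit_eq_decide_div_mod_eq (x := k) (i := a)
    rw [hbit'] at this
    exact of_decide_eq_true this.symm
  have h1 := mod_pow_succ' k a
  rw [hdm, mul_one] at h1
  have h2 : 2^(a+1) = 2^a * 2 := by rw [pow_succ]
  have h3 : k % 2^a < 2^a := Nat.mod_lt _ (by positivity)
  have hlev : lev k (a+1) = lev k a := by unfold lev; omega
  have hle := lev_aIdx_le k l
  rw [← ha] at hle
  have hgt := lt_lev_of_aIdx_lt k l (show aIdx k l < a + 1 by omega)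
  rw [hlev] at hgt
  omega

/-- `lev k (a+1) = 2^a + lev k a` when bit `a` of `k` is zero -/
lemma lev_succ_aIdx (k l : ℕ) : lev k (aIdx k l + 1) = 2^(aIdx k l) + lev k (aIdx k l) := by
  set a := aIdx k l with ha
  have hbit := testBit_aIdx_false k l
  have hdm : k / 2^a % 2 = 0 := by
    have := Nat.testBit_eq_decide_div_mod_eq (x := k) (i := a)
    rw [hbit] at this
    have := of_decide_eq_false this.symm
    omega
  have h1 := mod_pow_succ' k a
  rw [hdm, mul_zero, add_zero] at h1
  have h2 : 2^(a+1) = 2^a * 2 := by rw [pow_succ]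
  have h3 : k % 2^a < 2^a := Nat.mod_lt _ (by positivity)
  unfold lev
  omega


/-- decomposition of `k` below bit `a+1` -/
lemma kdecomp (k l : ℕ) : k = 2^(aIdx k l + 1) * (k / 2^(aIdx k l + 1)) + k % 2^(aIdx k l) := by
  have hbit := testBit_aIdx_false k l
  have hdm : k / 2^(aIdx k l) % 2 = 0 := by
    have := Nat.testBit_eq_decide_div_mod_eq (x := k) (i := aIdx k l)
    rw [hbit] at this
    have := of_decide_eq_false this.symm
    omega
  have h1 := mod_pow_succ' k (aIdx k l)
  rw [hdm, mul_zero, add_zero] at h1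
  have h2 := Nat.div_add_mod k (2^(aIdx k l + 1))
  omega

/-- all support coordinates of a solution are equal to the hub value -/
lemma eqOnSupp {k l : ℕ} {c : ℕ → K} (hc : SatisfiesE k l c) :
    ∀ e, SubB e (k % 2 ^ aIdx k l) → lev k (aIdx k l) + e ≤ l →
      c (lev k (aIdx k l) + e) = c (lev k (aIdx k l)) := by
  intro e
  induction e using Nat.strong_induction_on with
  | _ e ih =>
    intro hSub hle
    rcases Nat.eq_zero_or_pos e with rfl | he
    · rw [add_zero]
    · set a := aIdx k l with ha
      set q := k % 2^a with hq
      clear_value q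
      clear_value a
      have hqa : q < 2^a := by rw [hq]; exact Nat.mod_lt _ (by positivity)
      have he_le : e ≤ q := subB_le hSub
      obtain ⟨b, hb⟩ := Nat.exists_testBit_of_ne_zero (by omega : e ≠ 0)
      have h2be : 2^b ≤ e := Nat.ge_two_pow_of_testBit hb
      have hba : b < a := by
        have h1 : 2^b < 2^a := by omega
        exact (Nat.pow_lt_pow_iff_right one_lt_two).mp h1
      have hbq : q.testBit b = true := hSub b hb
      have hmstar : lev k a = 2^a - 1 - q := by rw [hq]; rfl
      set i := lev k a + e with hi
      clear_value i
      -- bits of i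
      have hieq : i = 2^a - ((q - e) + 1) := by
        rw [hi, hmstar]; omega
      have hdlt : q - e < 2^a := by omega
      have ibits : ∀ t, i.testBit t = (decide (t < a) && !(q-e).testBit t) := by
        intro t
        rw [hieq]
        exact Nat.testBit_two_pow_sub_succ hdlt t
      have hdb : (q - e).testBit b = false := by
        rw [subB_sub_testBit hSub b, hb, hbq]
        simp
      have hib : i.testBit b = true := by
        rw [ibits b, hdb, decide_eq_true hba]
        simp
      -- bits of k + i + 1
      have hkie : k + i + 1 = 2^(a+1) * (k / 2^(a+1)) + (2^a + e) := by
        have := kdecomp k l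
        rw [← ha, ← hq] at this
        rw [hi, hmstar]
        omega
      have h2ae : 2^a + e < 2^(a+1) := by
        have : 2^(a+1) = 2^a * 2 := by rw [pow_succ]
        omega
      have hkib : (k + i + 1).testBit b = true := by
        rw [hkie, Nat.testBit_two_pow_mul_add _ h2ae b, if_pos (by omega)]
        have h2 : 2^a + e = 2^a * 1 + e := by ring
        rw [h2, Nat.testBit_two_pow_mul_add 1 (by omega : e < 2^a) b, if_pos hba, hb]
      -- apply the relation
      have hrel := relR hc (s := 2^b) (i := i)
        (Nat.one_le_two_pow) (le_trans h2be (by rw [hi]; exact Nat.le_add_left e _)) hle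
      rw [chooseK_one (subB_two_pow_iff.mpr hib),
          chooseK_one (subB_two_pow_iff.mpr hkib), one_mul, one_mul] at hrel
      -- i - 2^b = mstar + (e - 2^b)
      have hstep : i - 2^b = lev k a + (e - 2^b) := by rw [hi, Nat.add_sub_assoc h2be]
      have hSub' : SubB (e - 2^b) q := by
        refine subB_trans (fun t ht => ?_) hSub
        rw [clearBit hb t] at ht
        exact (Bool.and_eq_true _ _ ▸ ht).1
      have hihyp := ih (e - 2^b) (Nat.sub_lt he (by positivity)) hSub'
        (le_trans (Nat.add_le_add_left (Nat.sub_le e (2^b)) (lev k a))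
          (by rw [← hi]; exact hle))
      rw [hstep] at hrel
      rw [← hrel, hihyp]

/-- every off-support coordinate of a solution vanishes -/
lemma killOff {K : Type*} [Field K] [CharP K 2] {k l : ℕ} {c : ℕ → K} (hc : SatisfiesE k l c) :
    ∀ m, m ≤ l → (∀ e, SubB e (k % 2 ^ aIdx k l) → m ≠ lev k (aIdx k l) + e) → c m = 0 := by
  intro m
  induction m using Nat.strong_induction_on with
  | _ m ihm =>
    intro hml hnot
    have hyne : k + m + 1 ≠ 0 := by omega
    have hex : ∃ t, (k+m+1).testBit t = true := Nat.exists_testBit_of_ne_zero hyne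
    classical
    set b := Nat.find hex with hbdef
    have hb : (k+m+1).testBit b = true := Nat.find_spec hex
    have hlow : ∀ t, t < b → (k+m+1).testBit t = false := by
      intro t ht
      exact Bool.eq_false_iff.mpr (Nat.find_min hex ht)
    clear_value b
    have h2bpos : 0 < 2^b := by positivity
    have hqa : k % 2 ^ aIdx k l < 2 ^ aIdx k l := Nat.mod_lt _ (by positivity)
    by_cases hmb : m.testBit b = true
    · -- case A : bit b of m is set; c m = c (m - 2^b), handled by induction
      have h2bm : 2^b ≤ m := Nat.ge_two_pow_of_testBit hmb
      have hrel := relR hc (s := 2^b) (i := m) Nat.one_le_two_pow h2bm hml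
      rw [chooseK_one (subB_two_pow_iff.mpr hmb),
          chooseK_one (subB_two_pow_iff.mpr hb), one_mul, one_mul] at hrel
      -- show that m - 2^b is also off-support
      have hnot' : ∀ e, SubB e (k % 2 ^ aIdx k l) → m - 2^b ≠ lev k (aIdx k l) + e := by
        intro e hSub heq
        have he_le : e ≤ k % 2 ^ aIdx k l := subB_le hSub
        have hm'b : (m - 2^b).testBit b = false := by
          rw [clearBit hmb b]; simp
        rcases lt_or_ge b (aIdx k l) with hba | hba
        · -- b < a : then m itself is on the support, contradiction
          set a := aIdx k l with ha
          set q := k % 2^a with hqd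
          -- bits of m - 2^b = 2^a - ((q - e) + 1)
          have hieq : m - 2^b = 2^a - ((q - e) + 1) := by
            rw [heq]
            have : lev k a = 2^a - 1 - q := by rw [hqd]; rfl
            omega
          have hdlt : q - e < 2^a := by omega
          have hdb : (q - e).testBit b = true := by
            have := Nat.testBit_two_pow_sub_succ hdlt b
            rw [← hieq, hm'b, decide_eq_true hba] at this
            cases h' : (q-e).testBit b
            · rw [h'] at this; simp at this
            · rfl
          have hqb : q.testBit b = true := by
            have := subB_sub_testBit hSub b
            rw [hdb] at this
            cases h' : q.testBit b
            · rw [h'] at this; simp at this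
            · rfl
          have heb : e.testBit b = false := by
            have := subB_sub_testBit hSub b
            rw [hdb, hqb] at this
            cases h' : e.testBit b
            · rfl
            · rw [h'] at this; simp at this
          -- d' := (q - e) - 2^b ; e2 := q - d' = e + 2^b
          have hsubdq : SubB (q - e) q := by
            intro t ht
            rw [subB_sub_testBit hSub t] at ht
            exact (Bool.and_eq_true _ _ ▸ ht).1
          have hsubd' : SubB ((q - e) - 2^b) q := by
            refine subB_trans (fun t ht => ?_) hsubdq
            rw [clearBit hdb t] at ht
            exact (Bool.and_eq_true _ _ ▸ ht).1
          have hsube2 : SubB (q - ((q - e) - 2^b)) q := by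
            intro t ht
            rw [subB_sub_testBit hsubd' t] at ht
            exact (Bool.and_eq_true _ _ ▸ ht).1
          refine hnot (q - ((q - e) - 2^b)) hsube2 ?_
          have h2bd : 2^b ≤ q - e := Nat.ge_two_pow_of_testBit hdb
          have hdq : q - e ≤ q := Nat.sub_le _ _
          have he2 : q - ((q - e) - 2^b) = e + 2^b := by omega
          rw [he2]
          have hlev : lev k a = 2^a - 1 - q := by rw [hqd]; rfl
          omega
        · -- a ≤ b : contradiction with maximality of a
          set a := aIdx k l with ha
          set q := k % 2^a with hqd
          have hlev : lev k a = 2^a - 1 - q := by rw [hqd]; rfl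
          have hm'lt : m - 2^b < 2^a := by omega
          obtain ⟨t2, ht2⟩ : ∃ t2, 2^b = 2^a * t2 := ⟨2^(b-a), by rw [← pow_add]; congr 1; omega⟩
          -- m % 2^a = m - 2^b
          have hmmod : m % 2^a = m - 2^b := by
            have h1 : m = (m - 2^b) + 2^a * t2 := by omega
            conv_lhs => rw [h1]
            rw [Nat.add_mul_mod_self_left]
            exact Nat.mod_eq_of_lt hm'lt
          -- y % 2^a = 0
          have hymodb : (k+m+1) % 2^b = 0 := mod_two_pow_eq_zero_of_bits hlow
          have hymoda : (k+m+1) % 2^a = 0 := by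
            have := Nat.mod_mod_of_dvd (k+m+1) ⟨t2, ht2⟩
            rw [hymodb] at this
            simpa using this.symm
          -- compute (k+m+1) % 2^a = (q + (m - 2^b) + 1) % 2^a
          have hksplit : 2^a * (k / 2^a) + q = k := by rw [hqd]; exact Nat.div_add_mod k (2^a)
          have hmsplit : 2^a * (m / 2^a) + (m - 2^b) = m := by
            rw [← hmmod]; exact Nat.div_add_mod m (2^a)
          have hmuladd : 2^a * (k / 2^a) + 2^a * (m / 2^a) = 2^a * (k / 2^a + m / 2^a) := by ring
          have hform : k + m + 1 = 2^a * (k / 2^a + m / 2^a) + (q + (m - 2^b) + 1) := by omega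
          have hsummod : (q + (m - 2^b) + 1) % 2^a = 0 := by
            rw [hform, Nat.mul_add_mod] at hymoda
            exact hymoda
          -- deduce q + (m - 2^b) + 1 = 2^a
          have hsumge : 2^a ≤ q + (m - 2^b) + 1 := by
            by_contra hlt
            push_neg at hlt
            rw [Nat.mod_eq_of_lt hlt] at hsummod
            omega
          have hsumeq : q + (m - 2^b) + 1 = 2^a := by
            rw [Nat.mod_eq_sub_mod hsumge] at hsummod
            have hlt2 : q + (m - 2^b) + 1 - 2^a < 2^a := by omega
            rw [Nat.mod_eq_of_lt hlt2] at hsummod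
            omega
          -- so m - 2^b = lev k a, and m ≥ 2^a + lev k a = lev k (a+1) > l
          have hmst : m - 2^b = lev k a := by omega
          have h2ab : 2^a ≤ 2^b := Nat.pow_le_pow_right (by omega) hba
          have hgt := lt_lev_of_aIdx_lt k l (show aIdx k l < aIdx k l + 1 by omega)
          rw [lev_succ_aIdx, ← ha] at hgt
          omega
      have h0 : c (m - 2^b) = 0 := ihm (m - 2^b) (by omega) (by omega) hnot'
      rw [hrel] at h0
      exact h0
    · have hmb' : m.testBit b = false := by
        cases h' : m.testBit b
        · rfl
        · exact absurd h' hmb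
      by_cases hsize : 2^b ≤ m
      · -- case B : direct kill
        have hrel := relR hc (s := 2^b) (i := m) Nat.one_le_two_pow hsize hml
        rw [chooseK_zero (fun hS => by rw [subB_two_pow_iff] at hS; rw [hS] at hmb'; simp at hmb'),
            chooseK_one (subB_two_pow_iff.mpr hb), zero_mul, one_mul] at hrel
        exact hrel.symm
      · -- case C : m < 2^b
        push_neg at hsize
        have hymodb : (k+m+1) % 2^b = 0 := mod_two_pow_eq_zero_of_bits hlow
        have hkmod : k % 2^b < 2^b := Nat.mod_lt _ (by positivity)
        have hksplit : 2^b * (k / 2^b) + k % 2^b = k := Nat.div_add_mod k (2^b)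
        have hform : k + m + 1 = 2^b * (k / 2^b) + (k % 2^b + m + 1) := by omega
        have hsummod : (k % 2^b + m + 1) % 2^b = 0 := by
          rw [hform, Nat.mul_add_mod] at hymodb
          exact hymodb
        have hsumge : 2^b ≤ k % 2^b + m + 1 := by
          by_contra hlt
          push_neg at hlt
          rw [Nat.mod_eq_of_lt hlt] at hsummod
          omega
        have hsumeq : k % 2^b + m + 1 = 2^b := by
          rw [Nat.mod_eq_sub_mod hsumge] at hsummod
          have hlt2 : k % 2^b + m + 1 - 2^b < 2^b := by omega
          rw [Nat.mod_eq_of_lt hlt2] at hsummod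
          omega
        have hmlev : m = lev k b := by
          have : lev k b = 2^b - 1 - k % 2^b := rfl
          omega
        have hba : b ≤ aIdx k l := by
          by_contra hab
          push_neg at hab
          have := lt_lev_of_aIdx_lt k l hab
          omega
        rcases eq_or_lt_of_le hba with hbeq | hblt
        · -- b = a : m is the hub itself, contradiction
          exact absurd (show m = lev k (aIdx k l) + 0 by rw [add_zero, ← hbeq]; exact hmlev)
            (hnot 0 (subB_zero _))
        · -- b < a
          -- k has bit b clear
          have hyform : k + m + 1 = 2^b * (k / 2^b + 1) := by
            have : 2^b * (k / 2^b + 1) = 2^b * (k / 2^b) + 2^b := by ring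
            omega
          have hkdiv_even : k / 2^b % 2 = 0 := by
            have htest : (k+m+1).testBit b = true := hb
            rw [hyform] at htest
            have h0 : (0:ℕ) < 2^b := h2bpos
            have := Nat.testBit_two_pow_mul_add (k / 2^b + 1) h0 b
            rw [show 2^b * (k / 2^b + 1) + 0 = 2^b * (k / 2^b + 1) by ring] at this
            rw [this, if_neg (by omega)] at htest
            simp only [Nat.sub_self, Nat.testBit_zero] at htest
            have := of_decide_eq_true htest
            omega
          -- lev k (b+1) = m + 2^b
          have hmod_succ : k % 2^(b+1) = k % 2^b := by
            rw [mod_pow_succ', hkdiv_even, mul_zero, add_zero]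
          have hlevb1 : lev k (b+1) = m + 2^b := by
            have h1 : lev k (b+1) = 2^(b+1) - 1 - k % 2^(b+1) := rfl
            have h2 : 2^(b+1) = 2^b * 2 := by rw [pow_succ]
            omega
          have hile : m + 2^b ≤ l := by
            have h1 : lev k (b+1) ≤ lev k (aIdx k l) := lev_mono k (by omega)
            have h2 := lev_aIdx_le k l
            omega
          -- relation kills c m
          have hrel := relR hc (s := 2^b) (i := m + 2^b) Nat.one_le_two_pow
            (Nat.le_add_left _ _) hile
          rw [Nat.add_sub_cancel] at hrel
          -- left coefficient = 1
          have hib : (m + 2^b).testBit b = true := by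
            have := Nat.testBit_two_pow_mul_add 1 hsize b
            rw [show 2^b * 1 + m = m + 2^b by ring] at this
            rw [this, if_neg (by omega)]
            simp
          -- right coefficient = 0
          have hkib : (k + (m + 2^b) + 1).testBit b = false := by
            have hform2 : k + (m + 2^b) + 1 = 2^b * (k / 2^b + 2) := by
              have : 2^b * (k / 2^b + 2) = 2^b * (k / 2^b) + 2^b + 2^b := by ring
              omega
            rw [hform2]
            have := Nat.testBit_two_pow_mul_add (k / 2^b + 2) h2bpos b
            rw [show 2^b * (k / 2^b + 2) + 0 = 2^b * (k / 2^b + 2) by ring] at this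
            rw [this, if_neg (by omega)]
            simp only [Nat.sub_self, Nat.testBit_zero]
            simp only [decide_eq_false_iff_not]
            omega
          rw [chooseK_one (subB_two_pow_iff.mpr hib),
              chooseK_zero (fun hS => by rw [subB_two_pow_iff] at hS; rw [hS] at hkib; simp at hkib),
              one_mul, zero_mul] at hrel
          exact hrel


end SolDepAux

open SolDepAux in
/-- Any two solution vectors `(c₀, …, c_l)` of the system `E_k` are `K`-linearly
dependent; equivalently, the solution space has dimension at most 1. -/
theorem solutions_linearly_dependent
    {K : Type*} [Field K] [CharP K 2] (k l : ℕ) (c c' : ℕ → K)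
    (hc : SatisfiesE k l c) (hc' : SatisfiesE k l c') :
    ∃ α β : K, ¬ (α = 0 ∧ β = 0) ∧ ∀ j ≤ l, α * c j + β * c' j = 0 := by
  classical
  by_cases h0 : c (lev k (aIdx k l)) = 0
  · refine ⟨1, 0, by simp, fun j hj => ?_⟩
    by_cases hs : ∃ e, SubB e (k % 2 ^ aIdx k l) ∧ j = lev k (aIdx k l) + e
    · obtain ⟨e, he, rfl⟩ := hs
      rw [eqOnSupp hc e he hj, h0]
      ring
    · rw [killOff hc j hj (fun e he heq => hs ⟨e, he, heq⟩)]
      ring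
  · refine ⟨c' (lev k (aIdx k l)), c (lev k (aIdx k l)), fun h => h0 h.2, fun j hj => ?_⟩
    by_cases hs : ∃ e, SubB e (k % 2 ^ aIdx k l) ∧ j = lev k (aIdx k l) + e
    · obtain ⟨e, he, rfl⟩ := hs
      rw [eqOnSupp hc e he hj, eqOnSupp hc' e he hj,
        mul_comm (c' (lev k (aIdx k l))) (c (lev k (aIdx k l)))]
      exact CharTwo.add_self_eq_zero _
    · rw [killOff hc j hj (fun e he heq => hs ⟨e, he, heq⟩),
          killOff hc' j hj (fun e he heq => hs ⟨e, he, heq⟩)]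
      ring
end

section
/- Let k, l, i₀ be natural numbers with i₀ ≤ l such that k is a 2-complement of i₀ and k is not a 2-complement of any j with i₀ < j ≤ l. Let Λ be a nonempty finite set of natural numbers such that i₀ has no binary digit at any position belonging to Λ, set y = i₀ + Σ_{λ∈Λ} 2^λ, and assume y ≤ l. Then for every x with 1 ≤ x ≤ y, one has C(k + y + x, x) ≡ 1 (mod 2) if and only if x has no binary digit at any position belonging to (Λ \ {min Λ}) ∪ {0, 1, …, min Λ − 1} (i.e. every binary digit of x occurs at a position ≥ min Λ that does not lie in Λ \ {min Λ}). -/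
private lemma disj_iff (a b : ℕ) :
    (∀ i, a.testBit i = false ∨ b.testBit i = false) ↔
      ((a % 2 = 0 ∨ b % 2 = 0) ∧ ∀ i, (a / 2).testBit i = false ∨ (b / 2).testBit i = false) := by
  constructor
  · intro H
    refine ⟨?_, fun i => ?_⟩
    · have := H 0
      simp only [Nat.testBit_zero, decide_eq_false_iff_not] at this
      omega
    · have := H (i + 1)
      simpa only [Nat.testBit_succ] using this
  · rintro ⟨h0, H⟩ i
    cases i with
    | zero =>
      simp only [Nat.testBit_zero, decide_eq_false_iff_not]
      omega
    | succ i =>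
      simpa only [Nat.testBit_succ] using H i

private lemma testBit_add_disj : ∀ (n a b : ℕ), a + b = n →
    (∀ i, a.testBit i = false ∨ b.testBit i = false) →
    ∀ j, (a + b).testBit j = (a.testBit j || b.testBit j) := by
  intro n
  induction n using Nat.strong_induction_on with
  | _ n ih =>
    intro a b hn h j
    rcases Nat.eq_zero_or_pos n with rfl | hp
    · have ha : a = 0 := by omega
      have hb : b = 0 := by omega
      subst ha; subst hb; simp
    · have h0 : a % 2 = 0 ∨ b % 2 = 0 := ((disj_iff a b).mp h).1
      cases j with
      | zero =>
        rcases h0 with h0 | h0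
        · have e : (a + b) % 2 = b % 2 := by omega
          simp [Nat.testBit_zero, e, h0]
        · have e : (a + b) % 2 = a % 2 := by omega
          simp [Nat.testBit_zero, e, h0]
      | succ j =>
        have hd : (a + b) / 2 = a / 2 + b / 2 := by omega
        simp only [Nat.testBit_succ, hd]
        exact ih (a / 2 + b / 2) (by omega) (a / 2) (b / 2) rfl
          ((disj_iff a b).mp h).2 j

private lemma testBit_add (a b : ℕ)
    (h : ∀ i, a.testBit i = false ∨ b.testBit i = false) (j : ℕ) :
    (a + b).testBit j = (a.testBit j || b.testBit j) :=
  testBit_add_disj (a + b) a b rfl h j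

private lemma choose_odd_iff : ∀ (n a b : ℕ), a + b = n →
    ((a + b).choose b % 2 = 1 ↔ ∀ i, a.testBit i = false ∨ b.testBit i = false) := by
  intro n
  induction n using Nat.strong_induction_on with
  | _ n ih =>
    intro a b hn
    rcases Nat.eq_zero_or_pos n with rfl | hp
    · have ha : a = 0 := by omega
      have hb : b = 0 := by omega
      subst ha; subst hb; simp
    haveI : Fact (Nat.Prime 2) := ⟨Nat.prime_two⟩
    have key : (a + b).choose b % 2 =
        ((a + b) % 2).choose (b % 2) * ((a + b) / 2).choose (b / 2) % 2 :=
      Choose.choose_modEq_choose_mod_mul_choose_div_nat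
    rcases Nat.mod_two_eq_zero_or_one a with h1 | h1 <;>
      rcases Nat.mod_two_eq_zero_or_one b with h2 | h2
    -- both even
    · have e1 : (a + b) % 2 = 0 := by omega
      have ed : (a + b) / 2 = a / 2 + b / 2 := by omega
      rw [key, e1, h2, ed]
      simp only [Nat.choose_self, one_mul]
      rw [ih (a / 2 + b / 2) (by omega) (a / 2) (b / 2) rfl, disj_iff a b]
      constructor
      · intro H; exact ⟨Or.inl h1, H⟩
      · exact fun H => H.2
    -- a even b odd
    · have e1 : (a + b) % 2 = 1 := by omega
      have ed : (a + b) / 2 = a / 2 + b / 2 := by omega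
      rw [key, e1, h2, ed]
      simp only [Nat.choose_self, one_mul]
      rw [ih (a / 2 + b / 2) (by omega) (a / 2) (b / 2) rfl, disj_iff a b]
      constructor
      · intro H; exact ⟨Or.inl h1, H⟩
      · exact fun H => H.2
    -- a odd b even
    · have e1 : (a + b) % 2 = 1 := by omega
      have ed : (a + b) / 2 = a / 2 + b / 2 := by omega
      rw [key, e1, h2, ed]
      simp only [Nat.choose_zero_right, one_mul]
      rw [ih (a / 2 + b / 2) (by omega) (a / 2) (b / 2) rfl, disj_iff a b]
      constructor
      · intro H; exact ⟨Or.inr h2, H⟩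
      · exact fun H => H.2
    -- both odd
    · have e1 : (a + b) % 2 = 0 := by omega
      rw [key, e1, h2, show Nat.choose 0 1 = 0 from rfl, zero_mul]
      constructor
      · intro h
        simp at h
      · intro H
        have := H 0
        simp [Nat.testBit_zero, h1, h2] at this

private lemma testBit_finsetSum (F : Finset ℕ) :
    ∀ j, (∑ a ∈ F, 2 ^ a).testBit j = decide (j ∈ F) := by
  classical
  induction F using Finset.induction with
  | empty => simp
  | insert a F ha ih =>
    intro j
    rw [Finset.sum_insert ha]
    have hdisj : ∀ i, (2 ^ a).testBit i = false ∨ (∑ b ∈ F, 2 ^ b).testBit i = false := by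
      intro i
      by_cases hi : i = a
      · subst hi; right; rw [ih]; simp [ha]
      · left; rw [Nat.testBit_two_pow]; simp; omega
    rw [testBit_add _ _ hdisj j, ih j, Nat.testBit_two_pow]
    by_cases h1 : j = a
    · simp [h1]
    · have h1' : ¬ a = j := fun h => h1 h.symm
      simp [h1, h1', Finset.mem_insert]

theorem choose_odd_iff_bits_formula
    (k l i₀ : ℕ) (hi₀l : i₀ ≤ l)
    (h₀ : TwoComplement k i₀) (hmax : ∀ j, i₀ < j → j ≤ l → ¬ TwoComplement k j)
    (Λ : Finset ℕ) (hΛ : Λ.Nonempty) (hdis : ∀ j ∈ Λ, i₀.testBit j = false)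
    (hy : i₀ + ∑ a ∈ Λ, 2 ^ a ≤ l) :
    ∀ x, 1 ≤ x → x ≤ i₀ + ∑ a ∈ Λ, 2 ^ a →
      (Nat.choose (k + (i₀ + ∑ a ∈ Λ, 2 ^ a) + x) x % 2 = 1 ↔
        ∀ j, x.testBit j = true → Λ.min' hΛ ≤ j ∧ j ∉ Λ.erase (Λ.min' hΛ)) := by
  intro x hx1 hx2
  set S := ∑ a ∈ Λ, 2 ^ a with hSdef
  set y := i₀ + S with hydef
  set μ := Λ.min' hΛ with hμdef
  set L := Nat.log 2 y with hLdef
  set m := Nat.log 2 i₀ with hmdef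
  have hSbit : ∀ j, S.testBit j = decide (j ∈ Λ) := testBit_finsetSum Λ
  have hμΛ : μ ∈ Λ := Λ.min'_mem hΛ
  have hS1 : 2 ^ μ ≤ S :=
    Finset.single_le_sum (f := fun a => 2 ^ a) (fun i _ => Nat.zero_le _) hμΛ
  have hSpos : 1 ≤ S := le_trans Nat.one_le_two_pow hS1
  have hypos : 1 ≤ y := by omega
  have hyL : y < 2 ^ (L + 1) := Nat.lt_pow_succ_log_self one_lt_two y
  have hLy : 2 ^ L ≤ y := Nat.pow_log_le_self 2 (by omega)
  have hi₀m : i₀ < 2 ^ (m + 1) := Nat.lt_pow_succ_log_self one_lt_two i₀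
  have hmL : m ≤ L := Nat.log_mono_right (by omega)
  have hdisj : ∀ i, i₀.testBit i = false ∨ S.testBit i = false := by
    intro i
    by_cases hi : i ∈ Λ
    · exact Or.inl (hdis i hi)
    · right; rw [hSbit]; simp [hi]
  have hybit : ∀ j, y.testBit j = (i₀.testBit j || S.testBit j) :=
    fun j => testBit_add i₀ S hdisj j
  have hytop : y.testBit L = true := by
    have h3 : 2 ^ (L + 1) = 2 * 2 ^ L := by ring
    have h2 : y / 2 ^ L = 1 :=
      Nat.div_eq_of_lt_le (by omega) (by omega)
    rw [Nat.testBit_eq_decide_div_mod_eq]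
    simp [h2]
  have hLS : m < L → 2 ^ L ≤ S := by
    intro hmL'
    have hiL : i₀.testBit L = false :=
      Nat.testBit_lt_two_pow (lt_of_lt_of_le hi₀m (Nat.pow_le_pow_right (by norm_num) hmL'))
    have h4 := hytop
    rw [hybit L, hiL, hSbit] at h4
    simp only [Bool.false_or, decide_eq_true_eq] at h4
    exact Finset.single_le_sum (f := fun a => 2 ^ a) (fun i _ => Nat.zero_le _) h4
  -- the key structure of k from maximality
  have claimA : ∀ d : ℕ, m + d ≤ L → (i₀ + k) % 2 ^ (m + d + 1) = 2 ^ (m + d + 1) - 1 := by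
    intro d
    induction d with
    | zero =>
      intro _
      rcases h₀ with ⟨h1, h2⟩ | ⟨h1, h2⟩
      · have hm0 : m = 0 := by rw [hmdef, h1, Nat.log_zero_right]
        rw [hm0, h1]
        simpa [Nat.odd_iff] using h2
      · rw [← hmdef] at h2
        simpa using h2
    | succ d ihd =>
      intro hdL
      have hq := ihd (by omega)
      have hee : m + (d + 1) + 1 = (m + d) + 2 := by omega
      rw [hee]
      set q := m + d with hqdef
      by_contra hcon
      have hpow : 2 ^ (q + 2) = 2 * 2 ^ (q + 1) := by ring
      have hpos1 : 0 < 2 ^ (q + 1) := Nat.pow_pos (by norm_num)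
      have hdiv : (i₀ + k) % 2 ^ (q + 2) % 2 ^ (q + 1) = (i₀ + k) % 2 ^ (q + 1) :=
        Nat.mod_mod_of_dvd _ (pow_dvd_pow 2 (by omega))
      have hrlt : (i₀ + k) % 2 ^ (q + 2) < 2 ^ (q + 2) := Nat.mod_lt _ (by positivity)
      have hr : (i₀ + k) % 2 ^ (q + 2) = 2 ^ (q + 1) - 1 := by
        set r := (i₀ + k) % 2 ^ (q + 2) with hrdef
        have hrA : r % 2 ^ (q + 1) = 2 ^ (q + 1) - 1 := by
          rw [hrdef, hdiv]; exact hq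
        rcases lt_or_ge r (2 ^ (q + 1)) with h | h
        · rwa [Nat.mod_eq_of_lt h] at hrA
        · exfalso
          have h8 : r - 2 ^ (q + 1) < 2 ^ (q + 1) := by omega
          have h9 : r % 2 ^ (q + 1) = (r - 2 ^ (q + 1)) % 2 ^ (q + 1) := by
            conv_lhs => rw [show r = 2 ^ (q + 1) + (r - 2 ^ (q + 1)) by omega]
            rw [Nat.add_mod_left]
          rw [h9, Nat.mod_eq_of_lt h8] at hrA
          omega
      have hij : i₀ < 2 ^ (q + 1) :=
        lt_of_lt_of_le hi₀m (Nat.pow_le_pow_right (by norm_num) (by omega))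
      have hlog : Nat.log 2 (2 ^ (q + 1) + i₀) = q + 1 :=
        Nat.log_eq_of_pow_le_of_lt_pow (Nat.le_add_right _ _) (by omega)
      have hTC : TwoComplement k (2 ^ (q + 1) + i₀) := by
        right
        refine ⟨by omega, ?_⟩
        rw [hlog]
        have e1 : 2 ^ (q + 1) + i₀ + k = 2 ^ (q + 1) + (i₀ + k) := by omega
        rw [e1, Nat.add_mod, Nat.mod_eq_of_lt (show (2:ℕ) ^ (q+1) < 2 ^ (q+2) by omega), hr,
          Nat.mod_eq_of_lt (by omega)]
        omega
      have hqL : q + 1 ≤ L := by omega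
      have h2S : 2 ^ (q + 1) ≤ S :=
        le_trans (Nat.pow_le_pow_right (by norm_num) hqL) (hLS (by omega))
      exact hmax _ (by omega) (by omega) hTC
  have hkIL : (i₀ + k) % 2 ^ (L + 1) = 2 ^ (L + 1) - 1 := by
    have h7 := claimA (L - m) (by omega)
    have e : m + (L - m) = L := by omega
    rwa [e] at h7
  have hky : (k + y) % 2 ^ (L + 1) = S - 1 := by
    have e0 : k + y = (i₀ + k) + S := by omega
    rw [e0, Nat.add_mod, hkIL, Nat.mod_eq_of_lt (show S < 2 ^ (L + 1) by omega)]
    have e1 : 2 ^ (L + 1) - 1 + S = 2 ^ (L + 1) + (S - 1) := by omega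
    rw [e1, Nat.add_mod_left]
    exact Nat.mod_eq_of_lt (by omega)
  have hTbit : ∀ j, (∑ a ∈ Λ.erase μ, 2 ^ a).testBit j = decide (j ∈ Λ.erase μ) :=
    testBit_finsetSum _
  have hTsum : S = 2 ^ μ + ∑ a ∈ Λ.erase μ, 2 ^ a := by
    rw [hSdef]; exact (Finset.add_sum_erase Λ _ hμΛ).symm
  have hS1bit : ∀ j, (S - 1).testBit j = (decide (j < μ) || decide (j ∈ Λ.erase μ)) := by
    intro j
    have hd2 : ∀ i, (2 ^ μ - 1).testBit i = false ∨
        (∑ a ∈ Λ.erase μ, 2 ^ a).testBit i = false := by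
      intro i
      by_cases hi : i ∈ Λ.erase μ
      · left
        have h8 : μ ≤ i := Λ.min'_le i (Finset.mem_of_mem_erase hi)
        have h9 : i ≠ μ := Finset.ne_of_mem_erase hi
        rw [Nat.testBit_two_pow_sub_one]
        simp; omega
      · right; rw [hTbit]; simp [hi]
    have e : S - 1 = (2 ^ μ - 1) + ∑ a ∈ Λ.erase μ, 2 ^ a := by
      have h9 : (1:ℕ) ≤ 2 ^ μ := Nat.one_le_two_pow
      omega
    rw [e, testBit_add _ _ hd2, Nat.testBit_two_pow_sub_one, hTbit]
  have hkybit : ∀ j, j ≤ L →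
      (k + y).testBit j = (decide (j < μ) || decide (j ∈ Λ.erase μ)) := by
    intro j hj
    have h10 := Nat.testBit_mod_two_pow (k + y) (L + 1) j
    rw [hky, hS1bit] at h10
    have h11 : decide (j < L + 1) = true := by simp; omega
    rw [h11, Bool.true_and] at h10
    exact h10.symm
  have hxL : ∀ j, x.testBit j = true → j ≤ L := by
    intro j hj
    by_contra hc
    have h1 := Nat.ge_two_pow_of_testBit hj
    have h2 : 2 ^ (L + 1) ≤ 2 ^ j := Nat.pow_le_pow_right (by norm_num) (by omega)
    omega
  rw [choose_odd_iff (k + y + x) (k + y) x rfl]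
  constructor
  · intro H j hj
    rcases H j with h | h
    · rw [hkybit j (hxL j hj)] at h
      simp only [Bool.or_eq_false_iff, decide_eq_false_iff_not] at h
      exact ⟨by omega, h.2⟩
    · rw [hj] at h; exact absurd h (by simp)
  · intro H j
    by_cases hxj : x.testBit j = true
    · left
      rw [hkybit j (hxL j hxj)]
      obtain ⟨h1, h2⟩ := H j hxj
      simp [h2]; omega
    · right; simpa using hxj
end

section
/- Let γ be an odd natural number and m ≥ 1 a natural number, and let l₂(m) denote the least natural number i such that 2^i > m. Then 2^{l₂(m)} divides γ + 1 if and only if γ is not a 2-complement of any j with 1 ≤ j ≤ m (equivalently, since γ is odd and hence a 2-complement of 0, if and only if 0 is the greatest j in {0, 1, …, m} such that γ is a 2-complement of j). -/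
private lemma mod_eq_sub_one_of_dvd_succ {k n : ℕ} (hk : 1 ≤ k) (h : k ∣ n + 1) :
    n % k = k - 1 := by
  obtain ⟨q, hq⟩ := h
  rcases q with _ | p
  · omega
  · have h2 : n = k * p + (k - 1) := by
      rw [Nat.mul_succ] at hq; omega
    rw [h2, Nat.mul_add_mod]
    exact Nat.mod_eq_of_lt (by omega)

private lemma dvd_succ_of_mod_eq {k n : ℕ} (hk : 1 ≤ k) (h : n % k = k - 1) :
    k ∣ n + 1 := by
  refine ⟨n / k + 1, ?_⟩
  have := Nat.div_add_mod n k
  rw [Nat.mul_add, Nat.mul_one]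
  omega

theorem two_pow_dvd_iff_not_twoComplement
    (γ m : ℕ) (hγ : Odd γ) (hm : 1 ≤ m) (L : ℕ) (hL : IsLeast {i : ℕ | m < 2 ^ i} L) :
    2 ^ L ∣ γ + 1 ↔ ∀ j, 1 ≤ j → j ≤ m → ¬ TwoComplement γ j := by
  obtain ⟨hLmem, hLlb⟩ := hL
  simp only [Set.mem_setOf_eq] at hLmem
  have hL1 : 1 ≤ L := by
    by_contra h
    have : L = 0 := by omega
    rw [this] at hLmem
    simp at hLmem
    omega
  have hLm : 2 ^ (L - 1) ≤ m := by
    by_contra h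
    have := hLlb (show m < 2 ^ (L - 1) from by omega)
    omega
  constructor
  · intro hdvd j hj1 hjm htc
    rcases htc with ⟨h0, _⟩ | ⟨_, hmod⟩
    · omega
    set t := Nat.log 2 j + 1 with ht
    have hjlt : j < 2 ^ t := Nat.lt_pow_succ_log_self (by norm_num) j
    have htL : t ≤ L := by
      have h1 : 2 ^ (t - 1) ≤ j := by
        simpa [ht] using Nat.pow_log_le_self 2 (by omega : j ≠ 0)
      have h2 : 2 ^ (t - 1) < 2 ^ L := lt_of_le_of_lt (h1.trans hjm) hLmem
      have := (Nat.pow_lt_pow_iff_right (by norm_num : 1 < 2)).mp h2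
      omega
    have hdvdsum : 2 ^ t ∣ j + γ + 1 :=
      dvd_succ_of_mod_eq Nat.one_le_two_pow hmod
    have hdvdg : 2 ^ t ∣ γ + 1 := dvd_trans (pow_dvd_pow 2 htL) hdvd
    have hdvdj : 2 ^ t ∣ j := by
      have h3 := Nat.dvd_sub hdvdsum hdvdg
      have : j + γ + 1 - (γ + 1) = j := by omega
      rwa [show j + γ + 1 = j + (γ + 1) by omega, Nat.add_sub_cancel] at h3
    have := Nat.le_of_dvd (by omega) hdvdj
    omega
  · intro h
    by_contra hnd
    set v := padicValNat 2 (γ + 1) with hv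
    have hvd : 2 ^ v ∣ γ + 1 := pow_padicValNat_dvd
    have hnd2 : ¬ 2 ^ (v + 1) ∣ γ + 1 :=
      pow_succ_padicValNat_not_dvd (by omega)
    have h2dvd : (2 : ℕ) ∣ γ + 1 := by
      rcases hγ with ⟨c, hc⟩; exact ⟨c + 1, by omega⟩
    have hv1 : 1 ≤ v := by
      by_contra hc
      have hv0 : v = 0 := by omega
      apply hnd2
      rw [hv0]
      simpa using h2dvd
    have hvL : v < L := by
      by_contra hc
      exact hnd (dvd_trans (pow_dvd_pow 2 (by omega : L ≤ v)) hvd)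
    obtain ⟨u, hu⟩ := hvd
    have hu_odd : ¬ 2 ∣ u := by
      intro ⟨w, hw⟩
      apply hnd2
      exact ⟨w, by rw [hu, hw]; ring⟩
    refine h (2 ^ v) Nat.one_le_two_pow ?_ ?_
    · calc 2 ^ v ≤ 2 ^ (L - 1) := Nat.pow_le_pow_right (by norm_num) (by omega)
        _ ≤ m := hLm
    · right
      refine ⟨Nat.one_le_two_pow, ?_⟩
      rw [Nat.log_pow (by norm_num : 1 < 2)]
      apply mod_eq_sub_one_of_dvd_succ Nat.one_le_two_pow
      have : 2 ^ v + γ + 1 = 2 ^ v * (u + 1) := by rw [Nat.mul_add, Nat.mul_one]; omega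
      rw [this, pow_succ]
      exact Nat.mul_dvd_mul_left _ (by omega)
end
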